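/- arXiv:2407.03233 — 7 statements merged into one kernel-verified Lean document; each statement's English description precedes it below -/
import Mathlib

section
/- For every K ∈ 𝒦_st, the cost f is Fréchet differentiable at K, and its gradient with respect to the Frobenius inner product satisfies ∇f(K) = E(K) X(K), where E(K) = 2(RK − Bᵀ P(K)) and X(K) is the unique solution of the Lyapunov equation (A − BK) X + X (A − BK)ᵀ + X₀ = 0. Equivalently, the Fréchet derivative of f at K applied to a direction M ∈ ℝ^{m×n} equals ⟨2(RK − Bᵀ P(K)) X(K), M⟩. -/
open Matrix

attribute [local instance] Matrix.frobeniusNormedAddCommGroup Matrix.frobeniusNormedSpace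

/-- A real square matrix is Hurwitz if every eigenvalue (over `ℂ`) has negative real part. -/
def IsHurwitz {n : ℕ} (M : Matrix (Fin n) (Fin n) ℝ) : Prop :=
  ∀ z ∈ spectrum ℂ (M.map Complex.ofReal), z.re < 0

/-- Frobenius inner product `⟨A, B⟩ = Tr(Aᵀ B)`. -/
noncomputable def frobInner {m n : ℕ} (A B : Matrix (Fin m) (Fin n) ℝ) : ℝ :=
  Matrix.trace (Aᵀ * B)

/-- The gradient of `f` at `K` with respect to the Frobenius inner product, whose `(i,j)`
entry is the Fréchet derivative of `f` at `K` in the direction of the `(i,j)` basis matrix. -/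
noncomputable def gradMatrix {m n : ℕ} (f : Matrix (Fin m) (Fin n) ℝ → ℝ)
    (K : Matrix (Fin m) (Fin n) ℝ) : Matrix (Fin m) (Fin n) ℝ :=
  Matrix.of fun i j => fderiv ℝ f K (Matrix.single i j 1)

open Filter Topology

set_option maxHeartbeats 1000000



lemma spec_iff_det {n : ℕ} (M : Matrix (Fin n) (Fin n) ℂ) (z : ℂ) :
    z ∈ spectrum ℂ M ↔ (algebraMap ℂ (Matrix (Fin n) (Fin n) ℂ) z - M).det = 0 := by
  rw [spectrum.mem_iff, Matrix.isUnit_iff_isUnit_det, isUnit_iff_ne_zero, not_ne_iff]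

lemma abs_le_of_det_eq_zero {n : ℕ} (M : Matrix (Fin n) (Fin n) ℂ) (z : ℂ)
    (h : (algebraMap ℂ (Matrix (Fin n) (Fin n) ℂ) z - M).det = 0) :
    ‖z‖ ≤ ∑ i, ∑ j, ‖M i j‖ := by
  obtain ⟨v, hv, hMv⟩ := (Matrix.exists_mulVec_eq_zero_iff).mpr h
  have hMvz : M *ᵥ v = z • v := by
    have := hMv
    rw [Matrix.sub_mulVec, sub_eq_zero] at this
    rw [← this, Algebra.algebraMap_eq_smul_one, Matrix.smul_mulVec, Matrix.one_mulVec]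
  obtain ⟨i₀, hi₀⟩ : ∃ i, v i ≠ 0 := by
    by_contra hc; push_neg at hc; exact hv (funext hc)
  obtain ⟨i, -, hi⟩ := Finset.exists_max_image Finset.univ (fun i => ‖v i‖) ⟨i₀, Finset.mem_univ _⟩
  have hvi : 0 < ‖v i‖ := lt_of_lt_of_le (norm_pos_iff.mpr hi₀) (hi i₀ (Finset.mem_univ _))
  have key : ‖z‖ * ‖v i‖ ≤ (∑ k, ∑ j, ‖M k j‖) * ‖v i‖ := by
    have h1 : z * v i = ∑ j, M i j * v j := by
      have := congrFun hMvz i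
      simpa [Matrix.mulVec, dotProduct, Pi.smul_apply] using this.symm
    calc ‖z‖ * ‖v i‖ = ‖z * v i‖ := (norm_mul _ _).symm
      _ = ‖∑ j, M i j * v j‖ := by rw [h1]
      _ ≤ ∑ j, ‖M i j * v j‖ := norm_sum_le _ _
      _ ≤ ∑ j, ‖M i j‖ * ‖v i‖ := by
          refine Finset.sum_le_sum fun j _ => ?_
          rw [norm_mul]
          exact mul_le_mul_of_nonneg_left (hi j (Finset.mem_univ _)) (norm_nonneg _)
      _ = (∑ j, ‖M i j‖) * ‖v i‖ := by rw [Finset.sum_mul]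
      _ ≤ (∑ k, ∑ j, ‖M k j‖) * ‖v i‖ := by
          refine mul_le_mul_of_nonneg_right ?_ (le_of_lt hvi)
          exact Finset.single_le_sum (f := fun k => ∑ j, ‖M k j‖)
            (fun k _ => Finset.sum_nonneg fun j _ => norm_nonneg _) (Finset.mem_univ i)
  exact le_of_mul_le_mul_right key hvi

lemma isOpen_hurwitz {n : ℕ} : IsOpen {M : Matrix (Fin n) (Fin n) ℝ | IsHurwitz M} := by
  rw [← isClosed_compl_iff]
  haveI : SequentialSpace (Matrix (Fin n) (Fin n) ℝ) :=
    inferInstanceAs (SequentialSpace (Fin n → Fin n → ℝ))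
  apply IsSeqClosed.isClosed
  intro u M hu hlim
  simp only [Set.mem_compl_iff, Set.mem_setOf_eq, IsHurwitz, not_forall, not_lt] at hu ⊢
  choose z hz hzre using hu
  -- continuity of entrywise sum of norms
  have hcont : Continuous fun M : Matrix (Fin n) (Fin n) ℝ => ∑ i, ∑ j, ‖(M.map Complex.ofReal) i j‖ := by
    refine continuous_finset_sum _ fun i _ => continuous_finset_sum _ fun j _ => ?_
    exact (Complex.continuous_ofReal.comp ((continuous_apply j).comp (continuous_apply i))).norm
  have hbdd : ∃ C, ∀ k, ‖z k‖ ≤ C := by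
    have htend : Tendsto (fun k => ∑ i, ∑ j, ‖((u k).map Complex.ofReal) i j‖) atTop
        (𝓝 (∑ i, ∑ j, ‖(M.map Complex.ofReal) i j‖)) := (hcont.tendsto M).comp hlim
    obtain ⟨C, hC⟩ := htend.bddAbove_range
    refine ⟨C, fun k => ?_⟩
    refine le_trans (abs_le_of_det_eq_zero _ _ ((spec_iff_det _ _).mp (hz k))) ?_
    exact hC (Set.mem_range_self k)
  obtain ⟨C, hC⟩ := hbdd
  have hzbd : ∀ k, z k ∈ Metric.closedBall (0:ℂ) C := by
    intro k; simpa [Metric.mem_closedBall, dist_zero_right] using hC k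
  obtain ⟨w, -, φ, hφ, hwt⟩ := tendsto_subseq_of_bounded Metric.isBounded_closedBall hzbd
  refine ⟨w, ?_, ?_⟩
  · rw [spec_iff_det]
    have hg : Continuous fun p : ℂ × Matrix (Fin n) (Fin n) ℝ =>
        (algebraMap ℂ (Matrix (Fin n) (Fin n) ℂ) p.1 - (p.2.map Complex.ofReal)).det := by
      apply Continuous.matrix_det
      apply Continuous.sub
      · simp only [Algebra.algebraMap_eq_smul_one]
        exact continuous_fst.smul continuous_const
      · exact Continuous.matrix_map (continuous_snd)
          Complex.continuous_ofReal
    have hpair : Tendsto (fun k => (z (φ k), u (φ k))) atTop (𝓝 (w, M)) :=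
      hwt.prodMk_nhds (hlim.comp hφ.tendsto_atTop)
    have h1 := (hg.tendsto (w, M)).comp hpair
    have hzero : ∀ k, (algebraMap ℂ (Matrix (Fin n) (Fin n) ℂ) (z (φ k)) -
        ((u (φ k)).map Complex.ofReal)).det = 0 := fun k => (spec_iff_det _ _).mp (hz (φ k))
    have h2 : Tendsto (fun k => (algebraMap ℂ (Matrix (Fin n) (Fin n) ℂ) (z (φ k)) -
        ((u (φ k)).map Complex.ofReal)).det) atTop (𝓝 0) := by
      simp only [hzero]; exact tendsto_const_nhds
    exact tendsto_nhds_unique h1 h2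
  · exact le_of_tendsto_of_tendsto' tendsto_const_nhds (Complex.continuous_re.tendsto w |>.comp hwt)
      (fun k => hzre (φ k))


namespace LQRAux
variable {n : ℕ}

noncomputable def lyapL (L : Matrix (Fin n) (Fin n) ℝ) :
    Matrix (Fin n) (Fin n) ℝ →ₗ[ℝ] Matrix (Fin n) (Fin n) ℝ where
  toFun P' := Lᵀ * P' + P' * L
  map_add' x y := by simp [mul_add, add_mul]; abel
  map_smul' r x := by simp [mul_smul_comm, smul_mul_assoc, smul_add]

noncomputable def lyapR (L : Matrix (Fin n) (Fin n) ℝ) :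
    Matrix (Fin n) (Fin n) ℝ →ₗ[ℝ] Matrix (Fin n) (Fin n) ℝ where
  toFun X := L * X + X * Lᵀ
  map_add' x y := by simp [mul_add, add_mul]; abel
  map_smul' r x := by simp [mul_smul_comm, smul_mul_assoc, smul_add]

lemma trace_adj (L Y X : Matrix (Fin n) (Fin n) ℝ) :
    Matrix.trace ((lyapL L Y)ᵀ * X) = Matrix.trace (Yᵀ * lyapR L X) := by
  simp only [lyapL, lyapR, LinearMap.coe_mk, AddHom.coe_mk, transpose_add, transpose_mul,
    transpose_transpose, add_mul, mul_add, Matrix.trace_add]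
  congr 1
  · rw [← mul_assoc]
  · rw [mul_assoc]
    rw [Matrix.trace_mul_comm Lᵀ (Yᵀ * X), mul_assoc]

lemma eq_zero_of_trace_transpose_mul_self (X : Matrix (Fin n) (Fin n) ℝ)
    (h : Matrix.trace (Xᵀ * X) = 0) : X = 0 := by
  have h' : ∑ i : Fin n, ∑ k : Fin n, X k i * X k i = 0 := by
    simpa [Matrix.trace, Matrix.diag, Matrix.mul_apply, Matrix.transpose_apply] using h
  ext i j
  have hnn : ∀ p ∈ (Finset.univ : Finset (Fin n)), 0 ≤ ∑ k : Fin n, X k p * X k p :=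
    fun p _ => Finset.sum_nonneg fun k _ => mul_self_nonneg _
  have h2 := (Finset.sum_eq_zero_iff_of_nonneg hnn).mp h' j (Finset.mem_univ _)
  have h3 := (Finset.sum_eq_zero_iff_of_nonneg
    (fun k _ => mul_self_nonneg (X k j))).mp h2 i (Finset.mem_univ _)
  simpa [mul_self_eq_zero] using h3

lemma lyapL_inj (L : Matrix (Fin n) (Fin n) ℝ)
    (h0 : ∀ P' : Matrix (Fin n) (Fin n) ℝ, Lᵀ * P' + P' * L = 0 → P' = 0) :
    Function.Injective (lyapL L) := by
  intro x y hxy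
  have : lyapL L (x - y) = 0 := by rw [map_sub, hxy, sub_self]
  have := h0 (x - y) (by simpa [lyapL] using this)
  exact sub_eq_zero.mp this

lemma lyapR_inj (L : Matrix (Fin n) (Fin n) ℝ)
    (h0 : ∀ P' : Matrix (Fin n) (Fin n) ℝ, Lᵀ * P' + P' * L = 0 → P' = 0) :
    Function.Injective (lyapR L) := by
  have hsurj := (LinearMap.injective_iff_surjective).mp (lyapL_inj L h0)
  intro x y hxy
  have hz : lyapR L (x - y) = 0 := by rw [map_sub, hxy, sub_self]
  have : x - y = 0 := by
    obtain ⟨Y, hY⟩ := hsurj (x - y)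
    apply eq_zero_of_trace_transpose_mul_self
    calc Matrix.trace ((x - y)ᵀ * (x - y)) = Matrix.trace ((lyapL L Y)ᵀ * (x - y)) := by rw [hY]
      _ = Matrix.trace (Yᵀ * lyapR L (x - y)) := trace_adj L Y (x - y)
      _ = 0 := by rw [hz, Matrix.mul_zero, Matrix.trace_zero]
  exact sub_eq_zero.mp this

lemma existsUnique_lyapX (L X₀ : Matrix (Fin n) (Fin n) ℝ)
    (h0 : ∀ P' : Matrix (Fin n) (Fin n) ℝ, Lᵀ * P' + P' * L = 0 → P' = 0) :
    ∃! X : Matrix (Fin n) (Fin n) ℝ, L * X + X * Lᵀ + X₀ = 0 := by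
  obtain ⟨X, hX⟩ := (LinearMap.injective_iff_surjective).mp (lyapR_inj L h0) (-X₀)
  refine ⟨X, ?_, fun Y hY => ?_⟩
  · show L * X + X * Lᵀ + X₀ = 0
    have : L * X + X * Lᵀ = -X₀ := hX
    rw [this]; simp
  · apply lyapR_inj L h0
    have h1 : lyapR L Y = -X₀ := by
      have h3 : L * Y + Y * Lᵀ + X₀ = 0 := hY
      have h2 : L * Y + Y * Lᵀ = -X₀ := eq_neg_of_add_eq_zero_left h3
      simpa [lyapR] using h2
    rw [h1, hX]

lemma lyapX_symm (L X₀ X : Matrix (Fin n) (Fin n) ℝ) (hX₀ : X₀ᵀ = X₀)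
    (h0 : ∀ P' : Matrix (Fin n) (Fin n) ℝ, Lᵀ * P' + P' * L = 0 → P' = 0)
    (hX : L * X + X * Lᵀ + X₀ = 0) : Xᵀ = X := by
  obtain ⟨Z, hZ, hZuniq⟩ := existsUnique_lyapX L X₀ h0
  have h1 : L * Xᵀ + Xᵀ * Lᵀ + X₀ = 0 := by
    have := congrArg Matrix.transpose hX
    simpa [Matrix.transpose_add, Matrix.transpose_mul, hX₀, add_comm, add_left_comm] using this
  rw [hZuniq _ h1, hZuniq _ hX]

end LQRAux



section FrobTop

attribute [-instance] instTopologicalSpaceMatrix Matrix.instUniformSpace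

namespace LQRAux2

/-- matrix multiplication as a continuous bilinear map (frobenius norms, finite dim) -/
noncomputable def mulCLM {a b c : ℕ} : Matrix (Fin a) (Fin b) ℝ →L[ℝ]
    (Matrix (Fin b) (Fin c) ℝ →L[ℝ] Matrix (Fin a) (Fin c) ℝ) :=
  LinearMap.toContinuousLinearMap <|
    (LinearMap.toContinuousLinearMap :
        (Matrix (Fin b) (Fin c) ℝ →ₗ[ℝ] Matrix (Fin a) (Fin c) ℝ) ≃ₗ[ℝ]
        (Matrix (Fin b) (Fin c) ℝ →L[ℝ] Matrix (Fin a) (Fin c) ℝ)).toLinearMap.comp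
      (LinearMap.mk₂ ℝ (fun X Y => X * Y) (fun X X' Y => Matrix.add_mul X X' Y)
        (fun r X Y => Matrix.smul_mul r X Y) (fun X Y Y' => Matrix.mul_add X Y Y')
        (fun r X Y => Matrix.mul_smul X r Y))

@[simp] lemma mulCLM_apply {a b c : ℕ} (X : Matrix (Fin a) (Fin b) ℝ)
    (Y : Matrix (Fin b) (Fin c) ℝ) : mulCLM X Y = X * Y := rfl

noncomputable def transposeCLM {a b : ℕ} :
    Matrix (Fin a) (Fin b) ℝ →L[ℝ] Matrix (Fin b) (Fin a) ℝ :=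
  LinearMap.toContinuousLinearMap
    { toFun := fun X => Xᵀ
      map_add' := fun X Y => Matrix.transpose_add X Y
      map_smul' := fun r X => Matrix.transpose_smul r X }

@[simp] lemma transposeCLM_apply {a b : ℕ} (X : Matrix (Fin a) (Fin b) ℝ) :
    transposeCLM X = Xᵀ := rfl

/-- the Lyapunov operator `L ↦ (P' ↦ Lᵀ P' + P' L)` as continuous bilinear map -/
noncomputable def lyapCLM {n : ℕ} : Matrix (Fin n) (Fin n) ℝ →L[ℝ]
    (Matrix (Fin n) (Fin n) ℝ →L[ℝ] Matrix (Fin n) (Fin n) ℝ) :=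
  LinearMap.toContinuousLinearMap <|
    (LinearMap.toContinuousLinearMap :
        (Matrix (Fin n) (Fin n) ℝ →ₗ[ℝ] Matrix (Fin n) (Fin n) ℝ) ≃ₗ[ℝ]
        (Matrix (Fin n) (Fin n) ℝ →L[ℝ] Matrix (Fin n) (Fin n) ℝ)).toLinearMap.comp
      (LinearMap.mk₂ ℝ (fun L P' => Lᵀ * P' + P' * L)
        (fun L L' P' => by simp [transpose_add, add_mul, mul_add]; abel)
        (fun r L P' => by simp [transpose_smul, smul_mul_assoc, mul_smul_comm, smul_add])
        (fun L P' P'' => by simp [mul_add, add_mul]; abel)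
        (fun r L P' => by simp [smul_mul_assoc, mul_smul_comm, smul_add]))

@[simp] lemma lyapCLM_apply {n : ℕ} (L P' : Matrix (Fin n) (Fin n) ℝ) :
    lyapCLM L P' = Lᵀ * P' + P' * L := rfl

noncomputable def traceCLM {a : ℕ} : Matrix (Fin a) (Fin a) ℝ →L[ℝ] ℝ :=
  LinearMap.toContinuousLinearMap (Matrix.traceLinearMap (Fin a) ℝ ℝ)

@[simp] lemma traceCLM_apply {a : ℕ} (X : Matrix (Fin a) (Fin a) ℝ) :
    traceCLM X = Matrix.trace X := rfl

lemma isUnit_of_bijective {E : Type*} [NormedAddCommGroup E] [NormedSpace ℝ E]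
    [FiniteDimensional ℝ E] (T : E →L[ℝ] E) (h : Function.Bijective T) :
    IsUnit T := by
  let el : E ≃ₗ[ℝ] E := LinearEquiv.ofBijective (T : E →ₗ[ℝ] E) h
  let e : E ≃L[ℝ] E := el.toContinuousLinearEquiv
  have he : ∀ y, T y = e y := fun y => rfl
  refine ⟨⟨T, (e.symm : E →L[ℝ] E), ?_, ?_⟩, rfl⟩
  · ext x
    show T (e.symm x) = x
    rw [he]; exact e.apply_symm_apply x
  · ext x
    show e.symm (T x) = x
    rw [he]; exact e.symm_apply_apply x

end LQRAux2


lemma trace_grad_eq {n m : ℕ} (L PK X₀ X Pm' : Matrix (Fin n) (Fin n) ℝ)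
    (Bm : Matrix (Fin n) (Fin m) ℝ) (Rm : Matrix (Fin m) (Fin m) ℝ)
    (K M : Matrix (Fin m) (Fin n) ℝ)
    (hkey : Lᵀ * Pm' + Pm' * L
      = (Bm * M)ᵀ * PK + PK * (Bm * M) - (Kᵀ * Rm * M + Mᵀ * Rm * K))
    (hX : L * X + X * Lᵀ + X₀ = 0)
    (hPsym : PKᵀ = PK) (hXsym : Xᵀ = X) (hRsym : Rmᵀ = Rm) :
    Matrix.trace (Pm' * X₀)
      = Matrix.trace ((((2:ℝ) • (Rm * K - Bmᵀ * PK)) * X)ᵀ * M) := by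
  have hX0 : X₀ = -(L * X + X * Lᵀ) := eq_neg_of_add_eq_zero_right hX
  have h1 : Matrix.trace (Pm' * X₀) = -(Matrix.trace ((Lᵀ * Pm' + Pm' * L) * X)) := by
    rw [hX0]
    have a1 : Matrix.trace (Pm' * (L * X)) = Matrix.trace (Pm' * L * X) := by
      rw [Matrix.mul_assoc]
    have a2 : Matrix.trace (Pm' * (X * Lᵀ)) = Matrix.trace (Lᵀ * Pm' * X) := by
      rw [← Matrix.mul_assoc, Matrix.trace_mul_comm, ← Matrix.mul_assoc]
    simp only [Matrix.mul_neg, Matrix.trace_neg, Matrix.mul_add, Matrix.trace_add,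
      Matrix.add_mul]
    rw [a1, a2]; ring
  have h2 : Matrix.trace ((Lᵀ * Pm' + Pm' * L) * X)
      = Matrix.trace ((Bm * M)ᵀ * PK * X) + Matrix.trace (PK * (Bm * M) * X)
        - (Matrix.trace (Kᵀ * Rm * M * X) + Matrix.trace (Mᵀ * Rm * K * X)) := by
    rw [hkey]
    simp only [Matrix.sub_mul, Matrix.add_mul, Matrix.trace_sub, Matrix.trace_add]
  have e1 : Matrix.trace ((Bm * M)ᵀ * PK * X) = Matrix.trace (X * (PK * Bm) * M) := by
    rw [← Matrix.trace_transpose ((Bm * M)ᵀ * PK * X)]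
    simp only [Matrix.transpose_mul, Matrix.transpose_transpose, hPsym, hXsym]
    rw [← Matrix.mul_assoc PK Bm M, ← Matrix.mul_assoc X (PK * Bm) M]
  have e2 : Matrix.trace (PK * (Bm * M) * X) = Matrix.trace (X * (PK * Bm) * M) := by
    rw [Matrix.trace_mul_comm, ← Matrix.mul_assoc PK Bm M, ← Matrix.mul_assoc X (PK * Bm) M]
  have e3 : Matrix.trace (Kᵀ * Rm * M * X) = Matrix.trace (X * (Kᵀ * Rm) * M) := by
    rw [Matrix.trace_mul_comm, ← Matrix.mul_assoc X (Kᵀ * Rm) M]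
  have e4 : Matrix.trace (Mᵀ * Rm * K * X) = Matrix.trace (X * (Kᵀ * Rm) * M) := by
    rw [← Matrix.trace_transpose (Mᵀ * Rm * K * X)]
    simp only [Matrix.transpose_mul, Matrix.transpose_transpose, hXsym, hRsym]
    rw [← Matrix.mul_assoc Kᵀ Rm M, ← Matrix.mul_assoc X (Kᵀ * Rm) M]
  have h3 : Matrix.trace ((((2:ℝ) • (Rm * K - Bmᵀ * PK)) * X)ᵀ * M)
      = 2 * (Matrix.trace (X * (Kᵀ * Rm) * M) - Matrix.trace (X * (PK * Bm) * M)) := by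
    have hmat : (((2:ℝ) • (Rm * K - Bmᵀ * PK)) * X)ᵀ * M
        = (2:ℝ) • (X * (Kᵀ * Rm - PK * Bm) * M) := by
      simp only [Matrix.smul_mul, Matrix.transpose_smul, Matrix.transpose_mul,
        Matrix.transpose_sub, Matrix.transpose_transpose, hPsym, hXsym, hRsym]
    rw [hmat, Matrix.trace_smul, Matrix.mul_sub, Matrix.sub_mul, Matrix.trace_sub]
    simp only [smul_eq_mul]
  rw [h1, h2, e1, e2, e3, e4, h3]
  ring

lemma frob_std {m n : ℕ} (G : Matrix (Fin m) (Fin n) ℝ) (i : Fin m) (j : Fin n) :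
    Matrix.trace (Gᵀ * Matrix.single i j (1:ℝ)) = G i j := by
  simp [Matrix.trace, Matrix.diag, Matrix.mul_apply, Matrix.single, Matrix.transpose_apply,
    Matrix.of_apply, mul_ite, mul_one, mul_zero, ite_and, Finset.sum_ite_eq, Finset.sum_ite_eq']

open LQRAux LQRAux2

theorem stmt1_aux (n m : ℕ) (hn : 0 < n) (hm : 0 < m)
    (A : Matrix (Fin n) (Fin n) ℝ) (B : Matrix (Fin n) (Fin m) ℝ)
    (Q : Matrix (Fin n) (Fin n) ℝ) (R : Matrix (Fin m) (Fin m) ℝ)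
    (X₀ : Matrix (Fin n) (Fin n) ℝ)
    (hQ : Q.PosDef) (hR : R.PosDef) (hX₀ : X₀.PosDef)
    -- `P K` is the unique solution of the Lyapunov equation for every stabilizing `K`
    (P : Matrix (Fin m) (Fin n) ℝ → Matrix (Fin n) (Fin n) ℝ)
    (hP : ∀ K, IsHurwitz (A - B * K) →
      (A - B * K)ᵀ * P K + P K * (A - B * K) + Kᵀ * R * K + Q = 0)
    (hPuniq : ∀ K, IsHurwitz (A - B * K) → ∀ P' : Matrix (Fin n) (Fin n) ℝ,
      (A - B * K)ᵀ * P' + P' * (A - B * K) + Kᵀ * R * K + Q = 0 → P' = P K)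
    (f : Matrix (Fin m) (Fin n) ℝ → ℝ) (hf : f = fun K => Matrix.trace (P K * X₀))
    (K : Matrix (Fin m) (Fin n) ℝ) (hK : IsHurwitz (A - B * K)) :
    DifferentiableAt ℝ f K ∧
    -- the Lyapunov equation `(A-BK) X + X (A-BK)ᵀ + X₀ = 0` has a unique solution `X(K)`
    (∃! X : Matrix (Fin n) (Fin n) ℝ,
      (A - B * K) * X + X * (A - B * K)ᵀ + X₀ = 0) ∧
    -- and for that solution, `∇f(K) = E(K) X(K)` with `E(K) = 2(RK - Bᵀ P(K))`, equivalently
    -- the Fréchet derivative of `f` at `K` in direction `M` is `⟨E(K) X(K), M⟩`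
    ∀ X : Matrix (Fin n) (Fin n) ℝ,
      (A - B * K) * X + X * (A - B * K)ᵀ + X₀ = 0 →
      gradMatrix f K = ((2 : ℝ) • (R * K - Bᵀ * P K)) * X ∧
      ∀ M : Matrix (Fin m) (Fin n) ℝ,
        fderiv ℝ f K M = frobInner (((2 : ℝ) • (R * K - Bᵀ * P K)) * X) M := by
  -- uniqueness of homogeneous solutions at any stabilizing K'
  have h0 : ∀ K' : Matrix (Fin m) (Fin n) ℝ, IsHurwitz (A - B * K') →
      ∀ P' : Matrix (Fin n) (Fin n) ℝ,
      (A - B * K')ᵀ * P' + P' * (A - B * K') = 0 → P' = 0 := by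
    intro K' hK' P' hP'
    have hsol : (A - B * K')ᵀ * (P K' + P') + (P K' + P') * (A - B * K')
        + K'ᵀ * R * K' + Q = 0 := by
      have e1 := hP K' hK'
      calc (A - B * K')ᵀ * (P K' + P') + (P K' + P') * (A - B * K') + K'ᵀ * R * K' + Q
          = ((A - B * K')ᵀ * P K' + P K' * (A - B * K') + K'ᵀ * R * K' + Q)
            + ((A - B * K')ᵀ * P' + P' * (A - B * K')) := by
            simp only [Matrix.mul_add, Matrix.add_mul]; abel
        _ = 0 := by rw [e1, hP']; simp
    have h2 := hPuniq K' hK' _ hsol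
    have h3 : P K' + P' = P K' + 0 := by rw [h2]; simp
    exact add_left_cancel h3
  -- bijectivity / invertibility of the Lyapunov operator at stabilizing K'
  have hbij : ∀ K' : Matrix (Fin m) (Fin n) ℝ, IsHurwitz (A - B * K') →
      Function.Bijective (lyapCLM (A - B * K') :
        Matrix (Fin n) (Fin n) ℝ →L[ℝ] Matrix (Fin n) (Fin n) ℝ) := by
    intro K' hK'
    have hi : Function.Injective (LQRAux.lyapL (A - B * K')) :=
      LQRAux.lyapL_inj _ (fun P' h => h0 K' hK' P' h)
    have hs := (LinearMap.injective_iff_surjective).mp hi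
    have hco : ⇑(lyapCLM (A - B * K') :
        Matrix (Fin n) (Fin n) ℝ →L[ℝ] Matrix (Fin n) (Fin n) ℝ)
        = ⇑(LQRAux.lyapL (A - B * K')) := funext fun P' => rfl
    rw [hco]
    exact ⟨hi, hs⟩
  have hunit : ∀ K' : Matrix (Fin m) (Fin n) ℝ, IsHurwitz (A - B * K') →
      IsUnit (lyapCLM (A - B * K') :
        Matrix (Fin n) (Fin n) ℝ →L[ℝ] Matrix (Fin n) (Fin n) ℝ) :=
    fun K' hK' => isUnit_of_bijective _ (hbij K' hK')
  -- the open set of stabilizing gains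
  have hUopen : IsOpen {K' : Matrix (Fin m) (Fin n) ℝ | IsHurwitz (A - B * K')} := by
    have hcont : Continuous fun K' : Matrix (Fin m) (Fin n) ℝ => A - B * K' :=
      continuous_const.sub (mulCLM B).continuous
    exact (show IsOpen {M : Matrix (Fin n) (Fin n) ℝ | IsHurwitz M} from isOpen_hurwitz).preimage hcont
  have hKU : K ∈ {K' : Matrix (Fin m) (Fin n) ℝ | IsHurwitz (A - B * K')} := hK
  -- explicit local formula for P
  set g : Matrix (Fin m) (Fin n) ℝ → Matrix (Fin n) (Fin n) ℝ :=
    fun K' => Ring.inverse (lyapCLM (A - B * K') :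
      Matrix (Fin n) (Fin n) ℝ →L[ℝ] Matrix (Fin n) (Fin n) ℝ) (-(K'ᵀ * R * K' + Q)) with hg
  have hPg : ∀ K' ∈ {K' : Matrix (Fin m) (Fin n) ℝ | IsHurwitz (A - B * K')},
      P K' = g K' := by
    intro K' hK'
    have happ : (lyapCLM (A - B * K') :
        Matrix (Fin n) (Fin n) ℝ →L[ℝ] Matrix (Fin n) (Fin n) ℝ) (P K')
        = -(K'ᵀ * R * K' + Q) := by
      have h1 := hP K' hK'
      rw [add_assoc] at h1
      simpa only [lyapCLM_apply] using eq_neg_of_add_eq_zero_left h1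
    calc P K' = (1 : Matrix (Fin n) (Fin n) ℝ →L[ℝ] Matrix (Fin n) (Fin n) ℝ) (P K') := rfl
      _ = (Ring.inverse (lyapCLM (A - B * K')) * lyapCLM (A - B * K')) (P K') := by
          rw [Ring.inverse_mul_cancel _ (hunit K' hK')]
      _ = Ring.inverse (lyapCLM (A - B * K')) ((lyapCLM (A - B * K')) (P K')) := rfl
      _ = g K' := by rw [happ]
  have hPev : P =ᶠ[𝓝 K] g := by
    filter_upwards [hUopen.mem_nhds hKU] with K' hK' using hPg K' hK'
  -- differentiability of g, hence of P
  have hAffd : DifferentiableAt ℝ (fun K' : Matrix (Fin m) (Fin n) ℝ => A - B * K') K :=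
    (differentiableAt_const A).sub ((mulCLM B).differentiable.differentiableAt)
  have hΦd : DifferentiableAt ℝ (fun K' : Matrix (Fin m) (Fin n) ℝ =>
      (lyapCLM (A - B * K') :
        Matrix (Fin n) (Fin n) ℝ →L[ℝ] Matrix (Fin n) (Fin n) ℝ)) K :=
    ((lyapCLM).differentiable.differentiableAt).comp K hAffd
  have hinvd : DifferentiableAt ℝ (fun K' : Matrix (Fin m) (Fin n) ℝ =>
      Ring.inverse (lyapCLM (A - B * K') :
        Matrix (Fin n) (Fin n) ℝ →L[ℝ] Matrix (Fin n) (Fin n) ℝ)) K :=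
    DifferentiableAt.comp (g := Ring.inverse) K (differentiableAt_inverse (hunit K hK)) hΦd
  set c : Matrix (Fin m) (Fin n) ℝ →L[ℝ]
      (Matrix (Fin m) (Fin n) ℝ →L[ℝ] Matrix (Fin n) (Fin n) ℝ) :=
    mulCLM.comp ((mulCLM.flip R).comp transposeCLM) with hc
  have hcapp : ∀ K' M' : Matrix (Fin m) (Fin n) ℝ, c K' M' = K'ᵀ * R * M' := by
    intro K' M'; simp [hc]
  have hquadd : DifferentiableAt ℝ
      (fun K' : Matrix (Fin m) (Fin n) ℝ => K'ᵀ * R * K') K := by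
    have := (c.differentiable.differentiableAt (x := K)).clm_apply differentiableAt_fun_id
    have hfe : (fun K' : Matrix (Fin m) (Fin n) ℝ => (c K') K')
        = fun K' : Matrix (Fin m) (Fin n) ℝ => K'ᵀ * R * K' := funext fun K' => hcapp K' K'
    rwa [hfe] at this
  have hNQd : DifferentiableAt ℝ
      (fun K' : Matrix (Fin m) (Fin n) ℝ => -(K'ᵀ * R * K' + Q)) K :=
    (hquadd.add (differentiableAt_const Q)).neg
  have hgd : DifferentiableAt ℝ g K := hinvd.clm_apply hNQd
  have hPd : DifferentiableAt ℝ P K := (hPev.differentiableAt_iff).mpr hgd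
  set ftr : Matrix (Fin n) (Fin n) ℝ →L[ℝ] ℝ := traceCLM.comp (mulCLM.flip X₀) with hftr
  have hfP : f = fun K' => ftr (P K') := by
    rw [hf]; rfl
  have hfd : DifferentiableAt ℝ f K := by
    rw [hfP]; exact (ftr.differentiable.differentiableAt).comp K hPd
  refine ⟨hfd, LQRAux.existsUnique_lyapX _ _ (h0 K hK), ?_⟩
  intro X hXeq
  -- symmetry facts
  have hsymm : ∀ {a : ℕ} (W : Matrix (Fin a) (Fin a) ℝ), W.IsHermitian → Wᵀ = W := by
    intro a W hW
    ext i j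
    have := congrFun (congrFun hW i) j
    simpa [Matrix.conjTranspose_apply] using this
  have hQsym : Qᵀ = Q := hsymm Q hQ.1
  have hRsym : Rᵀ = R := hsymm R hR.1
  have hX₀sym : X₀ᵀ = X₀ := hsymm X₀ hX₀.1
  have hPsym : (P K)ᵀ = P K := by
    have h2 : (A - B * K)ᵀ * (P K)ᵀ + (P K)ᵀ * (A - B * K) + Kᵀ * R * K + Q = 0 := by
      have h1 := congrArg Matrix.transpose (hP K hK)
      simp only [Matrix.transpose_add, Matrix.transpose_mul, Matrix.transpose_transpose,
        Matrix.transpose_zero] at h1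
      rw [hRsym, hQsym] at h1
      calc (A - B * K)ᵀ * (P K)ᵀ + (P K)ᵀ * (A - B * K) + Kᵀ * R * K + Q
          = (P K)ᵀ * (A - B * K) + (A - B * K)ᵀ * (P K)ᵀ + Kᵀ * (R * K) + Q := by
            rw [Matrix.mul_assoc]; abel
        _ = 0 := h1
    exact hPuniq K hK _ h2
  have hXsym : Xᵀ = X := LQRAux.lyapX_symm (A - B * K) X₀ X hX₀sym (h0 K hK) hXeq
  -- Fréchet derivative machinery
  have hPfd : HasFDerivAt P (fderiv ℝ P K) K := hPd.hasFDerivAt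
  set Pm := fderiv ℝ P K with hPm
  have hAffHF : HasFDerivAt (fun K' : Matrix (Fin m) (Fin n) ℝ => A - B * K')
      (0 - mulCLM B) K := (hasFDerivAt_const A K).sub (mulCLM B).hasFDerivAt
  have hΛHF : HasFDerivAt (fun K' : Matrix (Fin m) (Fin n) ℝ =>
      (lyapCLM (A - B * K') : Matrix (Fin n) (Fin n) ℝ →L[ℝ] Matrix (Fin n) (Fin n) ℝ))
      (lyapCLM.comp (0 - mulCLM B)) K := lyapCLM.hasFDerivAt.comp K hAffHF
  have hT12 : HasFDerivAt (fun K' => lyapCLM (A - B * K') (P K'))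
      ((lyapCLM (A - B * K)).comp Pm + (lyapCLM.comp (0 - mulCLM B)).flip (P K)) K :=
    hΛHF.clm_apply hPfd
  have hT3 : HasFDerivAt (fun K' => (c K') K')
      ((c K).comp (ContinuousLinearMap.id ℝ _) + c.flip K) K :=
    c.hasFDerivAt.clm_apply (hasFDerivAt_id K)
  have hT4 : HasFDerivAt (fun _ : Matrix (Fin m) (Fin n) ℝ => Q)
      (0 : Matrix (Fin m) (Fin n) ℝ →L[ℝ] Matrix (Fin n) (Fin n) ℝ) K := hasFDerivAt_const Q K
  have hFHF : HasFDerivAt (fun K' => lyapCLM (A - B * K') (P K') + ((c K') K' + Q))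
      (((lyapCLM (A - B * K)).comp Pm + (lyapCLM.comp (0 - mulCLM B)).flip (P K))
        + (((c K).comp (ContinuousLinearMap.id ℝ _) + c.flip K) + 0)) K :=
    hT12.add (hT3.add hT4)
  have hFev : (fun K' => lyapCLM (A - B * K') (P K') + ((c K') K' + Q)) =ᶠ[𝓝 K]
      (fun _ => (0 : Matrix (Fin n) (Fin n) ℝ)) := by
    filter_upwards [hUopen.mem_nhds hKU] with K' hK'
    have h1 := hP K' hK'
    simp only [lyapCLM_apply, hcapp]
    rw [← add_assoc]
    exact h1
  have hD0 : (((lyapCLM (A - B * K)).comp Pm + (lyapCLM.comp (0 - mulCLM B)).flip (P K))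
      + (((c K).comp (ContinuousLinearMap.id ℝ _) + c.flip K) + 0)) = 0 := by
    rw [← hFHF.fderiv, hFev.fderiv_eq]
    exact fderiv_const_apply 0
  have hkey : ∀ M : Matrix (Fin m) (Fin n) ℝ,
      (A - B * K)ᵀ * (Pm M) + (Pm M) * (A - B * K)
        = (B * M)ᵀ * P K + P K * (B * M) - (Kᵀ * R * M + Mᵀ * R * K) := by
    intro M
    have h := congrArg (fun T : Matrix (Fin m) (Fin n) ℝ →L[ℝ] Matrix (Fin n) (Fin n) ℝ => T M) hD0
    simp only [ContinuousLinearMap.add_apply, ContinuousLinearMap.coe_comp',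
      Function.comp_apply, ContinuousLinearMap.flip_apply, ContinuousLinearMap.sub_apply,
      ContinuousLinearMap.zero_apply, ContinuousLinearMap.coe_id', id_eq, lyapCLM_apply,
      ContinuousLinearMap.coe_sub', Pi.sub_apply, ContinuousLinearMap.coe_zero, Pi.zero_apply,
      mulCLM_apply, hcapp, zero_sub, ContinuousLinearMap.neg_apply, add_zero,
      Matrix.transpose_neg, Matrix.neg_mul, Matrix.mul_neg] at h
    rw [← sub_eq_zero]
    abel_nf
    abel_nf at h
    exact h
  have hffd : HasFDerivAt f (ftr.comp Pm) K := by
    rw [hfP]; exact ftr.hasFDerivAt.comp K hPfd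
  have hfderiv : ∀ M : Matrix (Fin m) (Fin n) ℝ,
      fderiv ℝ f K M = Matrix.trace (Pm M * X₀) := by
    intro M; rw [hffd.fderiv]; rfl
  have hmain : ∀ M : Matrix (Fin m) (Fin n) ℝ, fderiv ℝ f K M
      = frobInner (((2:ℝ) • (R * K - Bᵀ * P K)) * X) M := by
    intro M
    rw [hfderiv M]
    exact trace_grad_eq (A - B * K) (P K) X₀ X (Pm M) B R K M (hkey M) hXeq hPsym hXsym hRsym
  refine ⟨?_, hmain⟩
  ext i j
  show fderiv ℝ f K (Matrix.single i j 1) = _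
  rw [hmain]
  exact frob_std _ i j

end FrobTop

theorem stmt1 (n m : ℕ) (hn : 0 < n) (hm : 0 < m)
    (A : Matrix (Fin n) (Fin n) ℝ) (B : Matrix (Fin n) (Fin m) ℝ)
    (Q : Matrix (Fin n) (Fin n) ℝ) (R : Matrix (Fin m) (Fin m) ℝ)
    (X₀ : Matrix (Fin n) (Fin n) ℝ)
    (hQ : Q.PosDef) (hR : R.PosDef) (hX₀ : X₀.PosDef)
    -- `P K` is the unique solution of the Lyapunov equation for every stabilizing `K`
    (P : Matrix (Fin m) (Fin n) ℝ → Matrix (Fin n) (Fin n) ℝ)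
    (hP : ∀ K, IsHurwitz (A - B * K) →
      (A - B * K)ᵀ * P K + P K * (A - B * K) + Kᵀ * R * K + Q = 0)
    (hPuniq : ∀ K, IsHurwitz (A - B * K) → ∀ P' : Matrix (Fin n) (Fin n) ℝ,
      (A - B * K)ᵀ * P' + P' * (A - B * K) + Kᵀ * R * K + Q = 0 → P' = P K)
    (f : Matrix (Fin m) (Fin n) ℝ → ℝ) (hf : f = fun K => Matrix.trace (P K * X₀))
    (K : Matrix (Fin m) (Fin n) ℝ) (hK : IsHurwitz (A - B * K)) :
    DifferentiableAt ℝ f K ∧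
    -- the Lyapunov equation `(A-BK) X + X (A-BK)ᵀ + X₀ = 0` has a unique solution `X(K)`
    (∃! X : Matrix (Fin n) (Fin n) ℝ,
      (A - B * K) * X + X * (A - B * K)ᵀ + X₀ = 0) ∧
    -- and for that solution, `∇f(K) = E(K) X(K)` with `E(K) = 2(RK - Bᵀ P(K))`, equivalently
    -- the Fréchet derivative of `f` at `K` in direction `M` is `⟨E(K) X(K), M⟩`
    ∀ X : Matrix (Fin n) (Fin n) ℝ,
      (A - B * K) * X + X * (A - B * K)ᵀ + X₀ = 0 →
      gradMatrix f K = ((2 : ℝ) • (R * K - Bᵀ * P K)) * X ∧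
      ∀ M : Matrix (Fin m) (Fin n) ℝ,
        fderiv ℝ f K M = frobInner (((2 : ℝ) • (R * K - Bᵀ * P K)) * X) M :=
  stmt1_aux n m hn hm A B Q R X₀ hQ hR hX₀ P hP hPuniq f hf K hK
end

section
/- Let K ∈ 𝒦_st, let ζ ∈ ℝⁿ, and let P be a solution of the Lyapunov equation (A − BK)ᵀP + P(A − BK) + KᵀRK + Q = 0. Define x(t) = exp(t(A − BK)) ζ, where exp denotes the matrix exponential. Then the function t ↦ x(t)ᵀ (Q + KᵀRK) x(t) is integrable on [0, ∞) and ∫₀^∞ x(t)ᵀ (Q + KᵀRK) x(t) dt = ζᵀ P ζ = Tr(P ζ ζᵀ). -/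
open Matrix MeasureTheory

noncomputable section LQRAux

open NormedSpace Filter

variable {n : ℕ}

attribute [local instance] Matrix.linftyOpNormedRing Matrix.linftyOpNormedAlgebra

/-- Eigenvector equation passes to the matrix exponential. -/
lemma aux_mulVec_exp_eig (M : Matrix (Fin n) (Fin n) ℂ) {w : Fin n → ℂ} {μ : ℂ}
    (h : M.mulVec w = μ • w) : (exp M).mulVec w = Complex.exp μ • w := by
  have hpow : ∀ k : ℕ, (M ^ k).mulVec w = μ ^ k • w := by
    intro k
    induction k with
    | zero => simp
    | succ k ih =>
      rw [pow_succ', ← Matrix.mulVec_mulVec, ih, Matrix.mulVec_smul, h, smul_smul, ← pow_succ]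
  let Φ : Matrix (Fin n) (Fin n) ℂ →ₗ[ℂ] (Fin n → ℂ) :=
    { toFun := fun A => A.mulVec w
      map_add' := fun A B => Matrix.add_mulVec A B w
      map_smul' := fun c A => (Matrix.smul_mulVec c A w) }
  let Φc : Matrix (Fin n) (Fin n) ℂ →L[ℂ] (Fin n → ℂ) :=
    ⟨Φ, Φ.continuous_of_finiteDimensional⟩
  have hsum : Summable (fun k : ℕ => (k.factorial⁻¹ : ℂ) • M ^ k) := expSeries_summable' M
  have : (exp M).mulVec w = Φc (∑' k : ℕ, (k.factorial⁻¹ : ℂ) • M ^ k) := by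
    rw [exp_eq_tsum ℂ]
    rfl
  rw [this, Φc.map_tsum hsum]
  have h2 : ∀ k : ℕ, Φc ((k.factorial⁻¹ : ℂ) • M ^ k) = ((k.factorial⁻¹ : ℂ) * μ ^ k) • w := by
    intro k
    show ((k.factorial⁻¹ : ℂ) • M ^ k).mulVec w = _
    rw [Matrix.smul_mulVec, hpow, smul_smul]
  simp_rw [h2]
  rw [Summable.tsum_smul_const ?_]
  · congr 1
    rw [Complex.exp_eq_exp_ℂ, exp_eq_tsum ℂ]
    simp [smul_eq_mul]
  · simpa [smul_eq_mul] using (expSeries_summable' (𝕂 := ℂ) μ)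

/-- Spectral mapping (one direction) for the matrix exponential. -/
lemma aux_exp_spectrum (M : Matrix (Fin n) (Fin n) ℂ) {μ : ℂ}
    (hμ : μ ∈ spectrum ℂ (exp M)) : ∃ l ∈ spectrum ℂ M, μ = Complex.exp l := by
  classical
  set e := (Matrix.toLinAlgEquiv' : Matrix (Fin n) (Fin n) ℂ ≃ₐ[ℂ] _) with he
  have hsp : μ ∈ spectrum ℂ (e (exp M)) := by rwa [AlgEquiv.spectrum_eq]
  have hev : Module.End.HasEigenvalue (e (exp M)) μ :=
    Module.End.hasEigenvalue_iff_mem_spectrum.mpr hsp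
  set E := Module.End.eigenspace (e (exp M)) μ with hE
  haveI : Nontrivial E := Submodule.nontrivial_iff_ne_bot.mpr hev
  have hcomm : e M * e (exp M) = e (exp M) * e M := by
    rw [← _root_.map_mul, ← _root_.map_mul]
    congr 1
    exact ((Commute.refl M).exp_right).eq
  have hinv : ∀ v ∈ E, e M v ∈ E := by
    intro v hv
    rw [hE, Module.End.mem_eigenspace_iff] at hv ⊢
    calc e (exp M) (e M v) = (e (exp M) * e M) v := rfl
      _ = (e M * e (exp M)) v := by rw [hcomm]
      _ = e M (e (exp M) v) := rfl
      _ = μ • e M v := by rw [hv, _root_.map_smul]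
  let g : Module.End ℂ E := (e M).restrict hinv
  obtain ⟨l, hl⟩ := Module.End.exists_eigenvalue g
  obtain ⟨v, hv⟩ := hl.exists_hasEigenvector
  have hvne : (v : Fin n → ℂ) ≠ 0 := fun hz => hv.2 (by exact_mod_cast Subtype.ext hz)
  have hgv : e M (v : Fin n → ℂ) = l • (v : Fin n → ℂ) := by
    have := hv.apply_eq_smul
    have := congrArg (Subtype.val) this
    simpa [g, LinearMap.restrict_apply] using this
  have hMv : M.mulVec (v : Fin n → ℂ) = l • (v : Fin n → ℂ) := by
    rwa [he, Matrix.toLinAlgEquiv'_apply] at hgv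
  have hexpv : (exp M).mulVec (v : Fin n → ℂ) = Complex.exp l • (v : Fin n → ℂ) :=
    aux_mulVec_exp_eig M hMv
  have hmem : (exp M).mulVec (v : Fin n → ℂ) = μ • (v : Fin n → ℂ) := by
    have h2 : e (exp M) (v : Fin n → ℂ) = μ • (v : Fin n → ℂ) :=
      Module.End.mem_eigenspace_iff.mp v.2
    rwa [he, Matrix.toLinAlgEquiv'_apply] at h2
  obtain ⟨i, hi⟩ := Function.ne_iff.mp hvne
  have : Complex.exp l * (v : Fin n → ℂ) i = μ * (v : Fin n → ℂ) i := by
    have := congrFun (hexpv.symm.trans hmem) i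
    simpa using this
  have hlμ : μ = Complex.exp l := (mul_right_cancel₀ (by simpa using hi) this).symm
  refine ⟨l, ?_, hlμ⟩
  have : Module.End.HasEigenvalue (e M) l :=
    Module.End.hasEigenvalue_of_hasEigenvector ⟨Module.End.mem_eigenspace_iff.mpr hgv, hvne⟩
  have := this.mem_spectrum
  rwa [AlgEquiv.spectrum_eq] at this

lemma aux_norm_exp_le {𝕂 𝔸 : Type*} [RCLike 𝕂] [NormedRing 𝔸] [NormOneClass 𝔸]
    [NormedAlgebra 𝕂 𝔸] [CompleteSpace 𝔸] (y : 𝔸) : ‖exp y‖ ≤ Real.exp ‖y‖ := by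
  rw [exp_eq_tsum 𝕂]
  refine (norm_tsum_le_tsum_norm (norm_expSeries_summable' y)).trans ?_
  rw [Real.exp_eq_exp_ℝ, exp_eq_tsum_div]
  refine Summable.tsum_le_tsum (fun k => ?_) (norm_expSeries_summable' y)
    (Real.summable_pow_div_factorial ‖y‖)
  rw [norm_smul, norm_inv, RCLike.norm_natCast, div_eq_inv_mul]
  exact mul_le_mul_of_nonneg_left (norm_pow_le y k) (by positivity)

lemma aux_norm_map_ofReal (X : Matrix (Fin n) (Fin n) ℝ) :
    ‖X.map Complex.ofReal‖ = ‖X‖ := by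
  rw [← coe_nnnorm, ← coe_nnnorm]
  congr 1
  rw [Matrix.linfty_opNNNorm_def, Matrix.linfty_opNNNorm_def]
  congr 1
  ext i
  simp [Matrix.map_apply]

/-- Hurwitz matrices have exponentially decaying matrix exponential. -/
lemma aux_decay (hn : 0 < n) (M : Matrix (Fin n) (Fin n) ℝ) (hM : IsHurwitz M) :
    ∃ C > 0, ∃ ε > 0, ∀ t : ℝ, 0 ≤ t →
      ‖exp (t • M)‖ ≤ C * Real.exp (-ε * t) := by
  haveI : Nonempty (Fin n) := ⟨⟨0, hn⟩⟩
  set Mc := M.map Complex.ofReal with hMc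
  have hmapexp : ∀ X : Matrix (Fin n) (Fin n) ℝ,
      (exp X).map Complex.ofReal = exp (X.map Complex.ofReal) := by
    intro X
    have hcont : Continuous (fun A : Matrix (Fin n) (Fin n) ℝ => A.map Complex.ofReal) :=
      LinearMap.continuous_of_finiteDimensional
        ({ toFun := fun A => A.map Complex.ofReal,
           map_add' := by intros; ext i j; simp
           map_smul' := by intros; ext i j; simp [Complex.real_smul] } :
          Matrix (Fin n) (Fin n) ℝ →ₗ[ℝ] Matrix (Fin n) (Fin n) ℂ)
    exact map_exp (Complex.ofRealHom.mapMatrix :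
        Matrix (Fin n) (Fin n) ℝ →+* Matrix (Fin n) (Fin n) ℂ) hcont X
  have hmapsmul : ∀ t : ℝ, (t • M).map Complex.ofReal = t • Mc := by
    intro t; ext i j; simp [hMc, Matrix.map_apply, Complex.real_smul]
  have hnorm : ∀ t : ℝ, ‖exp (t • M)‖ = ‖exp (t • Mc)‖ := by
    intro t
    rw [← aux_norm_map_ofReal, hmapexp, hmapsmul]
  set Ec := exp Mc with hEc
  obtain ⟨z, hz, hzρ⟩ := spectrum.exists_nnnorm_eq_spectralRadius Ec
  obtain ⟨l, hl, hzl⟩ := aux_exp_spectrum Mc hz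
  have hre : l.re < 0 := hM l hl
  set ε : ℝ := -l.re / 2 with hεdef
  have hεpos : 0 < ε := by simp [hεdef]; linarith
  set r : ℝ := Real.exp (-ε) with hrdef
  have hr0 : 0 < r := Real.exp_pos _
  have hr1 : r < 1 := Real.exp_lt_one_iff.mpr (by linarith)
  have hzr : ‖z‖ < r := by
    rw [hzl, Complex.norm_exp, hrdef]
    exact Real.exp_lt_exp.2 (by rw [hεdef]; linarith)
  have hρr : spectralRadius ℂ Ec < ENNReal.ofReal r := by
    rw [← hzρ, ← enorm_eq_nnnorm, ← ofReal_norm]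
    exact (ENNReal.ofReal_lt_ofReal_iff hr0).mpr hzr
  have hgel := spectrum.pow_norm_pow_one_div_tendsto_nhds_spectralRadius Ec
  have hev : ∀ᶠ k : ℕ in atTop,
      ENNReal.ofReal (‖Ec ^ k‖ ^ (1 / (k:ℝ))) < ENNReal.ofReal r :=
    hgel.eventually_lt_const hρr
  obtain ⟨N, hN⟩ := eventually_atTop.mp (hev.and (eventually_ge_atTop 1))
  have hpowk : ∀ k, N ≤ k → ‖Ec ^ k‖ ≤ r ^ k := by
    intro k hk
    obtain ⟨h1, h2⟩ := hN k hk
    have hk0 : (k:ℝ) ≠ 0 := by positivity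
    have hlt : ‖Ec ^ k‖ ^ (1 / (k:ℝ)) < r :=
      (ENNReal.ofReal_lt_ofReal_iff hr0).mp h1
    have : (‖Ec ^ k‖ ^ (1 / (k:ℝ))) ^ (k:ℝ) ≤ r ^ (k:ℝ) :=
      Real.rpow_le_rpow (Real.rpow_nonneg (norm_nonneg _) _) hlt.le (by positivity)
    rwa [← Real.rpow_mul (norm_nonneg _), one_div, inv_mul_cancel₀ hk0, Real.rpow_one,
      Real.rpow_natCast] at this
  have key : ∀ t : ℝ, 0 ≤ t →
      ‖exp (t • Mc)‖ ≤ ‖Ec ^ (⌊t⌋₊)‖ * Real.exp ‖Mc‖ := by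
    intro t ht
    set k := ⌊t⌋₊ with hkdef
    set s := t - k with hsdef
    have hs0 : 0 ≤ s := by
      have := Nat.floor_le ht; simp [hsdef]; linarith
    have hs1 : s ≤ 1 := by
      have := (Nat.lt_floor_add_one t).le; simp [hsdef]; linarith
    have hsplit : exp (t • Mc) = Ec ^ k * exp (s • Mc) := by
      have h1 : t • Mc = (k:ℝ) • Mc + s • Mc := by
        rw [← add_smul]; congr 1; rw [hsdef]; ring
      rw [h1, Matrix.exp_add_of_commute _ _ (((Commute.refl Mc).smul_left ((k:ℝ))).smul_right s),
        Nat.cast_smul_eq_nsmul, Matrix.exp_nsmul]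
    rw [hsplit]
    refine (norm_mul_le _ _).trans ?_
    refine mul_le_mul_of_nonneg_left ((aux_norm_exp_le (𝕂 := ℂ) _).trans ?_) (norm_nonneg _)
    refine Real.exp_le_exp.2 ?_
    rw [norm_smul, Real.norm_eq_abs, abs_of_nonneg hs0]
    exact mul_le_of_le_one_left (norm_nonneg _) hs1
  set T : ℝ := (N:ℝ) + 1 with hT
  refine ⟨Real.exp (‖Mc‖ + ε) + Real.exp (T * ‖Mc‖ + ε * T), by positivity, ε, hεpos, ?_⟩
  intro t ht
  rw [hnorm]
  by_cases hcase : N ≤ ⌊t⌋₊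
  · have h1 := key t ht
    have h2 := hpowk _ hcase
    have hk1 : (t - 1 : ℝ) ≤ (⌊t⌋₊ : ℝ) := by
      have := (Nat.lt_floor_add_one t).le; linarith
    have h3 : r ^ (⌊t⌋₊) ≤ Real.exp ε * Real.exp (-ε * t) := by
      rw [hrdef, ← Real.exp_nat_mul, ← Real.exp_add]
      refine Real.exp_le_exp.2 ?_
      have : -ε * (⌊t⌋₊:ℝ) ≤ -ε * (t - 1) := by nlinarith
      calc (⌊t⌋₊ : ℝ) * -ε = -ε * (⌊t⌋₊:ℝ) := by ring
        _ ≤ -ε * (t-1) := this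
        _ = ε + -ε * t := by ring
    calc ‖exp (t • Mc)‖ ≤ ‖Ec ^ (⌊t⌋₊)‖ * Real.exp ‖Mc‖ := h1
      _ ≤ r ^ (⌊t⌋₊) * Real.exp ‖Mc‖ :=
          mul_le_mul_of_nonneg_right h2 (Real.exp_pos _).le
      _ ≤ (Real.exp ε * Real.exp (-ε * t)) * Real.exp ‖Mc‖ :=
          mul_le_mul_of_nonneg_right h3 (Real.exp_pos _).le
      _ = Real.exp (‖Mc‖ + ε) * Real.exp (-ε * t) := by
          rw [← Real.exp_add, ← Real.exp_add, ← Real.exp_add]; ring_nf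
      _ ≤ _ := by
          have h4 : 0 ≤ Real.exp (T * ‖Mc‖ + ε * T) * Real.exp (-ε * t) := by positivity
          nlinarith [Real.exp_pos (-ε * t)]
  · push_neg at hcase
    have htT : t ≤ T := by
      have h5 : t < (⌊t⌋₊ : ℝ) + 1 := Nat.lt_floor_add_one t
      have h6 : (⌊t⌋₊ : ℝ) + 1 ≤ (N : ℝ) := by exact_mod_cast hcase
      rw [hT]; linarith
    have hb : ‖exp (t • Mc)‖ ≤ Real.exp (T * ‖Mc‖) := by
      refine (aux_norm_exp_le (𝕂 := ℂ) _).trans (Real.exp_le_exp.2 ?_)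
      rw [norm_smul, Real.norm_eq_abs, abs_of_nonneg ht]
      exact mul_le_mul_of_nonneg_right htT (norm_nonneg _)
    have hc : Real.exp (T * ‖Mc‖) ≤ Real.exp (T * ‖Mc‖ + ε * T) * Real.exp (-ε * t) := by
      rw [← Real.exp_add]
      refine Real.exp_le_exp.2 ?_
      nlinarith
    have hd := hb.trans hc
    nlinarith [Real.exp_pos (-ε * t), Real.exp_pos (‖Mc‖ + ε)]

/-- Derivative of a quadratic form along a differentiable curve. -/
lemma aux_hasDerivAt_quadform (Mq : Matrix (Fin n) (Fin n) ℝ) (u : ℝ → Fin n → ℝ)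
    (w : Fin n → ℝ) (t : ℝ) (hu : ∀ i, HasDerivAt (fun τ => u τ i) (w i) t) :
    HasDerivAt (fun τ => u τ ⬝ᵥ Mq.mulVec (u τ))
      (w ⬝ᵥ Mq.mulVec (u t) + u t ⬝ᵥ Mq.mulVec w) t := by
  have H : HasDerivAt (fun τ => ∑ i, ∑ j, u τ i * (Mq i j * u τ j))
      (∑ i, ∑ j, (w i * (Mq i j * u t j) + u t i * (Mq i j * w j))) t := by
    refine HasDerivAt.fun_sum fun i _ => HasDerivAt.fun_sum fun j _ => ?_
    exact (hu i).mul ((hu j).const_mul (Mq i j))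
  have e1 : (fun τ => u τ ⬝ᵥ Mq.mulVec (u τ))
      = fun τ => ∑ i, ∑ j, u τ i * (Mq i j * u τ j) := by
    funext τ
    simp [dotProduct, Matrix.mulVec, Finset.mul_sum]
  have e2 : w ⬝ᵥ Mq.mulVec (u t) + u t ⬝ᵥ Mq.mulVec w
      = ∑ i, ∑ j, (w i * (Mq i j * u t j) + u t i * (Mq i j * w j)) := by
    simp [dotProduct, Matrix.mulVec, Finset.mul_sum, Finset.sum_add_distrib]
  rw [e1, e2]
  exact H

lemma aux_lyap_dot (L P : Matrix (Fin n) (Fin n) ℝ) (u : Fin n → ℝ) :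
    (L.mulVec u) ⬝ᵥ (P.mulVec u) + u ⬝ᵥ (P.mulVec (L.mulVec u))
      = u ⬝ᵥ ((Lᵀ * P + P * L).mulVec u) := by
  rw [Matrix.add_mulVec, dotProduct_add, ← Matrix.mulVec_mulVec, ← Matrix.mulVec_mulVec]
  congr 1
  rw [Matrix.dotProduct_mulVec u Lᵀ, Matrix.vecMul_transpose]

lemma aux_abs_dot_le (u v : Fin n → ℝ) : |u ⬝ᵥ v| ≤ n * ‖u‖ * ‖v‖ := by
  calc |∑ i, u i * v i| ≤ ∑ i, |u i * v i| := Finset.abs_sum_le_sum_abs _ _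
    _ ≤ ∑ _i : Fin n, ‖u‖ * ‖v‖ := by
        refine Finset.sum_le_sum fun i _ => ?_
        rw [abs_mul]
        exact mul_le_mul (norm_le_pi_norm u i) (norm_le_pi_norm v i) (abs_nonneg _)
          (norm_nonneg _)
    _ = n * ‖u‖ * ‖v‖ := by
        rw [Finset.sum_const, Finset.card_univ, Fintype.card_fin, nsmul_eq_mul]; ring

end LQRAux

theorem stmt2 (n m : ℕ) (hn : 0 < n) (hm : 0 < m)
    (A : Matrix (Fin n) (Fin n) ℝ) (B : Matrix (Fin n) (Fin m) ℝ)
    (Q : Matrix (Fin n) (Fin n) ℝ) (R : Matrix (Fin m) (Fin m) ℝ)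
    (hQ : Q.PosDef) (hR : R.PosDef)
    (K : Matrix (Fin m) (Fin n) ℝ) (hK : IsHurwitz (A - B * K))
    (ζ : Fin n → ℝ)
    (P : Matrix (Fin n) (Fin n) ℝ)
    (hP : (A - B * K)ᵀ * P + P * (A - B * K) + Kᵀ * R * K + Q = 0)
    -- the state trajectory `x(t) = exp(t (A - BK)) ζ`
    (x : ℝ → Fin n → ℝ)
    (hx : x = fun t => (NormedSpace.exp (t • (A - B * K))).mulVec ζ) :
    IntegrableOn (fun t => x t ⬝ᵥ ((Q + Kᵀ * R * K).mulVec (x t))) (Set.Ici (0 : ℝ)) ∧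
    ∫ t in Set.Ici (0 : ℝ), x t ⬝ᵥ ((Q + Kᵀ * R * K).mulVec (x t)) = ζ ⬝ᵥ P.mulVec ζ ∧
    ζ ⬝ᵥ P.mulVec ζ = Matrix.trace (P * Matrix.vecMulVec ζ ζ) := by
  classical
  letI : NormedRing (Matrix (Fin n) (Fin n) ℝ) := Matrix.linftyOpNormedRing
  letI : NormedAlgebra ℝ (Matrix (Fin n) (Fin n) ℝ) := Matrix.linftyOpNormedAlgebra
  set L : Matrix (Fin n) (Fin n) ℝ := A - B * K with hL
  set S : Matrix (Fin n) (Fin n) ℝ := Q + Kᵀ * R * K with hS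
  set f : ℝ → ℝ := fun t => x t ⬝ᵥ S.mulVec (x t) with hf
  set g : ℝ → ℝ := fun t => x t ⬝ᵥ P.mulVec (x t) with hg
  -- decay
  obtain ⟨C, hC, ε, hε, hdecay⟩ := aux_decay hn L hK
  have hxbound : ∀ t : ℝ, 0 ≤ t → ‖x t‖ ≤ (C * ‖ζ‖) * Real.exp (-ε * t) := by
    intro t ht
    rw [hx]
    calc ‖(NormedSpace.exp (t • L)).mulVec ζ‖
        ≤ ‖NormedSpace.exp (t • L)‖ * ‖ζ‖ := Matrix.linfty_opNorm_mulVec _ _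
      _ ≤ (C * Real.exp (-ε * t)) * ‖ζ‖ :=
          mul_le_mul_of_nonneg_right (hdecay t ht) (norm_nonneg _)
      _ = (C * ‖ζ‖) * Real.exp (-ε * t) := by ring
  -- coordinatewise derivative of x
  have hx' : ∀ t : ℝ, ∀ i, HasDerivAt (fun τ => x τ i) ((L.mulVec (x t)) i) t := by
    intro t i
    have hE : HasDerivAt (fun τ : ℝ => NormedSpace.exp (τ • L))
        (NormedSpace.exp (t • L) * L) t := hasDerivAt_exp_smul_const L t
    let Φ : Matrix (Fin n) (Fin n) ℝ →ₗ[ℝ] ℝ :=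
      { toFun := fun M' => M'.mulVec ζ i
        map_add' := fun M₁ M₂ => by simp [Matrix.add_mulVec]
        map_smul' := fun c M' => by simp [Matrix.smul_mulVec] }
    let Φc : Matrix (Fin n) (Fin n) ℝ →L[ℝ] ℝ := ⟨Φ, Φ.continuous_of_finiteDimensional⟩
    have h1 : HasDerivAt (fun τ : ℝ => Φc (NormedSpace.exp (τ • L)))
        (Φc (NormedSpace.exp (t • L) * L)) t := Φc.hasFDerivAt.comp_hasDerivAt t hE
    have h2 : (fun τ : ℝ => Φc (NormedSpace.exp (τ • L))) = fun τ => x τ i := by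
      funext τ; rw [hx]; rfl
    have h3 : Φc (NormedSpace.exp (t • L) * L) = (L.mulVec (x t)) i := by
      show ((NormedSpace.exp (t • L) * L).mulVec ζ) i = _
      rw [(((Commute.refl L).smul_left t).exp_left).eq, ← Matrix.mulVec_mulVec, hx]
    rw [← h2, ← h3]
    exact h1
  have hxc : ∀ i, Continuous (fun t => x t i) := fun i =>
    continuous_iff_continuousAt.mpr fun t => (hx' t i).continuousAt
  -- Lyapunov identity
  have hLyap : Lᵀ * P + P * L = -S := by
    have h0 : (Lᵀ * P + P * L) + (Q + Kᵀ * R * K) = 0 := by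
      calc (Lᵀ * P + P * L) + (Q + Kᵀ * R * K) = Lᵀ * P + P * L + Kᵀ * R * K + Q := by abel
        _ = 0 := hP
    rw [hS]
    exact eq_neg_of_add_eq_zero_left h0
  -- derivative of g
  have hg' : ∀ t : ℝ, HasDerivAt g (-(f t)) t := by
    intro t
    have H := aux_hasDerivAt_quadform P x (L.mulVec (x t)) t (hx' t)
    have heq : (L.mulVec (x t)) ⬝ᵥ P.mulVec (x t) + x t ⬝ᵥ P.mulVec (L.mulVec (x t))
        = -(f t) := by
      rw [aux_lyap_dot, hLyap, Matrix.neg_mulVec, dotProduct_neg, hf]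
    rw [hg]
    rw [heq] at H
    exact H
  -- continuity of f
  have hfc : Continuous f := by
    have e1 : f = fun t => ∑ i, ∑ j, x t i * (S i j * x t j) := by
      funext t
      simp [hf, dotProduct, Matrix.mulVec, Finset.mul_sum]
    rw [e1]
    exact continuous_finset_sum _ fun i _ => continuous_finset_sum _ fun j _ =>
      (hxc i).mul (continuous_const.mul (hxc j))
  -- integrable bound
  have hfbound : ∀ t : ℝ, 0 ≤ t →
      |f t| ≤ (n * (C * ‖ζ‖) * (‖S‖ * (C * ‖ζ‖))) * Real.exp (-ε * t) := by
    intro t ht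
    have h1 : |f t| ≤ n * ‖x t‖ * ‖S.mulVec (x t)‖ := aux_abs_dot_le _ _
    have h2 : ‖S.mulVec (x t)‖ ≤ ‖S‖ * ‖x t‖ := Matrix.linfty_opNorm_mulVec _ _
    have h3 := hxbound t ht
    have h4 : Real.exp (-ε * t) ≤ 1 := by
      rw [← Real.exp_zero]
      exact Real.exp_le_exp.2 (by nlinarith)
    have hx0 : 0 ≤ ‖x t‖ := norm_nonneg _
    have he0 : 0 < Real.exp (-ε * t) := Real.exp_pos _
    have hCζ : 0 ≤ C * ‖ζ‖ := by positivity
    calc |f t| ≤ n * ‖x t‖ * ‖S.mulVec (x t)‖ := h1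
      _ ≤ n * ‖x t‖ * (‖S‖ * ‖x t‖) := by
          refine mul_le_mul_of_nonneg_left h2 (by positivity)
      _ ≤ n * ((C * ‖ζ‖) * Real.exp (-ε * t)) * (‖S‖ * ((C * ‖ζ‖) * Real.exp (-ε * t))) := by
          refine mul_le_mul (mul_le_mul_of_nonneg_left h3 (by positivity))
            (mul_le_mul_of_nonneg_left h3 (norm_nonneg _)) (by positivity) (by positivity)
      _ = (n * (C * ‖ζ‖) * (‖S‖ * (C * ‖ζ‖))) * (Real.exp (-ε * t) * Real.exp (-ε * t)) := by
          ring
      _ ≤ (n * (C * ‖ζ‖) * (‖S‖ * (C * ‖ζ‖))) * (Real.exp (-ε * t) * 1) := by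
          refine mul_le_mul_of_nonneg_left ?_ (by positivity)
          exact mul_le_mul_of_nonneg_left h4 he0.le
      _ = _ := by ring
  have hintIoi : IntegrableOn f (Set.Ioi (0:ℝ)) := by
    refine Integrable.mono' ((exp_neg_integrableOn_Ioi 0 hε).const_mul
      (n * (C * ‖ζ‖) * (‖S‖ * (C * ‖ζ‖))))
      hfc.aestronglyMeasurable.restrict ?_
    filter_upwards [ae_restrict_mem measurableSet_Ioi] with t ht
    rw [Real.norm_eq_abs]
    exact hfbound t (le_of_lt ht)
  have hintIci : IntegrableOn f (Set.Ici (0:ℝ)) := by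
    rwa [integrableOn_Ici_iff_integrableOn_Ioi]
  -- tendsto g → 0
  have hgbound : ∀ t : ℝ, 0 ≤ t →
      |g t| ≤ (n * (C * ‖ζ‖) * (‖P‖ * (C * ‖ζ‖))) * Real.exp (-ε * t) := by
    intro t ht
    have h1 : |g t| ≤ n * ‖x t‖ * ‖P.mulVec (x t)‖ := aux_abs_dot_le _ _
    have h2 : ‖P.mulVec (x t)‖ ≤ ‖P‖ * ‖x t‖ := Matrix.linfty_opNorm_mulVec _ _
    have h3 := hxbound t ht
    have h4 : Real.exp (-ε * t) ≤ 1 := by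
      rw [← Real.exp_zero]
      exact Real.exp_le_exp.2 (by nlinarith)
    have he0 : 0 < Real.exp (-ε * t) := Real.exp_pos _
    calc |g t| ≤ n * ‖x t‖ * ‖P.mulVec (x t)‖ := h1
      _ ≤ n * ‖x t‖ * (‖P‖ * ‖x t‖) := mul_le_mul_of_nonneg_left h2 (by positivity)
      _ ≤ n * ((C * ‖ζ‖) * Real.exp (-ε * t)) * (‖P‖ * ((C * ‖ζ‖) * Real.exp (-ε * t))) := by
          refine mul_le_mul (mul_le_mul_of_nonneg_left h3 (by positivity))
            (mul_le_mul_of_nonneg_left h3 (norm_nonneg _)) (by positivity) (by positivity)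
      _ = (n * (C * ‖ζ‖) * (‖P‖ * (C * ‖ζ‖))) * (Real.exp (-ε * t) * Real.exp (-ε * t)) := by
          ring
      _ ≤ (n * (C * ‖ζ‖) * (‖P‖ * (C * ‖ζ‖))) * (Real.exp (-ε * t) * 1) := by
          refine mul_le_mul_of_nonneg_left ?_ (by positivity)
          exact mul_le_mul_of_nonneg_left h4 he0.le
      _ = _ := by ring
  have htendexp : Filter.Tendsto (fun t : ℝ => (n * (C * ‖ζ‖) * (‖P‖ * (C * ‖ζ‖)))
      * Real.exp (-ε * t)) Filter.atTop (nhds 0) := by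
    have h1 : Filter.Tendsto (fun t : ℝ => -ε * t) Filter.atTop Filter.atBot := by
      exact Filter.Tendsto.const_mul_atTop_of_neg (neg_neg_iff_pos.mpr hε) Filter.tendsto_id
    have h2 := Real.tendsto_exp_atBot.comp h1
    have := h2.const_mul (n * (C * ‖ζ‖) * (‖P‖ * (C * ‖ζ‖)))
    simpa using this
  have hgtend : Filter.Tendsto g Filter.atTop (nhds 0) := by
    refine squeeze_zero_norm' ?_ htendexp
    filter_upwards [Filter.eventually_ge_atTop (0:ℝ)] with t ht
    rw [Real.norm_eq_abs]
    exact hgbound t ht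
  -- FTC on [0, ∞)
  have hFTC : ∫ t in Set.Ioi (0:ℝ), -(f t) = 0 - g 0 :=
    integral_Ioi_of_hasDerivAt_of_tendsto' (fun t _ => hg' t) hintIoi.neg hgtend
  rw [integral_neg] at hFTC
  have hintval : ∫ t in Set.Ioi (0:ℝ), f t = g 0 := by linarith [hFTC]
  have hx0 : x 0 = ζ := by
    rw [hx]
    simp [NormedSpace.exp_zero]
  have hg0 : g 0 = ζ ⬝ᵥ P.mulVec ζ := by rw [hg]; simp [hx0]
  refine ⟨hintIci, ?_, ?_⟩
  · rw [MeasureTheory.integral_Ici_eq_integral_Ioi]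
    exact hintval.trans hg0
  · have e1 : Matrix.trace (P * Matrix.vecMulVec ζ ζ) = ∑ i, ∑ j, P i j * (ζ j * ζ i) := by
      simp [Matrix.trace, Matrix.diag, Matrix.mul_apply, Matrix.vecMulVec_apply]
    have e2 : ζ ⬝ᵥ P.mulVec ζ = ∑ i, ∑ j, ζ i * (P i j * ζ j) := by
      simp [dotProduct, Matrix.mulVec, Finset.mul_sum]
    rw [e1, e2]
    exact Finset.sum_congr rfl fun i _ => Finset.sum_congr rfl fun j _ => by ring
end

section
/- Let 0 < t_low ≤ t_high be reals and let M, N, C₀ be positive integers with M ≤ C₀N. For each k ∈ {1, …, M} let s_k : ℕ → ℝ be a strictly increasing sequence (the push times of worker k) with s_k(i+1) − s_k(i) ≥ t_low for all i. Then: (a) for every σ ∈ ℝ, the number of pairs (k, i) with s_k(i) ∈ (σ, σ + t_high] is at most M(⌊t_high / t_low⌋ + 1); and (b) if (u_ℓ) is a strictly increasing sequence of reals (the master's update times) such that for every ℓ the number of pairs (k, i) with s_k(i) ∈ (u_ℓ, u_{ℓ+1}] is at least N, then for every σ ∈ ℝ the number of indices ℓ with u_ℓ ∈ (σ, σ + t_high]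 is at most C₀(⌊t_high / t_low⌋ + 1) + 1. -/
/-!
Consecutive pushes of one worker are at least `t_low` apart, so a window of length `t_high`
holds at most `⌊t_high / t_low⌋ + 1` of them, and at most `M (⌊t_high / t_low⌋ + 1)` pushes in
total. If updates `ℓ₀ ≤ ℓ` both lie in the window, the batches of at least `N` pushes received
between consecutive updates from `ℓ₀` to `ℓ` are disjoint and inside the window, so
`(ℓ - ℓ₀) N ≤ M (⌊t_high / t_low⌋ + 1) ≤ C₀ N (⌊t_high / t_low⌋ + 1)`.

Counts are taken with `Set.encard`, which is additive without finiteness side conditions.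
-/

open Set

theorem Nat.encard_le_of_forall_sub_le {S : Set ℕ} {K : ℕ}
    (h : ∀ i ∈ S, ∀ j ∈ S, i ≤ j → j - i ≤ K) : S.encard ≤ K + 1 := by
  rcases S.eq_empty_or_nonempty with rfl | hS
  · simp
  have hsub : S ⊆ ↑(Finset.Icc (sInf S) (sInf S + K)) := fun j hj => by
    have hle := Nat.sInf_le hj
    have := h _ (Nat.sInf_mem hS) j hj hle
    simp only [Finset.coe_Icc, mem_Icc]
    omega
  calc S.encard ≤ (Finset.Icc (sInf S) (sInf S + K)).card :=
        (encard_le_encard hsub).trans_eq (encard_coe_eq_coe_finsetCard _)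
    _ = K + 1 := by rw [Nat.card_Icc]; norm_cast; omega

theorem sub_mul_le_sub_of_le_sub_succ {f : ℕ → ℝ} {d : ℝ} (hgap : ∀ i, d ≤ f (i + 1) - f i)
    {i j : ℕ} (hij : i ≤ j) : ((j : ℝ) - i) * d ≤ f j - f i := by
  have hmono : Monotone fun n : ℕ => f n - n * d :=
    monotone_nat_of_le_succ fun n => by push_cast; linarith [hgap n]
  linarith [hmono hij]

theorem encard_preimage_Ioc_le_of_le_sub_succ {f : ℕ → ℝ} {d : ℝ} (hd : 0 < d)
    (hgap : ∀ i, d ≤ f (i + 1) - f i) (a b : ℝ) :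
    (f ⁻¹' Ioc a b).encard ≤ ⌊(b - a) / d⌋₊ + 1 := by
  refine Nat.encard_le_of_forall_sub_le fun i hi j hj hij => Nat.le_floor ?_
  rw [Nat.cast_sub hij, le_div_iff₀ hd]
  linarith [sub_mul_le_sub_of_le_sub_succ hgap hij, hi.1, hj.2]

theorem encard_setOf_prod_le {ι α : Type*} [Fintype ι] {S : ι → Set α} {B : ℕ∞}
    (hS : ∀ k, (S k).encard ≤ B) :
    {x : ι × α | x.2 ∈ S x.1}.encard ≤ Fintype.card ι * B := by
  have hsub : {x : ι × α | x.2 ∈ S x.1} ⊆ ⋃ k, Prod.mk k '' S k :=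
    fun x hx => mem_iUnion.2 ⟨x.1, x.2, hx, rfl⟩
  calc {x : ι × α | x.2 ∈ S x.1}.encard ≤ ∑ k, (Prod.mk k '' S k).encard :=
        (encard_le_encard hsub).trans (encard_iUnion_le_of_fintype _)
    _ ≤ ∑ _k : ι, B := Finset.sum_le_sum fun k _ => (encard_image_le _ _).trans (hS k)
    _ = Fintype.card ι * B := by simp

section Updates

variable {α : Type*} (t : α → ℝ) {u : ℕ → ℝ} {N : ℕ}

theorem mul_le_encard_preimage_Ioc (hu : Monotone u)
    (hcount : ∀ ℓ, N ≤ (t ⁻¹' Ioc (u ℓ) (u (ℓ + 1))).ncard) (ℓ n : ℕ) :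
    ((n * N : ℕ) : ℕ∞) ≤ (t ⁻¹' Ioc (u ℓ) (u (ℓ + n))).encard := by
  induction n with
  | zero => simp
  | succ n ih =>
    have hsplit : Ioc (u ℓ) (u (ℓ + (n + 1))) =
        Ioc (u ℓ) (u (ℓ + n)) ∪ Ioc (u (ℓ + n)) (u (ℓ + n + 1)) :=
      (Ioc_union_Ioc_eq_Ioc (hu (by omega)) (hu (by omega))).symm
    rw [hsplit, preimage_union,
      encard_union_eq ((Ioc_disjoint_Ioc_of_le le_rfl).preimage t)]
    push_cast [add_mul, one_mul]
    exact add_le_add ih ((Nat.cast_le.2 (hcount _)).trans (ncard_le_encard _))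

theorem encard_setOf_mem_Ioc_le (hu : Monotone u) (hN : 0 < N)
    (hcount : ∀ ℓ, N ≤ (t ⁻¹' Ioc (u ℓ) (u (ℓ + 1))).ncard) {a b : ℝ} {K : ℕ}
    (hK : (t ⁻¹' Ioc a b).encard ≤ K * N) :
    {ℓ | u ℓ ∈ Ioc a b}.encard ≤ K + 1 := by
  refine Nat.encard_le_of_forall_sub_le fun i hi j hj hij => ?_
  have hwindow : t ⁻¹' Ioc (u i) (u (i + (j - i))) ⊆ t ⁻¹' Ioc a b :=
    preimage_mono (Ioc_subset_Ioc hi.1.le (by rw [Nat.add_sub_cancel' hij]; exact hj.2))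
  have := (mul_le_encard_preimage_Ioc t hu hcount i (j - i)).trans
    ((encard_le_encard hwindow).trans hK)
  exact Nat.le_of_mul_le_mul_right (by exact_mod_cast this) hN

end Updates

theorem stmt3_general (t_low t_high : ℝ) (h_low : 0 < t_low)
    (M N C₀ : ℕ) (hN : 0 < N) (hMN : M ≤ C₀ * N)
    -- `s k i` is the time of the `i`-th push of worker `k`
    (s : Fin M → ℕ → ℝ)
    (hgap : ∀ k i, t_low ≤ s k (i + 1) - s k i) :
    -- (a) any window `(σ, σ + t_high]` contains at most `M (⌊t_high/t_low⌋ + 1)` pushes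
    (∀ σ : ℝ,
      {p : Fin M × ℕ | s p.1 p.2 ∈ Set.Ioc σ (σ + t_high)}.Finite ∧
      {p : Fin M × ℕ | s p.1 p.2 ∈ Set.Ioc σ (σ + t_high)}.ncard ≤
        M * (⌊t_high / t_low⌋₊ + 1)) ∧
    -- (b) if between consecutive master updates at least `N` pushes arrive, then any window
    -- `(σ, σ + t_high]` contains at most `C₀ (⌊t_high/t_low⌋ + 1) + 1` master updates
    (∀ u : ℕ → ℝ, StrictMono u →
      (∀ ℓ : ℕ, N ≤ {p : Fin M × ℕ | s p.1 p.2 ∈ Set.Ioc (u ℓ) (u (ℓ + 1))}.ncard) →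
      ∀ σ : ℝ,
        {ℓ : ℕ | u ℓ ∈ Set.Ioc σ (σ + t_high)}.Finite ∧
        {ℓ : ℕ | u ℓ ∈ Set.Ioc σ (σ + t_high)}.ncard ≤
          C₀ * (⌊t_high / t_low⌋₊ + 1) + 1) := by
  set B := ⌊t_high / t_low⌋₊
  have hpushes (σ : ℝ) :
      {p : Fin M × ℕ | s p.1 p.2 ∈ Ioc σ (σ + t_high)}.encard ≤ ((M * (B + 1) : ℕ) : ℕ∞) := by
    have := encard_setOf_prod_le (S := fun k => s k ⁻¹' Ioc σ (σ + t_high)) fun k =>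
      encard_preimage_Ioc_le_of_le_sub_succ h_low (hgap k) σ (σ + t_high)
    simpa [add_sub_cancel_left] using this
  refine ⟨fun σ => encard_le_coe_iff_finite_ncard_le.1 (hpushes σ),
    fun u hu hcount σ => encard_le_coe_iff_finite_ncard_le.1 ?_⟩
  have hK : ((M * (B + 1) : ℕ) : ℕ∞) ≤ ((C₀ * (B + 1) * N : ℕ) : ℕ∞) := by
    exact_mod_cast (Nat.mul_le_mul_right _ hMN).trans_eq (by ring)
  exact_mod_cast encard_setOf_mem_Ioc_le (fun p : Fin M × ℕ => s p.1 p.2) hu.monotone hN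
    hcount ((hpushes σ).trans hK)

theorem stmt3 (t_low t_high : ℝ) (h_low : 0 < t_low) (h_le : t_low ≤ t_high)
    (M N C₀ : ℕ) (hM : 0 < M) (hN : 0 < N) (hC₀ : 0 < C₀) (hMN : M ≤ C₀ * N)
    -- `s k i` is the time of the `i`-th push of worker `k`
    (s : Fin M → ℕ → ℝ) (hmono : ∀ k, StrictMono (s k))
    (hgap : ∀ k i, t_low ≤ s k (i + 1) - s k i) :
    -- (a) any window `(σ, σ + t_high]` contains at most `M (⌊t_high/t_low⌋ + 1)` pushes
    (∀ σ : ℝ,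
      {p : Fin M × ℕ | s p.1 p.2 ∈ Set.Ioc σ (σ + t_high)}.Finite ∧
      {p : Fin M × ℕ | s p.1 p.2 ∈ Set.Ioc σ (σ + t_high)}.ncard ≤
        M * (⌊t_high / t_low⌋₊ + 1)) ∧
    -- (b) if between consecutive master updates at least `N` pushes arrive, then any window
    -- `(σ, σ + t_high]` contains at most `C₀ (⌊t_high/t_low⌋ + 1) + 1` master updates
    (∀ u : ℕ → ℝ, StrictMono u →
      (∀ ℓ : ℕ, N ≤ {p : Fin M × ℕ | s p.1 p.2 ∈ Set.Ioc (u ℓ) (u (ℓ + 1))}.ncard) →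
      ∀ σ : ℝ,
        {ℓ : ℕ | u ℓ ∈ Set.Ioc σ (σ + t_high)}.Finite ∧
        {ℓ : ℕ | u ℓ ∈ Set.Ioc σ (σ + t_high)}.ncard ≤
          C₀ * (⌊t_high / t_low⌋₊ + 1) + 1) :=
  stmt3_general t_low t_high h_low M N C₀ hN hMN s hgap
end

section
/- There exists a universal constant c > 0 (independent of m, n, N) such that for every deterministic matrix G ∈ ℝ^{m×n}, with probability at least 1 − 2 exp(−c N / 4): (1/N) ∑_{i=1}^N ⟨G, U_i⟩² ≥ (1/2) ‖G‖_F². -/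
set_option linter.unusedSectionVars false
open MeasureTheory RealInnerProductSpace Real

section Aux

variable {ι : Type*} [Fintype ι] {μ : Measure (EuclideanSpace ℝ ι)} [IsProbabilityMeasure μ]

lemma aux_cont (e : EuclideanSpace ℝ ι) (k : ℕ) :
    Continuous fun x : EuclideanSpace ℝ ι => (⟪e, x⟫ : ℝ) ^ k :=
  (continuous_const.inner continuous_id).pow k

lemma aux_int_inv (hinv : ∀ T : EuclideanSpace ℝ ι ≃ₗᵢ[ℝ] EuclideanSpace ℝ ι, μ.map T = μ)
    (T : EuclideanSpace ℝ ι ≃ₗᵢ[ℝ] EuclideanSpace ℝ ι) {g : EuclideanSpace ℝ ι → ℝ}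
    (hg : AEStronglyMeasurable g μ) :
    ∫ x, g (T x) ∂μ = ∫ x, g x ∂μ := by
  conv_rhs => rw [← hinv T]
  rw [integral_map T.continuous.measurable.aemeasurable]
  rw [hinv T]; exact hg

lemma aux_integrable (hae : ∀ᵐ x ∂μ, ‖x‖ = Real.sqrt (Fintype.card ι))
    (e f : EuclideanSpace ℝ ι) (j k : ℕ) :
    Integrable (fun x => (⟪e, x⟫ : ℝ) ^ j * (⟪f, x⟫ : ℝ) ^ k) μ := by
  refine ⟨((aux_cont e j).mul (aux_cont f k)).aestronglyMeasurable, ?_⟩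
  apply HasFiniteIntegral.of_bounded
    (C := (‖e‖ * Real.sqrt (Fintype.card ι)) ^ j * (‖f‖ * Real.sqrt (Fintype.card ι)) ^ k)
  filter_upwards [hae] with x hx
  rw [Real.norm_eq_abs, abs_mul, abs_pow, abs_pow]
  have h1 : |(⟪e, x⟫ : ℝ)| ≤ ‖e‖ * Real.sqrt (Fintype.card ι) :=
    (abs_real_inner_le_norm e x).trans (le_of_eq (by rw [hx]))
  have h2 : |(⟪f, x⟫ : ℝ)| ≤ ‖f‖ * Real.sqrt (Fintype.card ι) :=
    (abs_real_inner_le_norm f x).trans (le_of_eq (by rw [hx]))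
  have := mul_le_mul (pow_le_pow_left₀ (abs_nonneg _) h1 j) (pow_le_pow_left₀ (abs_nonneg _) h2 k)
    (by positivity) (by positivity)
  exact this

lemma aux_integrable1 (hae : ∀ᵐ x ∂μ, ‖x‖ = Real.sqrt (Fintype.card ι))
    (e : EuclideanSpace ℝ ι) (j : ℕ) :
    Integrable (fun x => (⟪e, x⟫ : ℝ) ^ j) μ := by
  simpa using aux_integrable hae e e j 0

lemma aux_mom_eq (hinv : ∀ T : EuclideanSpace ℝ ι ≃ₗᵢ[ℝ] EuclideanSpace ℝ ι, μ.map T = μ)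
    {e f : EuclideanSpace ℝ ι} (h : ‖e‖ = ‖f‖) (k : ℕ) :
    ∫ x, (⟪e, x⟫ : ℝ) ^ k ∂μ = ∫ x, (⟪f, x⟫ : ℝ) ^ k ∂μ := by
  set R := Submodule.reflection (ℝ ∙ (e - f))ᗮ with hR
  have hRe : R e = f := Submodule.reflection_sub h
  have key : ∀ x, (⟪e, x⟫ : ℝ) = ⟪f, R x⟫ := fun x => by
    calc (⟪e, x⟫ : ℝ) = ⟪R e, R x⟫ := (R.inner_map_map e x).symm
      _ = ⟪f, R x⟫ := by rw [hRe]
  calc ∫ x, (⟪e, x⟫ : ℝ) ^ k ∂μ = ∫ x, (⟪f, R x⟫ : ℝ) ^ k ∂μ := by simp_rw [key]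
    _ = ∫ x, (⟪f, x⟫ : ℝ) ^ k ∂μ := aux_int_inv hinv R (aux_cont f k).aestronglyMeasurable

lemma aux_odd (hinv : ∀ T : EuclideanSpace ℝ ι ≃ₗᵢ[ℝ] EuclideanSpace ℝ ι, μ.map T = μ)
    {e f : EuclideanSpace ℝ ι} (hef : (⟪e, f⟫ : ℝ) = 0) (j k : ℕ) (hk : Odd k) :
    ∫ x, (⟪e, x⟫ : ℝ) ^ j * (⟪f, x⟫ : ℝ) ^ k ∂μ = 0 := by
  set R := Submodule.reflection (ℝ ∙ f)ᗮ with hR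
  have hRf : R f = -f := Submodule.reflection_orthogonalComplement_singleton_eq_neg f
  have hRe : R e = e := by
    apply Submodule.reflection_mem_subspace_eq_self
    rw [Submodule.mem_orthogonal_singleton_iff_inner_left]
    exact hef
  have h1 : ∀ x, (⟪e, R x⟫ : ℝ) = ⟪e, x⟫ := fun x => by
    calc (⟪e, R x⟫ : ℝ) = ⟪R e, R x⟫ := by rw [hRe]
      _ = ⟪e, x⟫ := R.inner_map_map e x
  have h2 : ∀ x, (⟪f, R x⟫ : ℝ) = -⟪f, x⟫ := fun x => by
    calc (⟪f, R x⟫ : ℝ) = -⟪R f, R x⟫ := by rw [hRf, inner_neg_left, neg_neg]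
      _ = -⟪f, x⟫ := by rw [R.inner_map_map]
  have key := aux_int_inv hinv R
    (g := fun x => (⟪e, x⟫ : ℝ) ^ j * (⟪f, x⟫ : ℝ) ^ k)
    (((aux_cont e j).mul (aux_cont f k)).aestronglyMeasurable)
  have key2 : ∫ x, (⟪e, R x⟫ : ℝ) ^ j * (⟪f, R x⟫ : ℝ) ^ k ∂μ
      = -∫ x, (⟪e, x⟫ : ℝ) ^ j * (⟪f, x⟫ : ℝ) ^ k ∂μ := by
    rw [← integral_neg]
    congr 1 with x
    rw [h1, h2, hk.neg_pow]
    ring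
  rw [key2] at key
  linarith

lemma aux_norm_sq [DecidableEq ι] (x : EuclideanSpace ℝ ι) :
    ‖x‖ ^ 2 = ∑ j, (⟪EuclideanSpace.single j (1 : ℝ), x⟫ : ℝ) ^ 2 := by
  rw [← real_inner_self_eq_norm_sq]
  simp only [PiLp.inner_apply, RCLike.inner_apply, conj_trivial,
    EuclideanSpace.inner_single_left, one_mul, sq]
  simp [EuclideanSpace.single_apply, ite_mul, Finset.sum_ite_eq']

lemma aux_mom2 [DecidableEq ι]
    (hinv : ∀ T : EuclideanSpace ℝ ι ≃ₗᵢ[ℝ] EuclideanSpace ℝ ι, μ.map T = μ)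
    (hae : ∀ᵐ x ∂μ, ‖x‖ = Real.sqrt (Fintype.card ι))
    (hcard : 0 < Fintype.card ι) {e : EuclideanSpace ℝ ι} (he : ‖e‖ = 1) :
    ∫ x, (⟪e, x⟫ : ℝ) ^ 2 ∂μ = 1 := by
  have hnb : ∀ j : ι, ‖EuclideanSpace.single j (1 : ℝ)‖ = 1 := fun j => by
    simp [EuclideanSpace.norm_single]
  have hsum : ∑ j : ι, ∫ x, (⟪EuclideanSpace.single j (1 : ℝ), x⟫ : ℝ) ^ 2 ∂μ
      = (Fintype.card ι : ℝ) := by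
    rw [← integral_finset_sum Finset.univ (fun j _ => aux_integrable1 hae _ 2)]
    have hc : ∀ᵐ x ∂μ, (∑ j : ι, (⟪EuclideanSpace.single j (1 : ℝ), x⟫ : ℝ) ^ 2)
        = (Fintype.card ι : ℝ) := by
      filter_upwards [hae] with x hx
      rw [← aux_norm_sq, hx, Real.sq_sqrt (Nat.cast_nonneg _)]
    rw [integral_congr_ae hc, integral_const]
    simp
  have heq : ∀ j : ι, ∫ x, (⟪EuclideanSpace.single j (1 : ℝ), x⟫ : ℝ) ^ 2 ∂μ
      = ∫ x, (⟪e, x⟫ : ℝ) ^ 2 ∂μ := fun j => aux_mom_eq hinv (by rw [hnb j, he]) 2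
  rw [Finset.sum_congr rfl (fun j _ => heq j), Finset.sum_const, Finset.card_univ,
    nsmul_eq_mul] at hsum
  have hc : (0 : ℝ) < Fintype.card ι := by exact_mod_cast hcard
  exact mul_left_cancel₀ hc.ne' (hsum.trans (mul_one _).symm)

lemma aux_cross (hinv : ∀ T : EuclideanSpace ℝ ι ≃ₗᵢ[ℝ] EuclideanSpace ℝ ι, μ.map T = μ)
    (hae : ∀ᵐ x ∂μ, ‖x‖ = Real.sqrt (Fintype.card ι))
    {e f : EuclideanSpace ℝ ι} (he : ‖e‖ = 1) (hf : ‖f‖ = 1) (hef : (⟪e, f⟫ : ℝ) = 0) :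
    ∫ x, (⟪e, x⟫ : ℝ) ^ 2 * (⟪f, x⟫ : ℝ) ^ 2 ∂μ = (∫ x, (⟪e, x⟫ : ℝ) ^ 4 ∂μ) / 3 := by
  set M := ∫ x, (⟪e, x⟫ : ℝ) ^ 4 ∂μ with hMdef
  set g := (Real.sqrt 2)⁻¹ • (e + f) with hg
  have hng : ‖g‖ = 1 := by
    have h2 : ‖e + f‖ ^ 2 = 2 := by
      rw [norm_add_sq_real, he, hf, hef]; ring
    have hg2 : ‖g‖ ^ 2 = 1 := by
      rw [hg, norm_smul, mul_pow, h2, Real.norm_eq_abs, abs_inv,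
        abs_of_nonneg (Real.sqrt_nonneg 2), inv_pow, Real.sq_sqrt (by norm_num : (0:ℝ) ≤ 2)]
      norm_num
    nlinarith [norm_nonneg g]
  have hinner : ∀ x : EuclideanSpace ℝ ι,
      (⟪g, x⟫ : ℝ) = (Real.sqrt 2)⁻¹ * (⟪e, x⟫ + ⟪f, x⟫) := fun x => by
    rw [hg, real_inner_smul_left, inner_add_left]
  have hM : ∫ x, (⟪g, x⟫ : ℝ) ^ 4 ∂μ = M := aux_mom_eq hinv (by rw [hng, he]) 4
  have hs4 : (Real.sqrt 2) ^ 4 = 4 := by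
    rw [show (4:ℕ) = 2 * 2 from rfl, pow_mul, Real.sq_sqrt (by norm_num : (0:ℝ) ≤ 2)]
    norm_num
  have hpt : ∀ x : EuclideanSpace ℝ ι, (⟪g, x⟫ : ℝ) ^ 4
      = (1/4) * ((⟪e, x⟫:ℝ) ^ 4 + 4 * ((⟪e, x⟫:ℝ) ^ 3 * (⟪f, x⟫:ℝ) ^ 1)
        + 6 * ((⟪e, x⟫:ℝ) ^ 2 * (⟪f, x⟫:ℝ) ^ 2) + 4 * ((⟪e, x⟫:ℝ) ^ 1 * (⟪f, x⟫:ℝ) ^ 3)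
        + (⟪f, x⟫:ℝ) ^ 4) := fun x => by
    rw [hinner x, mul_pow, inv_pow, hs4]; ring
  have I1 := aux_integrable1 hae e 4
  have I2 := (aux_integrable hae e f 3 1).const_mul (4:ℝ)
  have I3 := (aux_integrable hae e f 2 2).const_mul (6:ℝ)
  have I4 := (aux_integrable hae e f 1 3).const_mul (4:ℝ)
  have I5 := aux_integrable1 hae f 4
  have I12 : Integrable (fun x => (⟪e, x⟫:ℝ) ^ 4 + 4 * ((⟪e, x⟫:ℝ) ^ 3 * (⟪f, x⟫:ℝ) ^ 1)) μ :=
    I1.add I2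
  have I123 : Integrable (fun x => (⟪e, x⟫:ℝ) ^ 4 + 4 * ((⟪e, x⟫:ℝ) ^ 3 * (⟪f, x⟫:ℝ) ^ 1)
      + 6 * ((⟪e, x⟫:ℝ) ^ 2 * (⟪f, x⟫:ℝ) ^ 2)) μ := I12.add I3
  have I1234 : Integrable (fun x => (⟪e, x⟫:ℝ) ^ 4 + 4 * ((⟪e, x⟫:ℝ) ^ 3 * (⟪f, x⟫:ℝ) ^ 1)
      + 6 * ((⟪e, x⟫:ℝ) ^ 2 * (⟪f, x⟫:ℝ) ^ 2)
      + 4 * ((⟪e, x⟫:ℝ) ^ 1 * (⟪f, x⟫:ℝ) ^ 3)) μ := I123.add I4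
  have key : M = (1/4) * (M + 4 * 0 + 6 * (∫ x, (⟪e, x⟫:ℝ) ^ 2 * (⟪f, x⟫:ℝ) ^ 2 ∂μ)
      + 4 * 0 + M) := by
    calc M = ∫ x, (⟪g, x⟫ : ℝ) ^ 4 ∂μ := hM.symm
      _ = ∫ x, (1/4) * ((⟪e, x⟫:ℝ) ^ 4 + 4 * ((⟪e, x⟫:ℝ) ^ 3 * (⟪f, x⟫:ℝ) ^ 1)
          + 6 * ((⟪e, x⟫:ℝ) ^ 2 * (⟪f, x⟫:ℝ) ^ 2) + 4 * ((⟪e, x⟫:ℝ) ^ 1 * (⟪f, x⟫:ℝ) ^ 3)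
          + (⟪f, x⟫:ℝ) ^ 4) ∂μ := by simp_rw [hpt]
      _ = (1/4) * (M + 4 * 0 + 6 * (∫ x, (⟪e, x⟫:ℝ) ^ 2 * (⟪f, x⟫:ℝ) ^ 2 ∂μ)
          + 4 * 0 + M) := by
        rw [integral_const_mul, integral_add I1234 I5,
          integral_add I123 I4, integral_add I12 I3,
          integral_add I1 I2, integral_const_mul, integral_const_mul, integral_const_mul,
          aux_odd hinv hef 3 1 (by decide), aux_odd hinv hef 1 3 (by decide),
          aux_mom_eq hinv (hf.trans he.symm) 4]
  linarith

lemma aux_mom4 [DecidableEq ι]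
    (hinv : ∀ T : EuclideanSpace ℝ ι ≃ₗᵢ[ℝ] EuclideanSpace ℝ ι, μ.map T = μ)
    (hae : ∀ᵐ x ∂μ, ‖x‖ = Real.sqrt (Fintype.card ι))
    (hcard : 0 < Fintype.card ι) {e : EuclideanSpace ℝ ι} (he : ‖e‖ = 1) :
    ∫ x, (⟪e, x⟫ : ℝ) ^ 4 ∂μ ≤ 3 := by
  set M := ∫ x, (⟪e, x⟫ : ℝ) ^ 4 ∂μ with hMdef
  set d := (Fintype.card ι : ℝ) with hd
  set b : ι → EuclideanSpace ℝ ι := fun j => EuclideanSpace.single j (1 : ℝ) with hb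
  have hnb : ∀ j : ι, ‖b j‖ = 1 := fun j => by simp [hb, EuclideanSpace.norm_single]
  have horth : ∀ j k : ι, j ≠ k → (⟪b j, b k⟫ : ℝ) = 0 := fun j k hjk => by
    simp [hb, EuclideanSpace.inner_single_left, EuclideanSpace.single_apply, Ne.symm hjk]
  have hdiag : ∀ j : ι, ∫ x, (⟪b j, x⟫ : ℝ) ^ 4 ∂μ = M :=
    fun j => aux_mom_eq hinv (by rw [hnb j, he]) 4
  have hcross : ∀ j k : ι, j ≠ k →
      ∫ x, (⟪b j, x⟫ : ℝ) ^ 2 * (⟪b k, x⟫ : ℝ) ^ 2 ∂μ = M / 3 := fun j k hjk => by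
    rw [aux_cross hinv hae (hnb j) (hnb k) (horth j k hjk), hdiag j]
  have hn4 : ∫ x, (∑ j : ι, (⟪b j, x⟫ : ℝ) ^ 2) * (∑ k : ι, (⟪b k, x⟫ : ℝ) ^ 2) ∂μ
      = d ^ 2 := by
    have hc : ∀ᵐ x ∂μ, (∑ j : ι, (⟪b j, x⟫ : ℝ) ^ 2) * (∑ k : ι, (⟪b k, x⟫ : ℝ) ^ 2)
        = d ^ 2 := by
      filter_upwards [hae] with x hx
      have : ∑ j : ι, (⟪b j, x⟫ : ℝ) ^ 2 = d := by
        rw [← aux_norm_sq, hx, Real.sq_sqrt (Nat.cast_nonneg _)]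
      rw [this]; ring
    rw [integral_congr_ae hc, integral_const]
    simp
  have hswap : ∫ x, (∑ j : ι, (⟪b j, x⟫ : ℝ) ^ 2) * (∑ k : ι, (⟪b k, x⟫ : ℝ) ^ 2) ∂μ
      = ∑ j : ι, ∑ k : ι, ∫ x, (⟪b j, x⟫ : ℝ) ^ 2 * (⟪b k, x⟫ : ℝ) ^ 2 ∂μ := by
    have hptw : ∀ x : EuclideanSpace ℝ ι,
        (∑ j : ι, (⟪b j, x⟫ : ℝ) ^ 2) * (∑ k : ι, (⟪b k, x⟫ : ℝ) ^ 2)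
        = ∑ j : ι, ∑ k : ι, (⟪b j, x⟫ : ℝ) ^ 2 * (⟪b k, x⟫ : ℝ) ^ 2 := fun x => by
      rw [Finset.sum_mul_sum]
    simp_rw [hptw]
    rw [integral_finset_sum Finset.univ (fun j _ =>
      integrable_finset_sum Finset.univ (fun k _ => aux_integrable hae (b j) (b k) 2 2))]
    exact Finset.sum_congr rfl fun j _ =>
      integral_finset_sum Finset.univ (fun k _ => aux_integrable hae (b j) (b k) 2 2)
  have hval : ∀ j : ι, ∑ k : ι, ∫ x, (⟪b j, x⟫ : ℝ) ^ 2 * (⟪b k, x⟫ : ℝ) ^ 2 ∂μ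
      = M + (d - 1) * (M / 3) := fun j => by
    rw [← Finset.add_sum_erase _ _ (Finset.mem_univ j)]
    have h1 : ∫ x, (⟪b j, x⟫ : ℝ) ^ 2 * (⟪b j, x⟫ : ℝ) ^ 2 ∂μ = M := by
      have : (fun x => (⟪b j, x⟫ : ℝ) ^ 2 * (⟪b j, x⟫ : ℝ) ^ 2)
          = fun x => (⟪b j, x⟫ : ℝ) ^ 4 := funext fun x => by ring
      rw [this, hdiag j]
    have h2 : ∑ k ∈ Finset.univ.erase j,
        ∫ x, (⟪b j, x⟫ : ℝ) ^ 2 * (⟪b k, x⟫ : ℝ) ^ 2 ∂μ = (d - 1) * (M / 3) := by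
      rw [Finset.sum_congr rfl (fun k hk => hcross j k (Ne.symm (Finset.ne_of_mem_erase hk))),
        Finset.sum_const, Finset.card_erase_of_mem (Finset.mem_univ j), Finset.card_univ,
        nsmul_eq_mul, Nat.cast_sub hcard, Nat.cast_one]
    rw [h1, h2]
  have hcomb : d * (M + (d - 1) * (M / 3)) = d ^ 2 := by
    rw [← hn4, hswap, Finset.sum_congr rfl (fun j _ => hval j), Finset.sum_const,
      Finset.card_univ, nsmul_eq_mul]
  have hdpos : (1 : ℝ) ≤ d := by rw [hd]; exact_mod_cast hcard
  have hM0 : 0 ≤ M := integral_nonneg fun x => by positivity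
  nlinarith [hcomb, hdpos, hM0]

lemma exp_neg_quad (s : ℝ) (hs : 0 ≤ s) : Real.exp (-s) ≤ 1 - s + s ^ 2 / 2 := by
  have key : ∀ t : ℝ, HasDerivAt (fun u : ℝ => 1 - u + u ^ 2 / 2 - Real.exp (-u))
      (-1 + t + Real.exp (-t)) t := by
    intro t
    have h1 : HasDerivAt (fun u : ℝ => 1 - u) (-1) t := by
      simpa using (hasDerivAt_id t).const_sub 1
    have h2 : HasDerivAt (fun u : ℝ => u ^ 2 / 2) t t := by
      simpa using (hasDerivAt_pow 2 t).div_const 2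
    have h3 : HasDerivAt (fun u : ℝ => Real.exp (-u)) (Real.exp (-t) * (-1)) t := by
      simpa using ((hasDerivAt_id t).neg).exp
    have := (h1.add h2).sub h3
    exact this.congr_deriv (by ring)
  have hmono : Monotone (fun u : ℝ => 1 - u + u ^ 2 / 2 - Real.exp (-u)) := by
    apply monotone_of_deriv_nonneg
    · exact fun t => (key t).differentiableAt
    · intro t
      rw [(key t).deriv]
      have := Real.add_one_le_exp (-t)
      linarith
  have h0 := hmono hs
  simp only [Real.exp_zero] at h0
  norm_num at h0
  linarith

lemma aux_mgf_le [DecidableEq ι]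
    (hinv : ∀ T : EuclideanSpace ℝ ι ≃ₗᵢ[ℝ] EuclideanSpace ℝ ι, μ.map T = μ)
    (hae : ∀ᵐ x ∂μ, ‖x‖ = Real.sqrt (Fintype.card ι))
    (hcard : 0 < Fintype.card ι) {e : EuclideanSpace ℝ ι} (he : ‖e‖ = 1) :
    ∫ x, Real.exp (-(1/6) * (⟪e, x⟫ : ℝ) ^ 2) ∂μ ≤ 7/8 := by
  have hpt : ∀ x : EuclideanSpace ℝ ι, Real.exp (-(1/6) * (⟪e, x⟫ : ℝ) ^ 2)
      ≤ 1 - (1/6) * (⟪e, x⟫ : ℝ) ^ 2 + (1/72) * (⟪e, x⟫ : ℝ) ^ 4 := fun x => by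
    have h := exp_neg_quad ((1/6) * (⟪e, x⟫ : ℝ) ^ 2) (by positivity)
    calc Real.exp (-(1/6) * (⟪e, x⟫ : ℝ) ^ 2)
        = Real.exp (-((1/6) * (⟪e, x⟫ : ℝ) ^ 2)) := by ring_nf
      _ ≤ 1 - (1/6) * (⟪e, x⟫ : ℝ) ^ 2 + ((1/6) * (⟪e, x⟫ : ℝ) ^ 2) ^ 2 / 2 := h
      _ = 1 - (1/6) * (⟪e, x⟫ : ℝ) ^ 2 + (1/72) * (⟪e, x⟫ : ℝ) ^ 4 := by ring
  have Ia : Integrable (fun x => (1 : ℝ) - (1/6) * (⟪e, x⟫ : ℝ) ^ 2) μ :=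
    (integrable_const 1).sub ((aux_integrable1 hae e 2).const_mul _)
  have Ib : Integrable (fun x => (1 : ℝ) - (1/6) * (⟪e, x⟫ : ℝ) ^ 2
      + (1/72) * (⟪e, x⟫ : ℝ) ^ 4) μ := Ia.add ((aux_integrable1 hae e 4).const_mul _)
  have Ic : Integrable (fun x => Real.exp (-(1/6) * (⟪e, x⟫ : ℝ) ^ 2)) μ := by
    refine ⟨Continuous.aestronglyMeasurable ?_, ?_⟩
    · exact (continuous_const.mul (aux_cont e 2)).rexp
    · apply HasFiniteIntegral.of_bounded (C := (1 : ℝ))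
      filter_upwards with x
      rw [Real.norm_eq_abs, abs_of_pos (Real.exp_pos _)]
      exact Real.exp_le_one_iff.mpr (by nlinarith [sq_nonneg (⟪e, x⟫ : ℝ)])
  have hM4 := aux_mom4 hinv hae hcard he
  calc ∫ x, Real.exp (-(1/6) * (⟪e, x⟫ : ℝ) ^ 2) ∂μ
      ≤ ∫ x, (1 - (1/6) * (⟪e, x⟫ : ℝ) ^ 2 + (1/72) * (⟪e, x⟫ : ℝ) ^ 4) ∂μ :=
        integral_mono Ic Ib hpt
    _ = 1 - (1/6) * 1 + (1/72) * ∫ x, (⟪e, x⟫ : ℝ) ^ 4 ∂μ := by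
        rw [integral_add Ia ((aux_integrable1 hae e 4).const_mul _),
          integral_sub (integrable_const 1) ((aux_integrable1 hae e 2).const_mul _),
          integral_const_mul, integral_const_mul, aux_mom2 hinv hae hcard he, integral_const]
        simp
    _ ≤ 1 - (1/6) * 1 + (1/72) * 3 := by linarith
    _ ≤ 7/8 := by norm_num

end Aux

theorem stmt6 :
    ∃ c : ℝ, 0 < c ∧
      ∀ (m n N : ℕ), 0 < m → 0 < n → 0 < N →
      ∀ (Ω : Type) (_ : MeasurableSpace Ω) (ℙ : Measure Ω), IsProbabilityMeasure ℙ →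
      ∀ U : Fin N → Ω → EuclideanSpace ℝ (Fin m × Fin n),
        (∀ i, Measurable (U i)) →
        ProbabilityTheory.iIndepFun U ℙ →
        ∀ μ : Measure (EuclideanSpace ℝ (Fin m × Fin n)), IsProbabilityMeasure μ →
          μ (Metric.sphere (0 : EuclideanSpace ℝ (Fin m × Fin n))
              (Real.sqrt (m * n))) = 1 →
          (∀ T : EuclideanSpace ℝ (Fin m × Fin n) ≃ₗᵢ[ℝ] EuclideanSpace ℝ (Fin m × Fin n),
            μ.map T = μ) →
          (∀ i, Measure.map (U i) ℙ = μ) →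
        ∀ G : EuclideanSpace ℝ (Fin m × Fin n),
          ENNReal.ofReal (1 - 2 * Real.exp (-(c * N / 4))) ≤
            ℙ {ω | (1 / 2 : ℝ) * ‖G‖ ^ 2 ≤ (1 / N : ℝ) * ∑ i, ⟪G, U i ω⟫ ^ 2} := by
  refine ⟨1/10, by norm_num, ?_⟩
  intro m n N hm hn hN Ω mΩ ℙ hℙ U hU hind μ hμ hsph hinv hdist G
  have hcard : 0 < Fintype.card (Fin m × Fin n) := by
    simp only [Fintype.card_prod, Fintype.card_fin]
    exact Nat.mul_pos hm hn
  have hcard_eq : (Fintype.card (Fin m × Fin n) : ℝ) = (m : ℝ) * n := by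
    simp [Fintype.card_prod, Fintype.card_fin]
  -- a.e. norm
  have hcompl : μ (Metric.sphere (0 : EuclideanSpace ℝ (Fin m × Fin n)) (Real.sqrt ((m : ℝ) * n)))ᶜ = 0 := by
    rw [measure_compl Metric.isClosed_sphere.measurableSet (measure_ne_top _ _), hsph, measure_univ,
      tsub_self]
  have hae : ∀ᵐ x ∂μ, ‖x‖ = Real.sqrt (Fintype.card (Fin m × Fin n)) := by
    have hmem : ∀ᵐ x ∂μ, x ∈ Metric.sphere (0 : EuclideanSpace ℝ (Fin m × Fin n)) (Real.sqrt ((m : ℝ) * n)) :=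
      MeasureTheory.mem_ae_iff.mpr hcompl
    filter_upwards [hmem] with x hx
    rw [hcard_eq]
    exact mem_sphere_zero_iff_norm.mp hx
  by_cases hG : G = 0
  · have hset : {ω | (1 / 2 : ℝ) * ‖G‖ ^ 2 ≤ (1 / N : ℝ) * ∑ i, (⟪G, U i ω⟫:ℝ) ^ 2}
        = Set.univ := by
      ext ω
      simp [hG, Set.mem_setOf_eq]
    rw [hset, measure_univ]
    exact ENNReal.ofReal_le_one.mpr (by nlinarith [Real.exp_pos (-(1/10 * (N:ℝ) / 4))])
  -- main case
  have hGn : (0 : ℝ) < ‖G‖ := norm_pos_iff.mpr hG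
  set e : EuclideanSpace ℝ (Fin m × Fin n) := ‖G‖⁻¹ • G with he_def
  have he : ‖e‖ = 1 := norm_smul_inv_norm hG
  set X : Fin N → Ω → ℝ := fun i ω => (⟪e, U i ω⟫ : ℝ) ^ 2 with hX
  have hfmeas : Measurable fun v : EuclideanSpace ℝ (Fin m × Fin n) => (⟪e, v⟫ : ℝ) ^ 2 :=
    (aux_cont e 2).measurable
  have hXmeas : ∀ i, Measurable (X i) := fun i => hfmeas.comp (hU i)
  have hXind : ProbabilityTheory.iIndepFun X ℙ := by
    exact hind.comp (fun _ v => (⟪e, v⟫ : ℝ) ^ 2) (fun _ => hfmeas)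
  set S : Ω → ℝ := ∑ i : Fin N, X i with hS
  have hSapp : ∀ ω, S ω = ∑ i : Fin N, X i ω := fun ω => by
    rw [hS]; exact Finset.sum_apply ω Finset.univ X
  have hSnn : ∀ ω, 0 ≤ S ω := fun ω => by
    rw [hSapp]; exact Finset.sum_nonneg fun i _ => sq_nonneg _
  have hSmeas : Measurable S := by
    have h : S = fun ω => ∑ i : Fin N, X i ω := funext hSapp
    rw [h]
    exact Finset.measurable_sum Finset.univ fun i _ => hXmeas i
  have hNpos : (0:ℝ) < N := Nat.cast_pos.mpr hN
  have hintS : Integrable (fun ω => Real.exp (-(1/6) * S ω)) ℙ := by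
    refine ⟨(Real.measurable_exp.comp (hSmeas.const_mul _)).aestronglyMeasurable, ?_⟩
    apply HasFiniteIntegral.of_bounded (C := (1:ℝ))
    filter_upwards with ω
    rw [Real.norm_eq_abs, abs_of_pos (Real.exp_pos _)]
    exact Real.exp_le_one_iff.mpr (by nlinarith [hSnn ω])
  have chern := ProbabilityTheory.measure_le_le_exp_mul_mgf (X := S) (μ := ℙ)
    (t := -(1/6)) ((N:ℝ)/2) (by norm_num) hintS
  have hprod : ProbabilityTheory.mgf S ℙ (-(1/6))
      = ∏ i : Fin N, ProbabilityTheory.mgf (X i) ℙ (-(1/6)) := hXind.mgf_sum hXmeas Finset.univ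
  have hfac : ∀ i, ProbabilityTheory.mgf (X i) ℙ (-(1/6)) ≤ 7/8 := fun i => by
    have heq : ∫ x, Real.exp (-(1/6) * (⟪e, x⟫ : ℝ) ^ 2) ∂μ
        = ProbabilityTheory.mgf (X i) ℙ (-(1/6)) := by
      rw [← hdist i, integral_map (f := fun x => Real.exp (-(1/6) * (⟪e, x⟫ : ℝ) ^ 2)) (hU i).aemeasurable
        ((continuous_const.mul (aux_cont e 2)).rexp.aestronglyMeasurable)]
      rfl
    rw [← heq]
    exact aux_mgf_le hinv hae hcard he
  have hkey : Real.exp (13/120) ≤ 120/107 := by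
    have h1 := Real.add_one_le_exp (-(13/120:ℝ))
    have hmul : Real.exp (13/120) * Real.exp (-(13/120)) = 1 := by
      rw [← Real.exp_add]; norm_num
    nlinarith [Real.exp_pos (13/120:ℝ)]
  have hfac2 : Real.exp (1/12) * (7/8) ≤ Real.exp (-(1/40)) := by
    have hsplit : Real.exp (1/12:ℝ) = Real.exp (13/120) * Real.exp (-(1/40)) := by
      rw [← Real.exp_add]; norm_num
    calc Real.exp (1/12) * (7/8)
        = (Real.exp (13/120) * (7/8)) * Real.exp (-(1/40)) := by rw [hsplit]; ring
      _ ≤ ((120/107) * (7/8)) * Real.exp (-(1/40)) :=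
          mul_le_mul_of_nonneg_right
            (mul_le_mul_of_nonneg_right hkey (by norm_num)) (Real.exp_pos _).le
      _ ≤ 1 * Real.exp (-(1/40)) :=
          mul_le_mul_of_nonneg_right (by norm_num) (Real.exp_pos _).le
      _ = Real.exp (-(1/40)) := one_mul _
  have hprodle : ∏ i : Fin N, ProbabilityTheory.mgf (X i) ℙ (-(1/6)) ≤ (7/8:ℝ)^N := by
    calc ∏ i : Fin N, ProbabilityTheory.mgf (X i) ℙ (-(1/6))
        ≤ ∏ _i : Fin N, (7/8:ℝ) :=
          Finset.prod_le_prod (fun i _ => ProbabilityTheory.mgf_nonneg) (fun i _ => hfac i)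
      _ = (7/8:ℝ)^N := by rw [Finset.prod_const, Finset.card_univ, Fintype.card_fin]
  have htotal : (ℙ {ω | S ω ≤ (N:ℝ)/2}).toReal ≤ 2 * Real.exp (-(1/10 * N / 4)) := by
    calc (ℙ {ω | S ω ≤ (N:ℝ)/2}).toReal
        ≤ Real.exp (-(-(1/6)) * ((N:ℝ)/2)) * ProbabilityTheory.mgf S ℙ (-(1/6)) := chern
      _ ≤ Real.exp ((N:ℝ) * (1/12)) * (7/8:ℝ)^N := by
          rw [hprod, show (-(-(1/6:ℝ)) * ((N:ℝ)/2)) = (N:ℝ) * (1/12) by ring]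
          exact mul_le_mul_of_nonneg_left hprodle (Real.exp_pos _).le
      _ = (Real.exp (1/12) * (7/8))^N := by rw [Real.exp_nat_mul, mul_pow]
      _ ≤ (Real.exp (-(1/40)))^N := pow_le_pow_left₀ (by positivity) hfac2 N
      _ = Real.exp (-(1/10 * N / 4)) := by
          rw [← Real.exp_nat_mul]; congr 1; ring
      _ ≤ 2 * Real.exp (-(1/10 * N / 4)) := by nlinarith [Real.exp_pos (-(1/10 * (N:ℝ) / 4))]
  set B := {ω | S ω ≤ (N:ℝ)/2} with hB
  have hBmeas : MeasurableSet B := measurableSet_le hSmeas measurable_const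
  have hsub : Bᶜ ⊆ {ω | (1/2 : ℝ) * ‖G‖ ^ 2 ≤ (1/(N:ℝ)) * ∑ i, (⟪G, U i ω⟫:ℝ) ^ 2} := by
    intro ω hω
    simp only [hB, Set.mem_compl_iff, Set.mem_setOf_eq, not_le] at hω
    simp only [Set.mem_setOf_eq]
    have hsum : ∑ i : Fin N, (⟪G, U i ω⟫:ℝ) ^ 2 = ‖G‖ ^ 2 * S ω := by
      rw [hSapp, Finset.mul_sum]
      refine Finset.sum_congr rfl fun i _ => ?_
      have h3 : (⟪e, U i ω⟫:ℝ) = ‖G‖⁻¹ * ⟪G, U i ω⟫ := by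
        rw [he_def, real_inner_smul_left]
      show (⟪G, U i ω⟫:ℝ) ^ 2 = ‖G‖ ^ 2 * (⟪e, U i ω⟫:ℝ) ^ 2
      rw [h3]
      field_simp
    rw [hsum]
    have h2 : ‖G‖ ^ 2 * ((N:ℝ)/2) ≤ ‖G‖ ^ 2 * S ω :=
      mul_le_mul_of_nonneg_left hω.le (by positivity)
    calc (1/2:ℝ) * ‖G‖ ^ 2 = (1/(N:ℝ)) * (‖G‖ ^ 2 * ((N:ℝ)/2)) := by
          field_simp
      _ ≤ (1/(N:ℝ)) * (‖G‖ ^ 2 * S ω) := by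
          apply mul_le_mul_of_nonneg_left h2 (by positivity)
  have h1 : ℙ Bᶜ = 1 - ℙ B := by
    rw [measure_compl hBmeas (measure_ne_top _ _), measure_univ]
  have hPB : ℙ B ≤ ENNReal.ofReal (2 * Real.exp (-(1/10 * N / 4))) := by
    rw [← ENNReal.ofReal_toReal (measure_ne_top ℙ B)]
    exact ENNReal.ofReal_le_ofReal htotal
  calc ENNReal.ofReal (1 - 2 * Real.exp (-(1/10 * (N:ℝ) / 4)))
      = ENNReal.ofReal 1 - ENNReal.ofReal (2 * Real.exp (-(1/10 * N / 4))) :=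
        ENNReal.ofReal_sub 1 (by positivity)
    _ ≤ 1 - ℙ B := by rw [ENNReal.ofReal_one]; exact tsub_le_tsub_left hPB 1
    _ = ℙ Bᶜ := h1.symm
    _ ≤ ℙ {ω | (1/2 : ℝ) * ‖G‖ ^ 2 ≤ (1/(N:ℝ)) * ∑ i, (⟪G, U i ω⟫:ℝ) ^ 2} :=
        measure_mono hsub
end

section
/- There exists a universal constant c > 0 (independent of m, n, N) such that for all deterministic matrices W₁, …, W_N, G ∈ ℝ^{m×n}, with probability at least 1 − 2 exp(−c N): |(1/N) ∑_{i=1}^N ⟨W_i, U_i⟩ ⟨G, U_i⟩| ≤ 2 · max_{1 ≤ i ≤ N} ‖W_i‖_F · ‖G‖_F. -/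
open Real MeasureTheory RealInnerProductSpace
set_option linter.unusedSectionVars false

noncomputable def DF : ℕ → ℝ := fun k => ∏ j ∈ Finset.range k, (2*(j:ℝ)+1)

lemma DF_zero : DF 0 = 1 := by simp [DF]
lemma DF_succ (k : ℕ) : DF (k+1) = DF k * (2*k+1) := by
  simp [DF, Finset.prod_range_succ]
lemma DF_nonneg (k : ℕ) : 0 ≤ DF k := Finset.prod_nonneg (by intro j _; positivity)
lemma DF_one : DF 1 = 1 := by norm_num [DF]
lemma DF_two : DF 2 = 3 := by
  simp [DF, Finset.prod_range_succ]; norm_num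
lemma DF_three : DF 3 = 15 := by
  simp [DF, Finset.prod_range_succ]; norm_num

noncomputable def aseq : ℕ → ℝ := fun k => DF k / (4^k * k.factorial)

lemma aseq_zero : aseq 0 = 1 := by simp [aseq, DF_zero]
lemma aseq_three : aseq 3 = 5/128 := by
  rw [aseq, DF_three]; norm_num [Nat.factorial]

lemma aseq_nonneg (k : ℕ) : 0 ≤ aseq k :=
  div_nonneg (DF_nonneg k) (by positivity)

lemma aseq_succ_le (k : ℕ) : aseq (k+1) ≤ aseq k / 2 := by
  unfold aseq
  rw [DF_succ, Nat.factorial_succ, pow_succ]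
  have hX : (0:ℝ) < 4^k * k.factorial := by positivity
  rw [div_div, div_le_div_iff₀ (by positivity) (by positivity)]
  push_cast
  nlinarith [DF_nonneg k, hX, Nat.cast_nonneg (α := ℝ) k, mul_nonneg (DF_nonneg k) hX.le,
    mul_nonneg (mul_nonneg (DF_nonneg k) hX.le) (Nat.cast_nonneg (α := ℝ) k)]

lemma aseq_le_pow (k : ℕ) : aseq k ≤ (1/2:ℝ)^k := by
  induction k with
  | zero => simp [aseq_zero]
  | succ k ih =>
    calc aseq (k+1) ≤ aseq k / 2 := aseq_succ_le k
    _ ≤ ((1/2:ℝ)^k)/2 := by linarith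
    _ = (1/2:ℝ)^(k+1) := by ring

lemma aseq_le_geom (k : ℕ) : aseq (k+3) ≤ (5/128) * (1/2:ℝ)^k := by
  induction k with
  | zero => simp [aseq_three]
  | succ k ih =>
    calc aseq (k+1+3) = aseq (k+3+1) := by ring_nf
    _ ≤ aseq (k+3) / 2 := aseq_succ_le _
    _ ≤ ((5/128) * (1/2:ℝ)^k) / 2 := by linarith
    _ = (5/128) * (1/2:ℝ)^(k+1) := by ring

lemma summable_aseq : Summable aseq :=
  Summable.of_nonneg_of_le aseq_nonneg aseq_le_pow summable_geometric_two

lemma tsum_aseq_le : ∑' k, aseq k ≤ 91/64 := by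
  rw [← Summable.sum_add_tsum_nat_add 3 summable_aseq]
  have h1 : ∑ i ∈ Finset.range 3, aseq i = 43/32 := by
    rw [Finset.sum_range_succ, Finset.sum_range_succ, Finset.sum_range_succ,
      Finset.sum_range_zero]
    unfold aseq
    rw [DF_zero, DF_one, DF_two]
    norm_num [Nat.factorial]
  have h2 : ∑' k, aseq (k+3) ≤ ∑' k:ℕ, (5/128) * (1/2:ℝ)^k := by
    apply Summable.tsum_le_tsum aseq_le_geom (summable_aseq.comp_injective (add_left_injective 3))
    exact summable_geometric_two.mul_left _
  rw [tsum_mul_left, tsum_geometric_two] at h2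
  rw [h1]
  linarith

variable {F : Type*} [NormedAddCommGroup F] [InnerProductSpace ℝ F] [FiniteDimensional ℝ F]

lemma exists_rotation (p q : F) (hp : ‖p‖ = 1) (hq : ‖q‖ = 1) (hpq : ⟪p,q⟫ = 0)
    (c s : ℝ) (hcs : c^2 + s^2 = 1) :
    ∃ T : F ≃ₗᵢ[ℝ] F, ∀ u, ⟪p, T u⟫ = c*⟪p,u⟫ - s*⟪q,u⟫ ∧ ⟪q, T u⟫ = s*⟪p,u⟫ + c*⟪q,u⟫ := by
  have hpp : ⟪p,p⟫ = (1:ℝ) := by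
    rw [real_inner_self_eq_norm_sq, hp]; norm_num
  have hqq : ⟪q,q⟫ = (1:ℝ) := by
    rw [real_inner_self_eq_norm_sq, hq]; norm_num
  have hqp : ⟪q,p⟫ = (0:ℝ) := by rw [real_inner_comm]; exact hpq
  set L : F →ₗ[ℝ] F :=
    { toFun := fun u => u + ((c-1)*⟪p,u⟫ - s*⟪q,u⟫) • p + (s*⟪p,u⟫ + (c-1)*⟪q,u⟫) • q
      map_add' := by
        intro u v
        simp only [inner_add_right]
        module
      map_smul' := by
        intro r u
        simp only [inner_smul_right, RingHom.id_apply]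
        module } with hL
  have hLapp : ∀ u, L u = u + ((c-1)*⟪p,u⟫ - s*⟪q,u⟫) • p + (s*⟪p,u⟫ + (c-1)*⟪q,u⟫) • q :=
    fun u => rfl
  have key : ∀ u v, ⟪L u, L v⟫ = ⟪u, v⟫ := by
    intro u v
    rw [hLapp, hLapp]
    simp only [inner_add_left, inner_add_right, real_inner_smul_left, real_inner_smul_right,
      hpp, hqq, hpq, hqp, real_inner_comm u p, real_inner_comm u q]
    linear_combination ((⟪u,p⟫:ℝ) * ⟪p,v⟫ + (⟪u,q⟫:ℝ) * ⟪q,v⟫) * hcs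
  have hnorm : ∀ u, ‖L u‖ = ‖u‖ := by
    intro u
    have h2 : ‖L u‖^2 = ‖u‖^2 := by
      rw [← real_inner_self_eq_norm_sq, ← real_inner_self_eq_norm_sq, key]
    calc ‖L u‖ = √(‖L u‖^2) := (Real.sqrt_sq (norm_nonneg _)).symm
    _ = √(‖u‖^2) := by rw [h2]
    _ = ‖u‖ := Real.sqrt_sq (norm_nonneg _)
  set li : F →ₗᵢ[ℝ] F := ⟨L, hnorm⟩ with hli
  refine ⟨li.toLinearIsometryEquiv rfl, fun u => ?_⟩
  have happ : (li.toLinearIsometryEquiv rfl) u = L u := rfl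
  rw [happ, hLapp]
  constructor
  · simp only [inner_add_right, real_inner_smul_right, hpp, hpq]
    ring
  · simp only [inner_add_right, real_inner_smul_right, hqq, hqp]
    ring

lemma exists_reflection_map (x y : F) (hxy : ‖x‖ = ‖y‖) :
    ∃ T : F ≃ₗᵢ[ℝ] F, T x = y :=
  ⟨Submodule.reflection (ℝ ∙ (x - y))ᗮ, Submodule.reflection_sub hxy⟩

lemma parts_identity (a b : ℝ) (j : ℕ) :
    ∫ φ in (0:ℝ)..(2*π), (Real.cos φ * a - Real.sin φ * b)^(2*j+2)
      = (2*j+1) * ∫ φ in (0:ℝ)..(2*π),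
          (Real.cos φ * a - Real.sin φ * b)^(2*j) * (Real.sin φ * a + Real.cos φ * b)^2 := by
  set h : ℝ → ℝ := fun φ => Real.cos φ * a - Real.sin φ * b with hh
  set h' : ℝ → ℝ := fun φ => -(Real.sin φ * a + Real.cos φ * b) with hh'
  have hd : ∀ φ : ℝ, HasDerivAt h (h' φ) φ := by
    intro φ
    have := ((Real.hasDerivAt_cos φ).mul_const a).sub ((Real.hasDerivAt_sin φ).mul_const b)
    rw [hh, hh']
    exact this.congr_deriv (by beta_reduce; ring)
  have hd' : ∀ φ : ℝ, HasDerivAt h' (-(h φ)) φ := by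
    intro φ
    have := (((Real.hasDerivAt_sin φ).mul_const a).add
      ((Real.hasDerivAt_cos φ).mul_const b)).neg
    rw [hh, hh']
    exact this.congr_deriv (by beta_reduce; ring)
  have hF : ∀ φ : ℝ, HasDerivAt (fun φ => (h φ)^(2*j+1) * h' φ)
      ((2*j+1) * (h φ)^(2*j) * (h' φ)^2 - (h φ)^(2*j+2)) φ := by
    intro φ
    have h1 := ((hd φ).pow (2*j+1)).mul (hd' φ)
    have h2 : ((2*j+1 : ℕ) : ℝ) * h φ ^ (2*j+1-1) * h' φ * h' φ + h φ ^ (2*j+1) * -h φ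
        = (2*j+1) * (h φ)^(2*j) * (h' φ)^2 - (h φ)^(2*j+2) := by
      rw [show 2*j+1-1 = 2*j from rfl]
      push_cast
      ring
    rw [Pi.pow_apply, h2] at h1; exact h1
  have hcont : Continuous fun φ => (2*(j:ℝ)+1) * (h φ)^(2*j) * (h' φ)^2 - (h φ)^(2*j+2) := by
    fun_prop
  have hint := intervalIntegral.integral_eq_sub_of_hasDerivAt
    (f := fun φ => (h φ)^(2*j+1) * h' φ)
    (fun φ _ => hF φ) (hcont.intervalIntegrable 0 (2*π))
  have hzero : (fun φ => (h φ)^(2*j+1) * h' φ) (2*π) - (fun φ => (h φ)^(2*j+1) * h' φ) 0 = 0 := by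
    simp [hh, hh', Real.cos_two_pi, Real.sin_two_pi]
  rw [hzero] at hint
  have hsplit : ∫ φ in (0:ℝ)..(2*π), ((2*(j:ℝ)+1) * (h φ)^(2*j) * (h' φ)^2 - (h φ)^(2*j+2))
      = (2*(j:ℝ)+1) * (∫ φ in (0:ℝ)..(2*π), (h φ)^(2*j) * (h' φ)^2)
        - ∫ φ in (0:ℝ)..(2*π), (h φ)^(2*j+2) := by
    rw [intervalIntegral.integral_sub ((by fun_prop : Continuous fun φ =>
        (2*(j:ℝ)+1) * (h φ)^(2*j) * (h' φ)^2).intervalIntegrable 0 (2*π))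
      ((by fun_prop : Continuous fun φ => (h φ)^(2*j+2)).intervalIntegrable 0 (2*π))]
    congr 1
    have e : (fun φ => (2*(j:ℝ)+1) * (h φ)^(2*j) * (h' φ)^2)
        = fun φ => (2*(j:ℝ)+1) * ((h φ)^(2*j) * (h' φ)^2) := by funext φ; ring
    rw [e, intervalIntegral.integral_const_mul]
  have e1 : (∫ φ in (0:ℝ)..(2*π), (h φ)^(2*j) * (h' φ)^2)
      = ∫ φ in (0:ℝ)..(2*π), (h φ)^(2*j) * (Real.sin φ * a + Real.cos φ * b)^2 := by
    apply intervalIntegral.integral_congr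
    intro φ _
    simp only [hh']
    ring
  rw [hsplit, e1] at hint
  linarith [hint]

variable {F : Type*} [NormedAddCommGroup F] [InnerProductSpace ℝ F] [FiniteDimensional ℝ F]
  [MeasurableSpace F] [BorelSpace F]

lemma ae_norm_eq (μ : Measure F) [IsProbabilityMeasure μ] (r : ℝ)
    (hsph : μ (Metric.sphere (0:F) r) = 1) : ∀ᵐ u ∂μ, ‖u‖ = r := by
  rw [ae_iff]
  have hset : {u : F | ¬ ‖u‖ = r} = (Metric.sphere (0:F) r)ᶜ := by
    ext u; simp [mem_sphere_iff_norm]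
  rw [hset, measure_compl Metric.isClosed_sphere.measurableSet (measure_ne_top μ _), hsph,
    measure_univ, tsub_self]

lemma integrable_of_sphere_bound (μ : Measure F) [IsProbabilityMeasure μ] (r : ℝ)
    (hsph : μ (Metric.sphere (0:F) r) = 1) {f : F → ℝ} (hfc : Continuous f) {C : ℝ}
    (hC : ∀ u : F, ‖u‖ = r → |f u| ≤ C) : Integrable f μ := by
  refine (integrable_const C).mono' hfc.aestronglyMeasurable ?_
  filter_upwards [ae_norm_eq μ r hsph] with u hu
  rw [Real.norm_eq_abs]
  exact hC u hu

lemma integral_le_of_sphere_bound (μ : Measure F) [IsProbabilityMeasure μ] (r : ℝ)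
    (hsph : μ (Metric.sphere (0:F) r) = 1) {f : F → ℝ} (hfc : Continuous f) {C : ℝ}
    (hC : ∀ u : F, ‖u‖ = r → |f u| ≤ C) : ∫ u, f u ∂μ ≤ C := by
  calc ∫ u, f u ∂μ ≤ ∫ _u, C ∂μ := by
        refine integral_mono_ae (integrable_of_sphere_bound μ r hsph hfc hC)
          (integrable_const C) ?_
        filter_upwards [ae_norm_eq μ r hsph] with u hu
        exact (le_abs_self _).trans (hC u hu)
  _ = C := by simp

lemma integral_comp_isometry (μ : Measure F)
    (hinv : ∀ T : F ≃ₗᵢ[ℝ] F, μ.map T = μ) (T : F ≃ₗᵢ[ℝ] F) {f : F → ℝ}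
    (hf : Continuous f) : ∫ u, f (T u) ∂μ = ∫ u, f u ∂μ := by
  conv_rhs => rw [← hinv T]
  rw [integral_map T.continuous.measurable.aemeasurable]
  rw [hinv T]
  exact hf.aestronglyMeasurable

section ratio

variable {F : Type*} [NormedAddCommGroup F] [InnerProductSpace ℝ F] [FiniteDimensional ℝ F]
  [MeasurableSpace F] [BorelSpace F]

lemma moment_ratio (μ : Measure F) [IsProbabilityMeasure μ] (r : ℝ) (hr : 0 ≤ r)
    (hsph : μ (Metric.sphere (0:F) r) = 1)
    (hinv : ∀ T : F ≃ₗᵢ[ℝ] F, μ.map T = μ)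
    (j : ℕ) (p q : F) (hp : ‖p‖ = 1) (hq : ‖q‖ = 1) (hpq : ⟪p,q⟫ = 0) :
    ∫ u, ⟪p,u⟫^(2*j+2) ∂μ = (2*j+1) * ∫ u, ⟪p,u⟫^(2*j) * ⟪q,u⟫^2 ∂μ := by
  have hAc : Continuous fun u : F => ⟪p,u⟫ := continuous_const.inner continuous_id
  have hBc : Continuous fun u : F => ⟪q,u⟫ := continuous_const.inner continuous_id
  -- invariance identities
  have h1 : ∀ φ : ℝ, ∫ u, (cos φ * ⟪p,u⟫ - sin φ * ⟪q,u⟫)^(2*j+2) ∂μ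
      = ∫ u, ⟪p,u⟫^(2*j+2) ∂μ := by
    intro φ
    obtain ⟨T, hT⟩ := exists_rotation p q hp hq hpq (cos φ) (sin φ)
      (by rw [cos_sq_add_sin_sq])
    have := integral_comp_isometry μ hinv T (f := fun u => ⟪p,u⟫^(2*j+2)) (by fun_prop)
    rw [← this]
    apply integral_congr_ae
    filter_upwards with u
    rw [(hT u).1]
  have h2 : ∀ φ : ℝ, ∫ u, (cos φ * ⟪p,u⟫ - sin φ * ⟪q,u⟫)^(2*j)
        * (sin φ * ⟪p,u⟫ + cos φ * ⟪q,u⟫)^2 ∂μ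
      = ∫ u, ⟪p,u⟫^(2*j) * ⟪q,u⟫^2 ∂μ := by
    intro φ
    obtain ⟨T, hT⟩ := exists_rotation p q hp hq hpq (cos φ) (sin φ)
      (by rw [cos_sq_add_sin_sq])
    have := integral_comp_isometry μ hinv T (f := fun u => ⟪p,u⟫^(2*j) * ⟪q,u⟫^2)
      (by fun_prop)
    rw [← this]
    apply integral_congr_ae
    filter_upwards with u
    rw [(hT u).1, (hT u).2]
  -- product integrability
  have hprodae : ∀ᵐ z ∂((volume.restrict (Set.Ioc (0:ℝ) (2*π))).prod μ), ‖z.2‖ = r := by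
    rw [ae_iff]
    have hset : {z : ℝ × F | ¬ ‖z.2‖ = r} = Set.univ ×ˢ {u : F | ¬ ‖u‖ = r} := by
      ext z; simp
    rw [hset, Measure.prod_prod]
    have h0 : μ {u : F | ¬ ‖u‖ = r} = 0 := ae_iff.mp (ae_norm_eq μ r hsph)
    rw [h0, mul_zero]
  have habs : ∀ (φ : ℝ) (u : F), ‖u‖ = r → |cos φ * ⟪p,u⟫ - sin φ * ⟪q,u⟫| ≤ 2*r ∧
      |sin φ * ⟪p,u⟫ + cos φ * ⟪q,u⟫| ≤ 2*r := by
    intro φ u hu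
    have e1 : |⟪p,u⟫| ≤ r := by
      have := abs_real_inner_le_norm p u
      rwa [hp, one_mul, hu] at this
    have e2 : |⟪q,u⟫| ≤ r := by
      have := abs_real_inner_le_norm q u
      rwa [hq, one_mul, hu] at this
    have b1 : |cos φ * ⟪p,u⟫| ≤ r := by
      rw [abs_mul]
      have := mul_le_mul (abs_cos_le_one φ) e1 (abs_nonneg _) zero_le_one
      rwa [one_mul] at this
    have b2 : |sin φ * ⟪q,u⟫| ≤ r := by
      rw [abs_mul]
      have := mul_le_mul (abs_sin_le_one φ) e2 (abs_nonneg _) zero_le_one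
      rwa [one_mul] at this
    have b3 : |sin φ * ⟪p,u⟫| ≤ r := by
      rw [abs_mul]
      have := mul_le_mul (abs_sin_le_one φ) e1 (abs_nonneg _) zero_le_one
      rwa [one_mul] at this
    have b4 : |cos φ * ⟪q,u⟫| ≤ r := by
      rw [abs_mul]
      have := mul_le_mul (abs_cos_le_one φ) e2 (abs_nonneg _) zero_le_one
      rwa [one_mul] at this
    constructor
    · have h := abs_sub (cos φ * ⟪p,u⟫) (sin φ * ⟪q,u⟫)
      linarith
    · have h := abs_add_le (sin φ * ⟪p,u⟫) (cos φ * ⟪q,u⟫)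
      linarith
  set ρ : Measure ℝ := volume.restrict (Set.Ioc (0:ℝ) (2*π)) with hρdef
  set Fn : ℝ → F → ℝ := fun φ u => (cos φ * ⟪p,u⟫ - sin φ * ⟪q,u⟫)^(2*j+2) with hFn
  set Gn : ℝ → F → ℝ := fun φ u => (cos φ * ⟪p,u⟫ - sin φ * ⟪q,u⟫)^(2*j)
      * (sin φ * ⟪p,u⟫ + cos φ * ⟪q,u⟫)^2 with hGn
  have hFc : Continuous (Function.uncurry Fn) := by
    rw [hFn]; unfold Function.uncurry; fun_prop
  have hGc : Continuous (Function.uncurry Gn) := by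
    rw [hGn]; unfold Function.uncurry; fun_prop
  have hFint : Integrable (Function.uncurry Fn) (ρ.prod μ) := by
    refine (integrable_const ((2*r)^(2*j+2))).mono' hFc.aestronglyMeasurable ?_
    filter_upwards [hprodae] with z hz
    rw [Real.norm_eq_abs, Function.uncurry, hFn, abs_pow]
    exact pow_le_pow_left₀ (abs_nonneg _) ((habs z.1 z.2 hz).1) _
  have hGint : Integrable (Function.uncurry Gn) (ρ.prod μ) := by
    refine (integrable_const ((2*r)^(2*j) * (2*r)^2)).mono' hGc.aestronglyMeasurable ?_
    filter_upwards [hprodae] with z hz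
    rw [Real.norm_eq_abs, Function.uncurry, hGn, abs_mul, abs_pow, abs_pow]
    exact mul_le_mul (pow_le_pow_left₀ (abs_nonneg _) (habs z.1 z.2 hz).1 _)
      (pow_le_pow_left₀ (abs_nonneg _) (habs z.1 z.2 hz).2 _) (by positivity) (by positivity)
  have hρuniv : (ρ Set.univ).toReal = 2*π := by
    rw [hρdef, Measure.restrict_apply_univ, Real.volume_Ioc]
    rw [ENNReal.toReal_ofReal (by nlinarith [Real.pi_pos])]
    ring
  have lhs1 : ∫ φ, (∫ u, Fn φ u ∂μ) ∂ρ = (2*π) * ∫ u, ⟪p,u⟫^(2*j+2) ∂μ := by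
    calc ∫ φ, (∫ u, Fn φ u ∂μ) ∂ρ = ∫ _φ, (∫ u, ⟪p,u⟫^(2*j+2) ∂μ) ∂ρ :=
          integral_congr_ae (ae_of_all _ h1)
    _ = (ρ Set.univ).toReal • ∫ u, ⟪p,u⟫^(2*j+2) ∂μ := integral_const _
    _ = (2*π) * ∫ u, ⟪p,u⟫^(2*j+2) ∂μ := by rw [hρuniv, smul_eq_mul]
  have rhs1 : ∫ φ, (∫ u, Gn φ u ∂μ) ∂ρ = (2*π) * ∫ u, ⟪p,u⟫^(2*j) * ⟪q,u⟫^2 ∂μ := by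
    calc ∫ φ, (∫ u, Gn φ u ∂μ) ∂ρ = ∫ _φ, (∫ u, ⟪p,u⟫^(2*j) * ⟪q,u⟫^2 ∂μ) ∂ρ :=
          integral_congr_ae (ae_of_all _ h2)
    _ = (ρ Set.univ).toReal • ∫ u, ⟪p,u⟫^(2*j) * ⟪q,u⟫^2 ∂μ := integral_const _
    _ = (2*π) * ∫ u, ⟪p,u⟫^(2*j) * ⟪q,u⟫^2 ∂μ := by rw [hρuniv, smul_eq_mul]
  have mid : ∀ u : F, ∫ φ, Fn φ u ∂ρ = (2*j+1) * ∫ φ, Gn φ u ∂ρ := by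
    intro u
    have e1 : ∫ φ, Fn φ u ∂ρ = ∫ φ in (0:ℝ)..(2*π), Fn φ u := by
      rw [intervalIntegral.integral_of_le (by positivity : (0:ℝ) ≤ 2*π)]
    have e2 : ∫ φ, Gn φ u ∂ρ = ∫ φ in (0:ℝ)..(2*π), Gn φ u := by
      rw [intervalIntegral.integral_of_le (by positivity : (0:ℝ) ≤ 2*π)]
    rw [e1, e2, hFn, hGn]
    exact parts_identity (⟪p,u⟫) (⟪q,u⟫) j
  have swap1 := MeasureTheory.integral_integral_swap (f := Fn) hFint
  have swap2 := MeasureTheory.integral_integral_swap (f := Gn) hGint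
  have key : (2*π) * ∫ u, ⟪p,u⟫^(2*j+2) ∂μ
      = (2*π) * ((2*j+1) * ∫ u, ⟪p,u⟫^(2*j) * ⟪q,u⟫^2 ∂μ) := by
    calc (2*π) * ∫ u, ⟪p,u⟫^(2*j+2) ∂μ = ∫ φ, (∫ u, Fn φ u ∂μ) ∂ρ := lhs1.symm
    _ = ∫ u, (∫ φ, Fn φ u ∂ρ) ∂μ := swap1
    _ = ∫ u, (2*j+1) * (∫ φ, Gn φ u ∂ρ) ∂μ := by
        apply integral_congr_ae
        filter_upwards with u
        rw [mid u]
    _ = (2*j+1) * ∫ u, (∫ φ, Gn φ u ∂ρ) ∂μ := integral_const_mul _ _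
    _ = (2*j+1) * ∫ φ, (∫ u, Gn φ u ∂μ) ∂ρ := by rw [swap2]
    _ = (2*j+1) * ((2*π) * ∫ u, ⟪p,u⟫^(2*j) * ⟪q,u⟫^2 ∂μ) := by rw [rhs1]
    _ = (2*π) * ((2*j+1) * ∫ u, ⟪p,u⟫^(2*j) * ⟪q,u⟫^2 ∂μ) := by ring
  exact mul_left_cancel₀ (by positivity : (2*π) ≠ 0) key

end ratio

section moments

variable {ι : Type*} [Fintype ι] [Nonempty ι] [DecidableEq ι]

local notation "Esp" => EuclideanSpace ℝ ι
local notation "esing" i => EuclideanSpace.single i (1:ℝ)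
local notation "rad" => Real.sqrt (Fintype.card ι)

lemma esing_norm (i : ι) : ‖(esing i)‖ = 1 := by
  rw [EuclideanSpace.norm_single, norm_one]

lemma esing_inner (i : ι) (u : Esp) : ⟪(esing i), u⟫ = u i := by
  rw [EuclideanSpace.inner_single_left]
  simp

lemma esing_orth {i a : ι} (h : a ≠ i) : ⟪(esing i), (esing a)⟫ = 0 := by
  rw [esing_inner, EuclideanSpace.single_apply, if_neg fun hh => h hh.symm]

lemma inner_sphere_bound (θ : Esp) (u : Esp) (hu : ‖u‖ = rad) :
    |⟪θ, u⟫| ≤ ‖θ‖ * rad := by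
  have := abs_real_inner_le_norm θ u
  rwa [hu] at this

lemma moment_single_le (μ : Measure Esp) [IsProbabilityMeasure μ]
    (hsph : μ (Metric.sphere (0:Esp) rad) = 1)
    (hinv : ∀ T : Esp ≃ₗᵢ[ℝ] Esp, μ.map T = μ) (i₀ : ι) :
    ∀ k : ℕ, ∫ u, ⟪(esing i₀), u⟫^(2*k) ∂μ ≤ DF k := by
  have hrad : (0:ℝ) ≤ rad := Real.sqrt_nonneg _
  intro k
  induction k with
  | zero => simp [DF_zero]
  | succ k ih =>
    set Mk := ∫ u, ⟪(esing i₀), u⟫^(2*k) ∂μ with hMk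
    set I1 := ∫ u, ⟪(esing i₀), u⟫^(2*(k+1)) ∂μ with hI1
    have hMknn : 0 ≤ Mk := by
      apply integral_nonneg
      intro u
      dsimp only
      rw [pow_mul]
      exact pow_nonneg (sq_nonneg _) k
    have hI1nn : 0 ≤ I1 := by
      apply integral_nonneg
      intro u
      dsimp only
      rw [pow_mul]
      exact pow_nonneg (sq_nonneg _) (k+1)
    -- integrability of terms
    have hcoord : ∀ a : ι, Continuous fun u : Esp => u a := by
      intro a
      have := (continuous_const.inner continuous_id : Continuous fun u : Esp => ⟪(esing a), u⟫)
      simpa [esing_inner] using this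
    have hterm_int : ∀ a : ι, Integrable (fun u : Esp => (u a)^2 * ⟪(esing i₀), u⟫^(2*k)) μ := by
      intro a
      refine integrable_of_sphere_bound μ rad hsph
        (((hcoord a).pow 2).mul ((continuous_const.inner continuous_id).pow (2*k)))
        (C := rad^2 * rad^(2*k)) ?_
      intro u hu
      rw [abs_mul, abs_pow, abs_pow]
      have hb1 : |u a| ≤ rad := by
        rw [← esing_inner a u]
        have := inner_sphere_bound (esing a) u hu
        rwa [esing_norm, one_mul] at this
      have hb2 : |⟪(esing i₀), u⟫| ≤ rad := by
        have := inner_sphere_bound (esing i₀) u hu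
        rwa [esing_norm, one_mul] at this
      gcongr <;> first | exact hb1 | exact hb2 | positivity
    -- the sum relation
    have key : (Fintype.card ι : ℝ) * Mk
        = ∑ a, ∫ u, (u a)^2 * ⟪(esing i₀), u⟫^(2*k) ∂μ := by
      rw [← integral_finset_sum _ (fun a _ => hterm_int a)]
      rw [hMk, ← integral_const_mul]
      apply integral_congr_ae
      filter_upwards [ae_norm_eq μ rad hsph] with u hu
      have hsum : ∑ a, (u a)^2 = (Fintype.card ι : ℝ) := by
        have h1 : ‖u‖^2 = (rad)^2 := by rw [hu]
        rw [EuclideanSpace.norm_eq] at h1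
        rw [Real.sq_sqrt (by positivity), Real.sq_sqrt (by positivity)] at h1
        simpa [sq_abs] using h1
      rw [← Finset.sum_mul, hsum]
    -- identify the term at i₀
    have hterm_i0 : ∫ u, (u i₀)^2 * ⟪(esing i₀), u⟫^(2*k) ∂μ = I1 := by
      rw [hI1]
      apply integral_congr_ae
      filter_upwards with u
      rw [← esing_inner i₀ u]
      ring
    -- other terms
    have hterm_ne : ∀ a ∈ Finset.univ.erase i₀,
        (2*(k:ℝ)+1) * ∫ u, (u a)^2 * ⟪(esing i₀), u⟫^(2*k) ∂μ = I1 := by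
      intro a ha
      have hane : a ≠ i₀ := Finset.ne_of_mem_erase ha
      have hratio := moment_ratio μ rad hrad hsph hinv k (esing i₀) (esing a)
        (esing_norm i₀) (esing_norm a) (esing_orth hane)
      have e : ∫ u, (u a)^2 * ⟪(esing i₀), u⟫^(2*k) ∂μ
          = ∫ u, ⟪(esing i₀), u⟫^(2*k) * ⟪(esing a), u⟫^2 ∂μ := by
        apply integral_congr_ae
        filter_upwards with u
        rw [esing_inner a u]
        ring
      rw [e, ← hratio, hI1, show 2*(k+1) = 2*k+2 from by ring]
    -- combine
    rw [← Finset.add_sum_erase _ _ (Finset.mem_univ i₀), hterm_i0] at key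
    have hcard1 : (1:ℕ) ≤ Fintype.card ι := Fintype.card_pos
    have hsum_ne : ∑ a ∈ Finset.univ.erase i₀, ∫ u, (u a)^2 * ⟪(esing i₀), u⟫^(2*k) ∂μ
        = ((Fintype.card ι : ℝ) - 1) * (I1 / (2*(k:ℝ)+1)) := by
      have : ∀ a ∈ Finset.univ.erase i₀,
          ∫ u, (u a)^2 * ⟪(esing i₀), u⟫^(2*k) ∂μ = I1 / (2*(k:ℝ)+1) := by
        intro a ha
        have h := hterm_ne a ha
        have h2 : (2*(k:ℝ)+1) ≠ 0 := by positivity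
        rw [eq_div_iff h2]
        linear_combination h
      rw [Finset.sum_congr rfl this, Finset.sum_const, Finset.card_erase_of_mem
        (Finset.mem_univ i₀), Finset.card_univ, nsmul_eq_mul]
      rw [Nat.cast_sub hcard1]
      norm_num
    rw [hsum_ne] at key
    -- now key : card * Mk = I1 + (card - 1) * (I1/(2k+1))
    have hc : (1:ℝ) ≤ (Fintype.card ι : ℝ) := by exact_mod_cast hcard1
    have hknn : (0:ℝ) ≤ 2*(k:ℝ)+1 := by positivity
    have hI1le : I1 ≤ (2*(k:ℝ)+1) * Mk := by
      have hdiv : (Fintype.card ι : ℝ) * ((2*(k:ℝ)+1) * Mk)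
          = I1 * (2*(k:ℝ) + (Fintype.card ι : ℝ)) := by
        have h2 : (2*(k:ℝ)+1) ≠ 0 := by positivity
        field_simp at key ⊢
        nlinarith [key]
      nlinarith [hI1nn, hc, hdiv, Nat.cast_nonneg (α := ℝ) k]
    calc I1 ≤ (2*(k:ℝ)+1) * Mk := hI1le
    _ ≤ (2*(k:ℝ)+1) * DF k := by nlinarith [ih]
    _ = DF (k+1) := by rw [DF_succ]; ring

lemma unit_moment_le (μ : Measure Esp) [IsProbabilityMeasure μ]
    (hsph : μ (Metric.sphere (0:Esp) rad) = 1)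
    (hinv : ∀ T : Esp ≃ₗᵢ[ℝ] Esp, μ.map T = μ) (p : Esp) (hp : ‖p‖ = 1) (k : ℕ) :
    ∫ u, ⟪p, u⟫^(2*k) ∂μ ≤ DF k := by
  have i₀ : ι := Classical.arbitrary ι
  obtain ⟨T, hT⟩ := exists_reflection_map (esing i₀) p (by rw [esing_norm, hp])
  have hcomp := integral_comp_isometry μ hinv T (f := fun u => ⟪p, u⟫^(2*k))
    ((continuous_const.inner continuous_id).pow _)
  rw [← hcomp]
  have e : ∀ u : Esp, ⟪p, T u⟫^(2*k) = ⟪(esing i₀), u⟫^(2*k) := by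
    intro u
    rw [← hT, LinearIsometryEquiv.inner_map_map]
  calc ∫ u, ⟪p, T u⟫^(2*k) ∂μ = ∫ u, ⟪(esing i₀), u⟫^(2*k) ∂μ := by
        apply integral_congr_ae
        filter_upwards with u
        rw [e u]
  _ ≤ DF k := moment_single_le μ hsph hinv i₀ k

lemma moment_le (μ : Measure Esp) [IsProbabilityMeasure μ]
    (hsph : μ (Metric.sphere (0:Esp) rad) = 1)
    (hinv : ∀ T : Esp ≃ₗᵢ[ℝ] Esp, μ.map T = μ) (θ : Esp) (k : ℕ) :
    ∫ u, ⟪θ, u⟫^(2*k) ∂μ ≤ DF k * ‖θ‖^(2*k) := by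
  rcases eq_or_ne θ 0 with h0 | h0
  · subst h0
    rcases Nat.eq_zero_or_pos k with hk | hk
    · subst hk
      simp [DF_zero]
    · have h2k : 2*k ≠ 0 := by omega
      simp [zero_pow h2k, DF_zero]
  · have hnθ : ‖θ‖ ≠ 0 := norm_ne_zero_iff.mpr h0
    set p : Esp := ‖θ‖⁻¹ • θ with hpdef
    have hp : ‖p‖ = 1 := norm_smul_inv_norm h0
    have hθp : ∀ u : Esp, ⟪θ, u⟫ = ‖θ‖ * ⟪p, u⟫ := by
      intro u
      rw [hpdef, real_inner_smul_left]
      field_simp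
    calc ∫ u, ⟪θ, u⟫^(2*k) ∂μ = ∫ u, ‖θ‖^(2*k) * ⟪p, u⟫^(2*k) ∂μ := by
          apply integral_congr_ae
          filter_upwards with u
          rw [hθp u, mul_pow]
    _ = ‖θ‖^(2*k) * ∫ u, ⟪p, u⟫^(2*k) ∂μ := integral_const_mul _ _
    _ ≤ ‖θ‖^(2*k) * DF k := by
        have := unit_moment_le μ hsph hinv p hp k
        have hn : (0:ℝ) ≤ ‖θ‖^(2*k) := by positivity
        nlinarith
    _ = DF k * ‖θ‖^(2*k) := by ring

lemma integrable_inner_pow (μ : Measure Esp) [IsProbabilityMeasure μ]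
    (hsph : μ (Metric.sphere (0:Esp) rad) = 1) (θ : Esp) (k : ℕ) :
    Integrable (fun u : Esp => ⟪θ, u⟫^k) μ := by
  refine integrable_of_sphere_bound μ rad hsph
    ((continuous_const.inner continuous_id).pow k) (C := (‖θ‖ * rad)^k) ?_
  intro u hu
  rw [abs_pow]
  exact pow_le_pow_left₀ (abs_nonneg _) (inner_sphere_bound θ u hu) _

lemma integrable_absprod_pow (μ : Measure Esp) [IsProbabilityMeasure μ]
    (hsph : μ (Metric.sphere (0:Esp) rad) = 1) (Wv Gv : Esp) (k : ℕ) :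
    Integrable (fun u : Esp => |⟪Wv, u⟫ * ⟪Gv, u⟫|^k) μ := by
  refine integrable_of_sphere_bound μ rad hsph
    ((((continuous_const.inner continuous_id).mul
      (continuous_const.inner continuous_id)).abs).pow k)
    (C := ((‖Wv‖ * rad) * (‖Gv‖ * rad))^k) ?_
  intro u hu
  rw [abs_pow, abs_abs, abs_mul]
  refine pow_le_pow_left₀ (by positivity) ?_ _
  exact mul_le_mul (inner_sphere_bound Wv u hu) (inner_sphere_bound Gv u hu)
    (abs_nonneg _) (by positivity)

lemma prod_moment_le (μ : Measure Esp) [IsProbabilityMeasure μ]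
    (hsph : μ (Metric.sphere (0:Esp) rad) = 1)
    (hinv : ∀ T : Esp ≃ₗᵢ[ℝ] Esp, μ.map T = μ) (Wv Gv : Esp) (k : ℕ) :
    ∫ u, |⟪Wv, u⟫ * ⟪Gv, u⟫|^k ∂μ ≤ DF k * (‖Wv‖ * ‖Gv‖)^k := by
  rcases eq_or_ne (‖Wv‖ * ‖Gv‖) 0 with hz | hz
  · rcases Nat.eq_zero_or_pos k with hk | hk
    · subst hk
      simp [DF_zero]
    · have hk0 : k ≠ 0 := by omega
      rw [hz, zero_pow hk0, mul_zero]
      have : ∀ u : Esp, |⟪Wv, u⟫ * ⟪Gv, u⟫|^k = 0 := by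
        intro u
        rcases mul_eq_zero.mp hz with h | h
        · rw [norm_eq_zero.mp h]
          simp [zero_pow hk0]
        · rw [norm_eq_zero.mp h]
          simp [zero_pow hk0]
      rw [integral_congr_ae (ae_of_all _ this)]
      simp
  · have hW : ‖Wv‖ ≠ 0 := fun h => hz (by rw [h, zero_mul])
    have hG : ‖Gv‖ ≠ 0 := fun h => hz (by rw [h, mul_zero])
    have hWpos : 0 < ‖Wv‖ := lt_of_le_of_ne (norm_nonneg _) (Ne.symm hW)
    have hGpos : 0 < ‖Gv‖ := lt_of_le_of_ne (norm_nonneg _) (Ne.symm hG)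
    set t : ℝ := Real.sqrt (‖Gv‖ / ‖Wv‖) with htdef
    have htpos : 0 < t := Real.sqrt_pos.mpr (by positivity)
    have ht2 : t^2 = ‖Gv‖ / ‖Wv‖ := Real.sq_sqrt (by positivity)
    have habs_even : ∀ (x : ℝ) (c : ℝ), (c^k * |x|^k)^2 = (c^2)^k * x^(2*k) := by
      intro x c
      rw [pow_mul, ← sq_abs x]
      ring
    have httinv : t^k * (t⁻¹)^k = 1 := by
      rw [← mul_pow, mul_inv_cancel₀ htpos.ne', one_pow]
    have hpoint : ∀ u : Esp, |⟪Wv, u⟫ * ⟪Gv, u⟫|^k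
        ≤ ((t^2)^k * ⟪Wv, u⟫^(2*k) + ((t⁻¹)^2)^k * ⟪Gv, u⟫^(2*k))/2 := by
      intro u
      set P : ℝ := t^k * |⟪Wv, u⟫|^k with hP
      set Q : ℝ := (t⁻¹)^k * |⟪Gv, u⟫|^k with hQ
      have hPQ : P * Q = |⟪Wv, u⟫ * ⟪Gv, u⟫|^k := by
        calc P * Q = (t^k * (t⁻¹)^k) * (|⟪Wv, u⟫|^k * |⟪Gv, u⟫|^k) := by rw [hP, hQ]; ring
        _ = |⟪Wv, u⟫|^k * |⟪Gv, u⟫|^k := by rw [httinv, one_mul]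
        _ = |⟪Wv, u⟫ * ⟪Gv, u⟫|^k := by rw [abs_mul, mul_pow]
      have hP2 : P^2 = (t^2)^k * ⟪Wv, u⟫^(2*k) := habs_even _ _
      have hQ2 : Q^2 = ((t⁻¹)^2)^k * ⟪Gv, u⟫^(2*k) := habs_even _ _
      rw [← hPQ, ← hP2, ← hQ2]
      nlinarith [sq_nonneg (P - Q)]
    have hintW := integrable_inner_pow μ hsph Wv (2*k)
    have hintG := integrable_inner_pow μ hsph Gv (2*k)
    have hintRHS : Integrable (fun u : Esp =>
        ((t^2)^k * ⟪Wv, u⟫^(2*k) + ((t⁻¹)^2)^k * ⟪Gv, u⟫^(2*k))/2) μ :=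
      ((hintW.const_mul _).add (hintG.const_mul _)).div_const 2
    have hc1 : (0:ℝ) ≤ (t^2)^k := by positivity
    have hc2 : (0:ℝ) ≤ ((t⁻¹)^2)^k := by positivity
    have hmW := moment_le μ hsph hinv Wv k
    have hmG := moment_le μ hsph hinv Gv k
    calc ∫ u, |⟪Wv, u⟫ * ⟪Gv, u⟫|^k ∂μ
        ≤ ∫ u, ((t^2)^k * ⟪Wv, u⟫^(2*k) + ((t⁻¹)^2)^k * ⟪Gv, u⟫^(2*k))/2 ∂μ :=
          integral_mono_ae (integrable_absprod_pow μ hsph Wv Gv k) hintRHS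
            (ae_of_all _ hpoint)
    _ = ((t^2)^k * ∫ u, ⟪Wv, u⟫^(2*k) ∂μ + ((t⁻¹)^2)^k * ∫ u, ⟪Gv, u⟫^(2*k) ∂μ)/2 := by
        rw [integral_div, integral_add (hintW.const_mul _) (hintG.const_mul _),
          integral_const_mul, integral_const_mul]
    _ ≤ ((t^2)^k * (DF k * ‖Wv‖^(2*k)) + ((t⁻¹)^2)^k * (DF k * ‖Gv‖^(2*k)))/2 := by
        have b1 := mul_le_mul_of_nonneg_left hmW hc1
        have b2 := mul_le_mul_of_nonneg_left hmG hc2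
        linarith
    _ = DF k * (‖Wv‖ * ‖Gv‖)^k := by
        have e1 : (t^2)^k * ‖Wv‖^(2*k) = (‖Wv‖ * ‖Gv‖)^k := by
          rw [pow_mul, ← mul_pow, ht2]
          congr 1
          field_simp
        have e2 : ((t⁻¹)^2)^k * ‖Gv‖^(2*k) = (‖Wv‖ * ‖Gv‖)^k := by
          rw [pow_mul, ← mul_pow]
          congr 1
          rw [inv_pow, ht2]
          field_simp
        calc ((t^2)^k * (DF k * ‖Wv‖^(2*k)) + ((t⁻¹)^2)^k * (DF k * ‖Gv‖^(2*k)))/2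
            = (DF k * ((t^2)^k * ‖Wv‖^(2*k)) + DF k * (((t⁻¹)^2)^k * ‖Gv‖^(2*k)))/2 := by ring
        _ = DF k * (‖Wv‖ * ‖Gv‖)^k := by rw [e1, e2]; ring

lemma mgf_integral_le (μ : Measure Esp) [IsProbabilityMeasure μ]
    (hsph : μ (Metric.sphere (0:Esp) rad) = 1)
    (hinv : ∀ T : Esp ≃ₗᵢ[ℝ] Esp, μ.map T = μ) (Wv Gv : Esp) (s : ℝ)
    (hs : |s| * (‖Wv‖ * ‖Gv‖) ≤ 1/4) :
    ∫ u, Real.exp (s * (⟪Wv, u⟫ * ⟪Gv, u⟫)) ∂μ ≤ 91/64 := by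
  have hABc : Continuous fun u : Esp => ⟪Wv, u⟫ * ⟪Gv, u⟫ :=
    (continuous_const.inner continuous_id).mul (continuous_const.inner continuous_id)
  set g : Esp → ℝ := fun u => |s| * |⟪Wv, u⟫ * ⟪Gv, u⟫| with hg
  have hgc : Continuous g := continuous_const.mul hABc.abs
  have hgnn : ∀ u, 0 ≤ g u := fun u => by positivity
  set Cg : ℝ := |s| * ((‖Wv‖ * rad) * (‖Gv‖ * rad)) with hCg
  have hgbound : ∀ u : Esp, ‖u‖ = rad → g u ≤ Cg := by
    intro u hu
    rw [hg, hCg]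
    refine mul_le_mul_of_nonneg_left ?_ (abs_nonneg s)
    rw [abs_mul]
    exact mul_le_mul (inner_sphere_bound Wv u hu) (inner_sphere_bound Gv u hu)
      (abs_nonneg _) (by positivity)
  -- integrability of exp ∘ g
  have hexpg_int : Integrable (fun u => Real.exp (g u)) μ := by
    refine integrable_of_sphere_bound μ rad hsph (Real.continuous_exp.comp hgc)
      (C := Real.exp Cg) ?_
    intro u hu
    rw [abs_of_pos (Real.exp_pos _)]
    exact Real.exp_le_exp.mpr (hgbound u hu)
  -- partial sums
  set Sn : ℕ → Esp → ℝ := fun n u => ∑ k ∈ Finset.range n, (g u)^k / k.factorial with hSn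
  have hterm_int : ∀ k : ℕ, Integrable (fun u => (g u)^k / k.factorial) μ := by
    intro k
    have : (fun u => (g u)^k / k.factorial)
        = fun u => (|s|^k / k.factorial) * |⟪Wv, u⟫ * ⟪Gv, u⟫|^k := by
      funext u
      rw [hg]
      ring
    rw [this]
    exact (integrable_absprod_pow μ hsph Wv Gv k).const_mul _
  have hSn_int : ∀ n, Integrable (Sn n) μ := fun n =>
    integrable_finset_sum _ (fun k _ => hterm_int k)
  have hmono : ∀ u, Monotone fun n => Sn n u := by
    intro u a b hab
    refine Finset.sum_le_sum_of_subset_of_nonneg (Finset.range_subset_range.mpr hab) ?_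
    intro k _ _
    positivity
  have htend : ∀ u, Filter.Tendsto (fun n => Sn n u) Filter.atTop (nhds (Real.exp (g u))) := by
    intro u
    have h1 : HasSum (fun k : ℕ => (g u)^k / k.factorial) (Real.exp (g u)) := by
      rw [Real.exp_eq_exp_ℝ]
      exact NormedSpace.expSeries_div_hasSum_exp (g u)
    exact h1.tendsto_sum_nat
  have hconv := integral_tendsto_of_tendsto_of_monotone hSn_int hexpg_int
    (ae_of_all _ hmono) (ae_of_all _ htend)
  have hSn_le : ∀ n, ∫ u, Sn n u ∂μ ≤ 91/64 := by
    intro n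
    rw [hSn]
    have e : ∫ u, ∑ k ∈ Finset.range n, (g u)^k / k.factorial ∂μ
        = ∑ k ∈ Finset.range n, ∫ u, (g u)^k / k.factorial ∂μ :=
      integral_finset_sum _ (fun k _ => hterm_int k)
    rw [e]
    have hterm_le : ∀ k : ℕ, ∫ u, (g u)^k / k.factorial ∂μ ≤ aseq k := by
      intro k
      have e2 : ∫ u, (g u)^k / k.factorial ∂μ
          = (|s|^k / k.factorial) * ∫ u, |⟪Wv, u⟫ * ⟪Gv, u⟫|^k ∂μ := by
        rw [← integral_const_mul]
        apply integral_congr_ae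
        filter_upwards with u
        rw [hg]
        ring
      rw [e2]
      have hb := prod_moment_le μ hsph hinv Wv Gv k
      have h3 : (|s|^k / k.factorial) * ∫ u, |⟪Wv, u⟫ * ⟪Gv, u⟫|^k ∂μ
          ≤ (|s|^k / k.factorial) * (DF k * (‖Wv‖ * ‖Gv‖)^k) := by
        refine mul_le_mul_of_nonneg_left hb (by positivity)
      refine h3.trans ?_
      have h4 : |s|^k * (‖Wv‖ * ‖Gv‖)^k ≤ (1/4:ℝ)^k := by
        rw [← mul_pow]
        refine pow_le_pow_left₀ ?_ hs _
        positivity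
      rw [aseq]
      rw [div_mul_eq_mul_div, div_le_div_iff₀ (by positivity) (by positivity)]
      calc |s|^k * (DF k * (‖Wv‖ * ‖Gv‖)^k) * (4^k * k.factorial)
          = (|s|^k * (‖Wv‖ * ‖Gv‖)^k) * DF k * (4^k * k.factorial) := by ring
      _ ≤ (1/4:ℝ)^k * DF k * (4^k * k.factorial) := by
          refine mul_le_mul_of_nonneg_right (mul_le_mul_of_nonneg_right h4 (DF_nonneg k)) ?_
          positivity
      _ = DF k * k.factorial := by
          have h5 : ((1:ℝ)/4)^k * 4^k = 1 := by
            rw [← mul_pow]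
            norm_num
          calc ((1:ℝ)/4)^k * DF k * (4^k * k.factorial)
              = ((1/4:ℝ)^k * 4^k) * (DF k * k.factorial) := by ring
          _ = DF k * k.factorial := by rw [h5, one_mul]
    calc ∑ k ∈ Finset.range n, ∫ u, (g u)^k / k.factorial ∂μ
        ≤ ∑ k ∈ Finset.range n, aseq k := Finset.sum_le_sum (fun k _ => hterm_le k)
    _ ≤ ∑' k, aseq k := Summable.sum_le_tsum _ (fun k _ => aseq_nonneg k) summable_aseq
    _ ≤ 91/64 := tsum_aseq_le
  have hexpg_le : ∫ u, Real.exp (g u) ∂μ ≤ 91/64 := le_of_tendsto' hconv hSn_le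
  -- compare
  have hfinal : ∫ u, Real.exp (s * (⟪Wv, u⟫ * ⟪Gv, u⟫)) ∂μ ≤ ∫ u, Real.exp (g u) ∂μ := by
    refine integral_mono_ae ?_ hexpg_int (ae_of_all _ ?_)
    · refine integrable_of_sphere_bound μ rad hsph
        (Real.continuous_exp.comp (continuous_const.mul hABc)) (C := Real.exp Cg) ?_
      intro u hu
      rw [abs_of_pos (Real.exp_pos _)]
      refine Real.exp_le_exp.mpr (le_trans ?_ (hgbound u hu))
      rw [hg]
      calc s * (⟪Wv, u⟫ * ⟪Gv, u⟫) ≤ |s * (⟪Wv, u⟫ * ⟪Gv, u⟫)| := le_abs_self _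
      _ = |s| * |⟪Wv, u⟫ * ⟪Gv, u⟫| := abs_mul _ _
    · intro u
      calc Real.exp (s * (⟪Wv, u⟫ * ⟪Gv, u⟫)) ≤ Real.exp |s * (⟪Wv, u⟫ * ⟪Gv, u⟫)| :=
            Real.exp_le_exp.mpr (le_abs_self _)
      _ = Real.exp (g u) := by rw [hg, abs_mul]
  exact hfinal.trans hexpg_le

end moments

theorem stmt7 :
    ∃ c : ℝ, 0 < c ∧
      ∀ (m n N : ℕ), 0 < m → 0 < n → 0 < N →
      ∀ (Ω : Type) (_ : MeasurableSpace Ω) (ℙ : Measure Ω), IsProbabilityMeasure ℙ →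
      ∀ U : Fin N → Ω → EuclideanSpace ℝ (Fin m × Fin n),
        (∀ i, Measurable (U i)) →
        ProbabilityTheory.iIndepFun U ℙ →
        ∀ μ : Measure (EuclideanSpace ℝ (Fin m × Fin n)), IsProbabilityMeasure μ →
          μ (Metric.sphere (0 : EuclideanSpace ℝ (Fin m × Fin n))
              (Real.sqrt (m * n))) = 1 →
          (∀ T : EuclideanSpace ℝ (Fin m × Fin n) ≃ₗᵢ[ℝ] EuclideanSpace ℝ (Fin m × Fin n),
            μ.map T = μ) →
          (∀ i, Measure.map (U i) ℙ = μ) →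
        ∀ (W : Fin N → EuclideanSpace ℝ (Fin m × Fin n))
          (G : EuclideanSpace ℝ (Fin m × Fin n)),
          ENNReal.ofReal (1 - 2 * Real.exp (-(c * N))) ≤
            ℙ {ω | |(1 / N : ℝ) * ∑ i, ⟪W i, U i ω⟫ * ⟪G, U i ω⟫| ≤
                  2 * (⨆ i, ‖W i‖) * ‖G‖} := by
  refine ⟨1/8, by norm_num, ?_⟩
  intro m n N hm hn hN Ω mΩ P hP U hUmeas hUindep μ hμprob hμsph hμinv hUlaw W G
  haveI : Nonempty (Fin m × Fin n) := ⟨(⟨0, hm⟩, ⟨0, hn⟩)⟩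
  -- radius identification
  have hcard : ((Fintype.card (Fin m × Fin n) : ℕ) : ℝ) = (m : ℝ) * n := by
    simp [Fintype.card_prod]
  have hsph2 : μ (Metric.sphere (0 : EuclideanSpace ℝ (Fin m × Fin n))
      (Real.sqrt (Fintype.card (Fin m × Fin n)))) = 1 := by
    rw [hcard]; exact hμsph
  set M : ℝ := ⨆ i, ‖W i‖ with hM
  have hbdd : BddAbove (Set.range fun i => ‖W i‖) := Set.Finite.bddAbove (Set.finite_range _)
  have hWle : ∀ i, ‖W i‖ ≤ M := fun i => le_ciSup hbdd i
  have i0 : Fin N := ⟨0, hN⟩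
  have hMnn : 0 ≤ M := le_trans (norm_nonneg _) (hWle i0)
  set Y : Fin N → Ω → ℝ := fun i ω => ⟪W i, U i ω⟫ * ⟪G, U i ω⟫ with hY
  have hfc : ∀ i : Fin N, Continuous fun u : EuclideanSpace ℝ (Fin m × Fin n) =>
      ⟪W i, u⟫ * ⟪G, u⟫ :=
    fun i => (continuous_const.inner continuous_id).mul (continuous_const.inner continuous_id)
  have hYmeas : ∀ i, Measurable (Y i) := fun i => ((hfc i).measurable).comp (hUmeas i)
  by_cases hR : M * ‖G‖ = 0
  · -- degenerate case
    have hzero : ∀ ω, ∀ i : Fin N, Y i ω = 0 := by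
      intro ω i
      rcases mul_eq_zero.mp hR with h | h
      · have hw : W i = 0 := by
          have h1 : ‖W i‖ ≤ 0 := h ▸ hWle i
          exact norm_eq_zero.mp (le_antisymm h1 (norm_nonneg _))
        rw [hY]
        simp [hw]
      · have hg : G = (0 : EuclideanSpace ℝ (Fin m × Fin n)) := norm_eq_zero.mp h
        rw [hY]
        simp [hg]
    have hset : {ω | |(1 / N : ℝ) * ∑ i, ⟪W i, U i ω⟫ * ⟪G, U i ω⟫| ≤
        2 * M * ‖G‖} = Set.univ := by
      refine Set.eq_univ_of_forall fun ω => ?_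
      have hz : (∑ i, ⟪W i, U i ω⟫ * ⟪G, U i ω⟫) = 0 :=
        Finset.sum_eq_zero fun i _ => hzero ω i
      simp only [Set.mem_setOf_eq, hz, mul_zero, abs_zero]
      exact mul_nonneg (mul_nonneg (by norm_num) hMnn) (norm_nonneg G)
    rw [hset, measure_univ]
    refine ENNReal.ofReal_le_one.mpr ?_
    nlinarith [Real.exp_pos (-(1/8 * (N:ℝ)))]
  · -- main case
    have hRpos : 0 < M * ‖G‖ := lt_of_le_of_ne (by positivity) (Ne.symm hR)
    set R : ℝ := M * ‖G‖ with hRdef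
    set lam : ℝ := 1 / (4 * R) with hlam
    have hlampos : 0 < lam := by rw [hlam]; positivity
    have hlamR : lam * R = 1/4 := by
      rw [hlam]
      field_simp
    -- per-i mgf bound
    have hmgf_i : ∀ (t : ℝ), |t| ≤ lam → ∀ i : Fin N,
        ProbabilityTheory.mgf (Y i) P t ≤ 91/64 := by
      intro t ht i
      have hs : |t| * (‖W i‖ * ‖G‖) ≤ 1/4 := by
        have h1 : |t| * (‖W i‖ * ‖G‖) ≤ lam * R := by
          rw [hRdef]
          refine mul_le_mul ht (mul_le_mul_of_nonneg_right (hWle i) (norm_nonneg G))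
            (by positivity) hlampos.le
        rw [hlamR] at h1
        exact h1
      have hmap : (Measure.map (U i) P) = μ := hUlaw i
      have hrw : ProbabilityTheory.mgf (Y i) P t
          = ∫ u, Real.exp (t * (⟪W i, u⟫ * ⟪G, u⟫)) ∂μ := by
        rw [← hmap, integral_map (hUmeas i).aemeasurable]
        · rfl
        · rw [hmap]
          exact (Real.continuous_exp.comp ((continuous_const.mul (hfc i)))).aestronglyMeasurable
      rw [hrw]
      exact mgf_integral_le μ hsph2 hμinv (W i) G t hs
    -- a.e. bounds
    have hUae : ∀ i : Fin N, ∀ᵐ ω ∂P,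
        ‖U i ω‖ = Real.sqrt (Fintype.card (Fin m × Fin n)) := by
      intro i
      have h1 : P (U i ⁻¹' (Metric.sphere (0 : EuclideanSpace ℝ (Fin m × Fin n))
          (Real.sqrt (Fintype.card (Fin m × Fin n))))) = 1 := by
        rw [← Measure.map_apply (hUmeas i) Metric.isClosed_sphere.measurableSet, hUlaw i]
        exact hsph2
      rw [ae_iff]
      have hset : {ω | ¬ ‖U i ω‖ = Real.sqrt (Fintype.card (Fin m × Fin n))}
          = (U i ⁻¹' (Metric.sphere (0 : EuclideanSpace ℝ (Fin m × Fin n))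
            (Real.sqrt (Fintype.card (Fin m × Fin n)))))ᶜ := by
        ext ω
        simp [mem_sphere_iff_norm]
      rw [hset, measure_compl ((hUmeas i) Metric.isClosed_sphere.measurableSet)
        (measure_ne_top P _), h1, measure_univ, tsub_self]
    set rad2 : ℝ := Real.sqrt (Fintype.card (Fin m × Fin n)) with hrad2
    set CY : ℝ := (M * rad2) * (‖G‖ * rad2) with hCY
    have hYae : ∀ᵐ ω ∂P, ∀ i, |Y i ω| ≤ CY := by
      rw [ae_all_iff]
      intro i
      filter_upwards [hUae i] with ω hω
      rw [hY]
      simp only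
      rw [abs_mul]
      refine mul_le_mul ?_ ?_ (abs_nonneg _) (by positivity)
      · exact (inner_sphere_bound (W i) _ hω).trans
          (mul_le_mul_of_nonneg_right (hWle i) (Real.sqrt_nonneg _))
      · exact inner_sphere_bound G _ hω
    have hSmeas : Measurable (fun ω => ∑ i, Y i ω) :=
      Finset.measurable_sum _ (fun i _ => hYmeas i)
    have hexp_int : ∀ t : ℝ, Integrable (fun ω => Real.exp (t * ∑ i, Y i ω)) P := by
      intro t
      refine (integrable_const (Real.exp (|t| * (N * CY)))).mono'
        (Real.measurable_exp.comp (hSmeas.const_mul t)).aestronglyMeasurable ?_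
      filter_upwards [hYae] with ω hω
      rw [Real.norm_eq_abs, abs_of_pos (Real.exp_pos _)]
      apply Real.exp_le_exp.mpr
      calc t * ∑ i, Y i ω ≤ |t * ∑ i, Y i ω| := le_abs_self _
      _ = |t| * |∑ i, Y i ω| := abs_mul _ _
      _ ≤ |t| * (N * CY) := by
          refine mul_le_mul_of_nonneg_left ?_ (abs_nonneg t)
          calc |∑ i, Y i ω| ≤ ∑ i, |Y i ω| := Finset.abs_sum_le_sum_abs _ _
          _ ≤ ∑ _i : Fin N, CY := Finset.sum_le_sum (fun i _ => hω i)
          _ = N * CY := by rw [Finset.sum_const, Finset.card_univ, Fintype.card_fin,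
              nsmul_eq_mul]
    have hsum_fun : (fun ω => ∑ i, Y i ω) = (∑ i, Y i) := by
      funext ω
      rw [Finset.sum_apply]
    have hmgf_sum : ∀ t : ℝ, ProbabilityTheory.mgf (fun ω => ∑ i, Y i ω) P t
        = ∏ i, ProbabilityTheory.mgf (Y i) P t := by
      intro t
      rw [hsum_fun]
      exact ProbabilityTheory.iIndepFun.mgf_sum
        (hUindep.comp _ (fun i => (hfc i).measurable)) hYmeas Finset.univ
    have hprod_le : ∀ t : ℝ, |t| ≤ lam →
        (∏ i, ProbabilityTheory.mgf (Y i) P t) ≤ (91/64:ℝ)^N := by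
      intro t ht
      calc ∏ i, ProbabilityTheory.mgf (Y i) P t ≤ ∏ _i : Fin N, (91/64:ℝ) :=
            Finset.prod_le_prod (fun i _ => ProbabilityTheory.mgf_nonneg)
              (fun i _ => hmgf_i t ht i)
      _ = (91/64:ℝ)^N := by rw [Finset.prod_const, Finset.card_univ, Fintype.card_fin]
    -- numeric bound
    have hnum : Real.exp (-lam * (2*(N:ℝ)*R)) * (91/64:ℝ)^N ≤ Real.exp (-(1/8 * (N:ℝ))) := by
      have hbase : (91/64:ℝ) ≤ Real.exp (3/8) := by
        have h := Real.add_one_le_exp (3/80 : ℝ)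
        have h10 : ((83:ℝ)/80)^10 ≤ (Real.exp (3/80))^10 :=
          pow_le_pow_left₀ (by norm_num) (by linarith) 10
        rw [← Real.exp_nat_mul] at h10
        calc (91/64:ℝ) ≤ (83/80:ℝ)^10 := by norm_num
        _ ≤ Real.exp ((10:ℕ) * (3/80 : ℝ)) := h10
        _ = Real.exp (3/8) := by norm_num
      have hpow : (91/64:ℝ)^N ≤ Real.exp ((3/8) * N) := by
        calc (91/64:ℝ)^N ≤ (Real.exp (3/8))^N := pow_le_pow_left₀ (by norm_num) hbase N
        _ = Real.exp ((N:ℕ) * (3/8)) := (Real.exp_nat_mul _ N).symm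
        _ = Real.exp ((3/8) * N) := by rw [mul_comm]
      have harg : -lam * (2*(N:ℝ)*R) = -(1/2) * N := by
        linear_combination (-2*(N:ℝ)) * hlamR
      rw [harg]
      calc Real.exp (-(1/2) * N) * (91/64:ℝ)^N
          ≤ Real.exp (-(1/2) * N) * Real.exp ((3/8) * N) :=
            mul_le_mul_of_nonneg_left hpow (Real.exp_pos _).le
      _ = Real.exp (-(1/8 * (N:ℝ))) := by
          rw [← Real.exp_add]
          ring_nf
    -- upper tail
    have hup : (P {ω | 2*(N:ℝ)*R ≤ ∑ i, Y i ω}).toReal ≤ Real.exp (-(1/8 * (N:ℝ))) := by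
      have h1 := ProbabilityTheory.measure_ge_le_exp_mul_mgf (μ := P)
        (X := fun ω => ∑ i, Y i ω) (2*(N:ℝ)*R) hlampos.le (hexp_int lam)
      rw [hmgf_sum lam] at h1
      refine h1.trans ?_
      refine (mul_le_mul_of_nonneg_left
        (hprod_le lam (by rw [abs_of_pos hlampos])) (Real.exp_pos _).le).trans hnum
    -- lower tail
    have hlo : (P {ω | (∑ i, Y i ω) ≤ -(2*(N:ℝ)*R)}).toReal
        ≤ Real.exp (-(1/8 * (N:ℝ))) := by
      have h1 := ProbabilityTheory.measure_le_le_exp_mul_mgf (μ := P)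
        (X := fun ω => ∑ i, Y i ω) (-(2*(N:ℝ)*R)) (neg_nonpos.mpr hlampos.le)
        (hexp_int (-lam))
      rw [hmgf_sum (-lam)] at h1
      refine h1.trans ?_
      have habs : |(-lam)| ≤ lam := by rw [abs_neg, abs_of_pos hlampos]
      have e1 : -(-lam) * -(2*(N:ℝ)*R) = -lam * (2*(N:ℝ)*R) := by ring
      rw [e1]
      refine (mul_le_mul_of_nonneg_left (hprod_le (-lam) habs)
        (Real.exp_pos _).le).trans hnum
    set e : ℝ := Real.exp (-(1/8 * (N:ℝ))) with he
    have hb1 : P {ω | 2*(N:ℝ)*R ≤ ∑ i, Y i ω} ≤ ENNReal.ofReal e := by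
      rw [← ENNReal.ofReal_toReal (measure_ne_top P _)]
      exact ENNReal.ofReal_le_ofReal hup
    have hb2 : P {ω | (∑ i, Y i ω) ≤ -(2*(N:ℝ)*R)} ≤ ENNReal.ofReal e := by
      rw [← ENNReal.ofReal_toReal (measure_ne_top P _)]
      exact ENNReal.ofReal_le_ofReal hlo
    have hNpos : (0:ℝ) < N := by exact_mod_cast hN
    have hsubset : {ω | |(1 / N : ℝ) * ∑ i, Y i ω| ≤ 2 * M * ‖G‖}ᶜ
        ⊆ {ω | 2*(N:ℝ)*R ≤ ∑ i, Y i ω} ∪ {ω | (∑ i, Y i ω) ≤ -(2*(N:ℝ)*R)} := by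
      intro ω hω
      simp only [Set.mem_compl_iff, Set.mem_setOf_eq, not_le] at hω
      have habs2 : 2*(N:ℝ)*R < |∑ i, Y i ω| := by
        have e2 : |(1 / N : ℝ) * ∑ i, Y i ω| = (1/N) * |∑ i, Y i ω| := by
          rw [abs_mul, abs_of_pos (by positivity : (0:ℝ) < 1/(N:ℝ))]
        have h4 : 2*M*‖G‖ < (1/N) * |∑ i, Y i ω| := by rwa [e2] at hω
        have h5 := mul_lt_mul_of_pos_left h4 hNpos
        have h6 : (N:ℝ) * ((1/N) * |∑ i, Y i ω|) = |∑ i, Y i ω| := by field_simp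
        rw [h6] at h5
        rw [hRdef]
        linarith
      rcases lt_abs.mp habs2 with h | h
      · exact Or.inl (le_of_lt h)
      · exact Or.inr (by simp only [Set.mem_setOf_eq]; linarith)
    have hcmeas : MeasurableSet {ω | |(1 / N : ℝ) * ∑ i, Y i ω| ≤ 2 * M * ‖G‖} :=
      measurableSet_le ((hSmeas.const_mul _).abs) measurable_const
    have hcompl : P ({ω | |(1 / N : ℝ) * ∑ i, Y i ω| ≤ 2 * M * ‖G‖}ᶜ)
        ≤ ENNReal.ofReal (2*e) := by
      calc P ({ω | |(1 / N : ℝ) * ∑ i, Y i ω| ≤ 2 * M * ‖G‖}ᶜ)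
          ≤ P ({ω | 2*(N:ℝ)*R ≤ ∑ i, Y i ω} ∪ {ω | (∑ i, Y i ω) ≤ -(2*(N:ℝ)*R)}) :=
            measure_mono hsubset
      _ ≤ P {ω | 2*(N:ℝ)*R ≤ ∑ i, Y i ω} + P {ω | (∑ i, Y i ω) ≤ -(2*(N:ℝ)*R)} :=
            measure_union_le _ _
      _ ≤ ENNReal.ofReal e + ENNReal.ofReal e := add_le_add hb1 hb2
      _ = ENNReal.ofReal (2*e) := by
          rw [two_mul, ENNReal.ofReal_add (he ▸ (Real.exp_pos _).le) (he ▸ (Real.exp_pos _).le)]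
    have hfin : ENNReal.ofReal (1 - 2 * Real.exp (-(1/8 * (N:ℝ))))
        ≤ P {ω | |(1 / N : ℝ) * ∑ i, Y i ω| ≤ 2 * M * ‖G‖} := by
      have hkey : P {ω | |(1 / N : ℝ) * ∑ i, Y i ω| ≤ 2 * M * ‖G‖}
          = 1 - P ({ω | |(1 / N : ℝ) * ∑ i, Y i ω| ≤ 2 * M * ‖G‖}ᶜ) := by
        have h2 := prob_compl_eq_one_sub (μ := P) hcmeas.compl
        rw [compl_compl] at h2
        exact h2
      rw [hkey]
      calc ENNReal.ofReal (1 - 2 * Real.exp (-(1/8 * (N:ℝ))))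
          = 1 - ENNReal.ofReal (2*e) := by
            rw [ENNReal.ofReal_sub _ (by positivity), ENNReal.ofReal_one, he]
      _ ≤ 1 - P ({ω | |(1 / N : ℝ) * ∑ i, Y i ω| ≤ 2 * M * ‖G‖}ᶜ) :=
            tsub_le_tsub_left hcompl 1
    exact hfin
end

section
/- Under the stated hypotheses, for every v with 1 ≤ v ≤ j: ‖∇f(K_{v−1})‖_F² ≤ ρ ‖∇f(K_v)‖_F², where ρ = 1 + 1/T. -/
open RealInnerProductSpace

lemma stmt9_aux (s a b : ℝ) (hs0 : 0 < s) (hs1 : s ≤ 1) (ha : 0 ≤ a) (hb : 0 ≤ b)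
    (hbge : a - 3 * s / 128 * a ≤ b) : a ^ 2 ≤ (1 + s) * b ^ 2 := by
  have h1 : 0 ≤ a - 3 * s / 128 * a := by nlinarith
  have h2 : (a - 3 * s / 128 * a) ^ 2 ≤ b ^ 2 := pow_le_pow_left₀ h1 hbge 2
  have hss : s * s ≤ s := by nlinarith
  have hsss : s * s * s ≤ s * s := by nlinarith
  have h3 : a ^ 2 ≤ (1 + s) * (a - 3 * s / 128 * a) ^ 2 := by
    nlinarith [mul_nonneg hs0.le (sq_nonneg a),
      mul_le_mul_of_nonneg_right hss (sq_nonneg a),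
      mul_le_mul_of_nonneg_right hsss (sq_nonneg a)]
  calc a ^ 2 ≤ (1 + s) * (a - 3 * s / 128 * a) ^ 2 := h3
    _ ≤ (1 + s) * b ^ 2 := mul_le_mul_of_nonneg_left h2 (by linarith)

set_option maxHeartbeats 1000000 in

theorem stmt9 (m n : ℕ) (hm : 0 < m) (hn : 0 < n)
    (T : ℕ) (hT : 1 ≤ T)
    (μ₁ μ₂ Cg ε η fstar : ℝ)
    (hμ₁ : 0 < μ₁) (hμ₂ : 0 < μ₂) (hCg : 0 < Cg) (hε : 0 < ε) (hη : 0 < η)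
    (hηle : η ≤ 1 / (128 * μ₂ * (Cg ^ 2 + T * Cg)))
    (f : EuclideanSpace ℝ (Fin m × Fin n) → ℝ) (hf : Differentiable ℝ f)
    (j : ℕ) (hj : 1 ≤ j)
    (K Gbar Ghat : ℕ → EuclideanSpace ℝ (Fin m × Fin n)) (d : ℕ → ℕ)
    (hupd : ∀ v < j, K (v + 1) = K v - η • Gbar v)
    (hd : ∀ v < j, d v ≤ min v T)
    -- (i) gradient Lipschitzness along the iterates
    (hsmooth : ∀ u ≤ j, ∀ v ≤ j,
      ‖gradient f (K u) - gradient f (K v)‖ ≤ μ₂ * ‖K u - K v‖)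
    -- (ii) gradient dominance and the gap stays above ε
    (hgd : ∀ v ≤ j, f (K v) - fstar ≤ ‖gradient f (K v)‖ ^ 2 / (2 * μ₁))
    (hgap : ∀ v ≤ j, ε < f (K v) - fstar)
    -- (iii) bound on the unbiased asynchronous gradient estimates
    (hGhat : ∀ v < j, ‖Ghat v‖ ≤
      Cg * ⨆ u : Fin (d v + 1), ‖gradient f (K (v - (u : ℕ)))‖)
    -- (iv) the used estimates are close to the unbiased ones
    (hclose : ∀ v < j,
      ‖Gbar v - Ghat v‖ ≤ min (1 / 8) Cg * Real.sqrt (2 * μ₁ * ε)) :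
    ∀ v, 1 ≤ v → v ≤ j →
      ‖gradient f (K (v - 1))‖ ^ 2 ≤ (1 + 1 / (T : ℝ)) * ‖gradient f (K v)‖ ^ 2 := by

  have hT' : (1:ℝ) ≤ (T:ℝ) := by exact_mod_cast hT
  have hTpos : (0:ℝ) < (T:ℝ) := by linarith
  set ρ : ℝ := 1 + 1 / (T : ℝ) with hρdef
  have hρ1 : (1:ℝ) ≤ ρ := by
    have : 0 < 1 / (T:ℝ) := by positivity
    simp only [hρdef]; linarith
  have hρ0 : (0:ℝ) ≤ ρ := by linarith
  have hρT : ρ ^ T ≤ 4 := by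
    have h1 : ρ ≤ Real.exp (1 / (T:ℝ)) := by
      have := Real.add_one_le_exp (1 / (T:ℝ))
      simp only [hρdef]; linarith
    have h2 : ρ ^ T ≤ Real.exp (1 / (T:ℝ)) ^ T := pow_le_pow_left₀ hρ0 h1 T
    have h3 : Real.exp (1 / (T:ℝ)) ^ T = Real.exp ((T:ℝ) * (1 / (T:ℝ))) :=
      (Real.exp_nat_mul _ T).symm
    have h4 : (T:ℝ) * (1 / (T:ℝ)) = 1 := by field_simp
    have h5 : Real.exp 1 < 2.7182818286 := Real.exp_one_lt_d9
    rw [h3, h4] at h2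
    linarith
  intro v
  induction v using Nat.strong_induction_on with
  | _ v IH =>
  intro hv1 hvj
  obtain ⟨w, rfl⟩ : ∃ w, v = w + 1 := ⟨v - 1, (Nat.succ_pred_eq_of_pos hv1).symm⟩
  have hwlt : w < j := hvj
  have hwj : w ≤ j := Nat.le_of_lt hwlt
  simp only [Nat.add_sub_cancel]
  -- positivity of the current gradient
  have hgw2 : 2 * μ₁ * ε < ‖gradient f (K w)‖ ^ 2 := by
    have h1 := hgap w hwj
    have h2 := hgd w hwj
    have h3 : ε < ‖gradient f (K w)‖ ^ 2 / (2 * μ₁) := lt_of_lt_of_le h1 h2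
    have h4 : 0 < 2 * μ₁ := by linarith
    calc 2 * μ₁ * ε < 2 * μ₁ * (‖gradient f (K w)‖ ^ 2 / (2 * μ₁)) := by
          exact (mul_lt_mul_iff_right₀ h4).mpr h3
      _ = ‖gradient f (K w)‖ ^ 2 := by field_simp
  have hgw0 : 0 ≤ ‖gradient f (K w)‖ := norm_nonneg _
  have hsqrt : Real.sqrt (2 * μ₁ * ε) ≤ ‖gradient f (K w)‖ := by
    have := Real.sqrt_le_sqrt hgw2.le
    rwa [Real.sqrt_sq hgw0] at this
  -- chain of induction hypotheses
  have chain : ∀ u, u ≤ d w →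
      ‖gradient f (K (w - u))‖ ^ 2 ≤ ρ ^ u * ‖gradient f (K w)‖ ^ 2 := by
    intro u
    induction u with
    | zero => intro _; simp
    | succ u ih =>
      intro hu
      have hu' : u ≤ d w := Nat.le_of_succ_le hu
      have hdw : d w ≤ min w T := hd w hwlt
      have huw : u + 1 ≤ w := le_trans hu (le_trans hdw (min_le_left _ _))
      have hd1 : 1 ≤ w - u := by omega
      have hdlt : w - u < w + 1 := by omega
      have hdle : w - u ≤ j := by omega
      have hIH := IH (w - u) hdlt hd1 hdle
      have heq : w - u - 1 = w - (u + 1) := by omega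
      rw [heq] at hIH
      calc ‖gradient f (K (w - (u + 1)))‖ ^ 2 ≤ ρ * ‖gradient f (K (w - u))‖ ^ 2 := hIH
        _ ≤ ρ * (ρ ^ u * ‖gradient f (K w)‖ ^ 2) :=
            mul_le_mul_of_nonneg_left (ih hu') hρ0
        _ = ρ ^ (u + 1) * ‖gradient f (K w)‖ ^ 2 := by ring
  -- each past gradient within the window is at most twice the current one
  have hpast : ∀ u, u ≤ d w →
      ‖gradient f (K (w - u))‖ ≤ 2 * ‖gradient f (K w)‖ := by
    intro u hu
    have huT : u ≤ T := le_trans hu (le_trans (hd w hwlt) (min_le_right _ _))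
    have h1 : ρ ^ u ≤ ρ ^ T := pow_le_pow_right₀ hρ1 huT
    have h2 : ‖gradient f (K (w - u))‖ ^ 2 ≤ 4 * ‖gradient f (K w)‖ ^ 2 := by
      calc ‖gradient f (K (w - u))‖ ^ 2 ≤ ρ ^ u * ‖gradient f (K w)‖ ^ 2 := chain u hu
        _ ≤ 4 * ‖gradient f (K w)‖ ^ 2 := by
            have := sq_nonneg ‖gradient f (K w)‖
            nlinarith
    nlinarith [norm_nonneg (gradient f (K (w - u))), hgw0]
  -- bound on Ghat
  have hGhatw : ‖Ghat w‖ ≤ Cg * (2 * ‖gradient f (K w)‖) := by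
    have h1 := hGhat w hwlt
    have h2 : (⨆ u : Fin (d w + 1), ‖gradient f (K (w - (u : ℕ)))‖)
        ≤ 2 * ‖gradient f (K w)‖ := by
      apply ciSup_le
      intro u
      exact hpast u (Nat.lt_succ_iff.mp u.isLt)
    calc ‖Ghat w‖ ≤ Cg * ⨆ u : Fin (d w + 1), ‖gradient f (K (w - (u : ℕ)))‖ := h1
      _ ≤ Cg * (2 * ‖gradient f (K w)‖) := mul_le_mul_of_nonneg_left h2 hCg.le
  -- bound on Gbar
  have hGbarw : ‖Gbar w‖ ≤ 3 * Cg * ‖gradient f (K w)‖ := by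
    have h1 := hclose w hwlt
    have h2 : min (1/8 : ℝ) Cg * Real.sqrt (2 * μ₁ * ε) ≤ Cg * ‖gradient f (K w)‖ := by
      have hmin : min (1/8 : ℝ) Cg ≤ Cg := min_le_right _ _
      have hmin0 : 0 ≤ min (1/8 : ℝ) Cg := le_min (by norm_num) hCg.le
      have hs0 : 0 ≤ Real.sqrt (2 * μ₁ * ε) := Real.sqrt_nonneg _
      calc min (1/8 : ℝ) Cg * Real.sqrt (2 * μ₁ * ε)
          ≤ Cg * Real.sqrt (2 * μ₁ * ε) := mul_le_mul_of_nonneg_right hmin hs0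
        _ ≤ Cg * ‖gradient f (K w)‖ := mul_le_mul_of_nonneg_left hsqrt hCg.le
    calc ‖Gbar w‖ = ‖(Gbar w - Ghat w) + Ghat w‖ := by rw [sub_add_cancel]
      _ ≤ ‖Gbar w - Ghat w‖ + ‖Ghat w‖ := norm_add_le _ _
      _ ≤ Cg * ‖gradient f (K w)‖ + Cg * (2 * ‖gradient f (K w)‖) :=
          add_le_add (le_trans h1 h2) hGhatw
      _ = 3 * Cg * ‖gradient f (K w)‖ := by ring
  -- Lipschitz step
  have hstepnorm : ‖K w - K (w + 1)‖ = η * ‖Gbar w‖ := by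
    rw [hupd w hwlt, sub_sub_cancel, norm_smul, Real.norm_eq_abs, abs_of_pos hη]
  have hdiff : ‖gradient f (K w)‖ - ‖gradient f (K (w + 1))‖
      ≤ μ₂ * (η * ‖Gbar w‖) := by
    have h1 := hsmooth w hwj (w + 1) hvj
    have h2 := norm_sub_norm_le (gradient f (K w)) (gradient f (K (w + 1)))
    rw [hstepnorm] at h1
    linarith
  -- stepsize arithmetic
  have hηsmall : μ₂ * η * Cg ≤ 1 / (128 * (T:ℝ)) := by
    have hD : (0:ℝ) < 128 * μ₂ * (Cg ^ 2 + (T:ℝ) * Cg) := by positivity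
    have h1 : η * (128 * μ₂ * (Cg ^ 2 + (T:ℝ) * Cg)) ≤ 1 := by
      rw [le_div_iff₀ hD] at hηle; linarith
    rw [le_div_iff₀ (by positivity : (0:ℝ) < 128 * (T:ℝ))]
    nlinarith [sq_nonneg Cg, mul_pos hμ₂ hη]
  -- combine
  have hkey : ‖gradient f (K w)‖ - ‖gradient f (K (w + 1))‖
      ≤ 3 / (128 * (T:ℝ)) * ‖gradient f (K w)‖ := by
    have h1 : μ₂ * (η * ‖Gbar w‖) ≤ μ₂ * η * (3 * Cg * ‖gradient f (K w)‖) := by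
      have := mul_le_mul_of_nonneg_left hGbarw (mul_pos hμ₂ hη).le
      linarith [this]
    have h2 : μ₂ * η * (3 * Cg * ‖gradient f (K w)‖)
        ≤ 3 / (128 * (T:ℝ)) * ‖gradient f (K w)‖ := by
      have h3 : μ₂ * η * Cg * ‖gradient f (K w)‖
          ≤ 1 / (128 * (T:ℝ)) * ‖gradient f (K w)‖ :=
        mul_le_mul_of_nonneg_right hηsmall hgw0
      have e1 : μ₂ * η * (3 * Cg * ‖gradient f (K w)‖)
          = 3 * (μ₂ * η * Cg * ‖gradient f (K w)‖) := by ring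
      have e2 : 3 / (128 * (T:ℝ)) * ‖gradient f (K w)‖
          = 3 * (1 / (128 * (T:ℝ)) * ‖gradient f (K w)‖) := by ring
      rw [e1, e2]
      linarith
    linarith
  -- final inequality
  have hb0 : 0 ≤ ‖gradient f (K (w + 1))‖ := norm_nonneg _
  have hbge : ‖gradient f (K w)‖ - 3 * (1 / (T:ℝ)) / 128 * ‖gradient f (K w)‖
      ≤ ‖gradient f (K (w + 1))‖ := by
    have he : 3 / (128 * (T:ℝ)) = 3 * (1 / (T:ℝ)) / 128 := by field_simp
    rw [he] at hkey; linarith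
  have hs0 : 0 < 1 / (T:ℝ) := by positivity
  have hs1 : 1 / (T:ℝ) ≤ 1 := by rw [div_le_one hTpos]; linarith
  rw [hρdef]
  exact stmt9_aux (1 / (T:ℝ)) _ _ hs0 hs1 hgw0 hb0 hbge
end

section
/- Additionally, let d_j be a natural number with d_j ≤ min(j, T), and let Ḡ_j, Ĝ_j, N₁, N₂, N₃ ∈ ℝ^{m×n} satisfy: Ĝ_j = N₁ + N₂ + N₃; |⟨N₁, ∇f(K_j)⟩| ≤ (1/8) ‖∇f(K_j)‖_F · max_{0 ≤ v ≤ d_j} ‖∇f(K_{j−v})‖_F; |⟨N₂, ∇f(K_j)⟩| ≤ 2 ‖∇f(K_j)‖_F · max_{0 ≤ v ≤ d_j} ‖∇f(K_{j−v}) − ∇f(K_j)‖_F; ⟨N₃, ∇f(K_j)⟩ ≥ (1/2) ‖∇f(K_j)‖_F²; ‖Ĝ_j‖_F ≤ C_g · max_{0 ≤ v ≤ d_j} ‖∇f(K_{j−v})‖_F; and ‖Ḡ_j − Ĝ_j‖_F ≤ min(1/8, C_g) · √(2 μ₁ ε). Then: (a) ⟨∇f(K_j), Ḡ_j⟩ ≥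 (1/16) ‖∇f(K_j)‖_F² > 0, and (b) ‖Ḡ_j‖_F ≤ 4 C_g ‖∇f(K_j)‖_F. -/
/-!
Write `g v = ‖∇f(K v)‖`. Gradient domination and the gap `ε < f(K v) - f*` give
`√(2μ₁ε) < g v`, so the perturbation `Ḡ v - Ĝ v` is at most `min (1/8) C_g * g v`.
By strong induction on `v`, delayed gradients are comparable to the current one:
`g (v - u) ≤ 128/125 * g v` for `u ≤ min v T`. Indeed, the induction hypothesis gives
`‖Ḡ w‖ ≤ 3 C_g g w` for `w < v`, so one step shrinks the gradient norm by a factor at least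
`1 - 3μ₂ηC_g`, and over at most `T` steps the stepsize condition `μ₂ηC_g T ≤ 1/128` loses at
most `3/128`. The same step bounds give `‖∇f(K (j - u)) - ∇f(K j)‖ ≤ 3/125 * g j`, and both
claims follow by collecting constants: `1/2 - 16/125 - 6/125 - 1/8 ≥ 1/16`.
-/

open RealInnerProductSpace

lemma sqrt_two_mul_lt_of_lt_of_le_sq_div {μ ε r g : ℝ} (hμ : 0 < μ) (hε : 0 ≤ ε) (hg : 0 ≤ g)
    (hεr : ε < r) (hr : r ≤ g ^ 2 / (2 * μ)) : √(2 * μ * ε) < g := by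
  have h : 2 * μ * ε < g ^ 2 := by
    have := hεr.trans_le hr
    rw [lt_div_iff₀ (by positivity)] at this
    linarith
  simpa [Real.sqrt_sq hg] using Real.sqrt_lt_sqrt (by positivity) h

lemma one_sub_mul_mul_le_of_forall_le_succ {x : ℕ → ℝ} {c : ℝ} {a : ℕ} (hc₀ : 0 ≤ c)
    (hc₁ : c ≤ 1) (hx : 0 ≤ x a) :
    ∀ u, (∀ k < u, (1 - c) * x (a + k) ≤ x (a + k + 1)) → (1 - c * u) * x a ≤ x (a + u)
  | 0, _ => by simp
  | u + 1, h => by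
    have ih := one_sub_mul_mul_le_of_forall_le_succ hc₀ hc₁ hx u fun k hk => h k (by omega)
    calc (1 - c * ↑(u + 1)) * x a ≤ (1 - c) * ((1 - c * u) * x a) := by
          push_cast; nlinarith [mul_nonneg (mul_nonneg hc₀ hc₀) (mul_nonneg u.cast_nonneg hx)]
      _ ≤ (1 - c) * x (a + u) := mul_le_mul_of_nonneg_left ih (by linarith)
      _ ≤ x (a + (u + 1)) := h u (by omega)

section Descent

variable {E : Type*} [NormedAddCommGroup E]

lemma norm_le_three_mul_of_norm_sub_le {G Ĝ : E} {C S g : ℝ} (hC : 0 ≤ C)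
    (hĜ : ‖Ĝ‖ ≤ C * S) (hS : S ≤ 128 / 125 * g) (hclose : ‖G - Ĝ‖ ≤ C * g) :
    ‖G‖ ≤ 3 * C * g := by
  have hCg : 0 ≤ C * g := (norm_nonneg _).trans hclose
  have hCS : C * S ≤ C * (128 / 125 * g) := mul_le_mul_of_nonneg_left hS hC
  calc ‖G‖ = ‖Ĝ + (G - Ĝ)‖ := by rw [add_sub_cancel]
    _ ≤ ‖Ĝ‖ + ‖G - Ĝ‖ := norm_add_le _ _
    _ ≤ 3 * C * g := by linarith

lemma one_sub_mul_norm_le_of_descent_step [NormedSpace ℝ E] {K K' G F F' : E} {η L c : ℝ}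
    (hη : 0 ≤ η) (hL : 0 ≤ L) (hK : K' = K - η • G) (hsmooth : ‖F - F'‖ ≤ L * ‖K - K'‖)
    (hG : ‖G‖ ≤ c * ‖F‖) :
    (1 - L * η * c) * ‖F‖ ≤ ‖F'‖ := by
  have hKK' : ‖K - K'‖ = η * ‖G‖ := by
    rw [hK, sub_sub_cancel, norm_smul, Real.norm_of_nonneg hη]
  have : ‖F‖ - ‖F'‖ ≤ L * η * (c * ‖F‖) :=
    calc ‖F‖ - ‖F'‖ ≤ ‖F - F'‖ := norm_sub_norm_le _ _
      _ ≤ L * (η * ‖G‖) := hKK' ▸ hsmooth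
      _ ≤ L * η * (c * ‖F‖) := by rw [← mul_assoc]; gcongr
  linarith

lemma norm_sub_le_of_descent [NormedSpace ℝ E] {K G : ℕ → E} {η B : ℝ} {a b : ℕ} (hab : a ≤ b)
    (hη : 0 ≤ η) (hupd : ∀ v ∈ Finset.Ico a b, K (v + 1) = K v - η • G v)
    (hG : ∀ v ∈ Finset.Ico a b, ‖G v‖ ≤ B) :
    ‖K a - K b‖ ≤ (b - a : ℕ) * (η * B) := by
  rw [← dist_eq_norm, ← Nat.card_Ico, ← nsmul_eq_mul]
  refine (dist_le_Ico_sum_dist K hab).trans (Finset.sum_le_card_nsmul _ _ _ fun v hv => ?_)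
  rw [dist_eq_norm, hupd v hv, sub_sub_cancel, norm_smul, Real.norm_of_nonneg hη]
  exact mul_le_mul_of_nonneg_left (hG v hv) hη

variable [NormedSpace ℝ E] {K G F : ℕ → E} {η L C : ℝ} {T j : ℕ}

lemma norm_lag_le_of_descent (hη : 0 ≤ η) (hL : 0 ≤ L) (hC : 0 ≤ C) (hT : 1 ≤ T)
    (hstep : L * η * C * T ≤ 1 / 128)
    (hupd : ∀ v < j, K (v + 1) = K v - η • G v)
    (hsmooth : ∀ u ≤ j, ∀ v ≤ j, ‖F u - F v‖ ≤ L * ‖K u - K v‖)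
    (hG : ∀ w < j, (∀ u ≤ min w T, ‖F (w - u)‖ ≤ 128 / 125 * ‖F w‖) →
      ‖G w‖ ≤ 3 * C * ‖F w‖) :
    ∀ v ≤ j, ∀ u ≤ min v T, ‖F (v - u)‖ ≤ 128 / 125 * ‖F v‖ := by
  intro v
  induction v using Nat.strong_induction_on with
  | _ v ih =>
  intro hvj u hu
  have hLηC : 0 ≤ L * η * C := by positivity
  have hcu : L * η * (3 * C) * u ≤ 3 / 128 := by
    have : (u : ℝ) ≤ T := by exact_mod_cast hu.trans (min_le_right _ _)
    nlinarith
  have hc : L * η * (3 * C) ≤ 1 := by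
    have : (1 : ℝ) ≤ T := by exact_mod_cast hT
    nlinarith
  have hcontract : ∀ k < u, (1 - L * η * (3 * C)) * ‖F (v - u + k)‖ ≤ ‖F (v - u + k + 1)‖ :=
    fun k hk => by
      have hw : v - u + k < v := by omega
      exact one_sub_mul_norm_le_of_descent_step hη hL (hupd _ (by omega))
        (hsmooth _ (by omega) _ (by omega))
        (hG _ (by omega) (ih _ hw (by omega)))
  have := one_sub_mul_mul_le_of_forall_le_succ (x := fun k => ‖F k‖) (by positivity) hc
    (norm_nonneg _) u hcontract
  rw [Nat.sub_add_cancel (hu.trans (min_le_left _ _))] at this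
  nlinarith [norm_nonneg (F (v - u))]

lemma norm_lag_sub_le_of_descent (hη : 0 ≤ η) (hL : 0 ≤ L) (hC : 0 ≤ C)
    (hstep : L * η * C * T ≤ 1 / 128)
    (hupd : ∀ v < j, K (v + 1) = K v - η • G v)
    (hsmooth : ∀ u ≤ j, ∀ v ≤ j, ‖F u - F v‖ ≤ L * ‖K u - K v‖)
    (hG : ∀ w < j, ‖G w‖ ≤ 3 * C * ‖F w‖)
    (hwin : ∀ u ≤ min j T, ‖F (j - u)‖ ≤ 128 / 125 * ‖F j‖) :
    ∀ u ≤ min j T, ‖F (j - u) - F j‖ ≤ 3 / 125 * ‖F j‖ := by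
  intro u hu
  have huj : u ≤ j := hu.trans (min_le_left _ _)
  have huT : (u : ℝ) ≤ T := by exact_mod_cast hu.trans (min_le_right _ _)
  have hGwin : ∀ w ∈ Finset.Ico (j - u) j, ‖G w‖ ≤ 3 * C * (128 / 125 * ‖F j‖) := by
    intro w hw
    rw [Finset.mem_Ico] at hw
    have := hwin (j - w) (by omega)
    rw [Nat.sub_sub_self hw.2.le] at this
    exact (hG w hw.2).trans (by gcongr)
  have hK := norm_sub_le_of_descent (Nat.sub_le j u) hη
    (fun w hw => hupd w (Finset.mem_Ico.mp hw).2) hGwin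
  rw [Nat.sub_sub_self huj] at hK
  calc ‖F (j - u) - F j‖ ≤ L * ‖K (j - u) - K j‖ := hsmooth _ (by omega) _ le_rfl
    _ ≤ L * (u * (η * (3 * C * (128 / 125 * ‖F j‖)))) := by gcongr
    _ ≤ 3 / 125 * ‖F j‖ := by
      have : L * η * C * u ≤ 1 / 128 := le_trans (by gcongr) hstep
      nlinarith [norm_nonneg (F j)]

end Descent

lemma one_div_sixteen_mul_sq_le_inner {F : Type*} [NormedAddCommGroup F] [InnerProductSpace ℝ F]
    {N₁ N₂ N₃ Ĝ G g : F} {S D : ℝ} (hdecomp : Ĝ = N₁ + N₂ + N₃)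
    (h₁ : |⟪N₁, g⟫| ≤ 1 / 8 * ‖g‖ * S) (hS : S ≤ 128 / 125 * ‖g‖)
    (h₂ : |⟪N₂, g⟫| ≤ 2 * ‖g‖ * D) (hD : D ≤ 3 / 125 * ‖g‖)
    (h₃ : 1 / 2 * ‖g‖ ^ 2 ≤ ⟪N₃, g⟫) (hclose : ‖G - Ĝ‖ ≤ 1 / 8 * ‖g‖) :
    1 / 16 * ‖g‖ ^ 2 ≤ ⟪g, G⟫ := by
  have hsplit : ⟪g, G⟫ = ⟪N₁, g⟫ + ⟪N₂, g⟫ + ⟪N₃, g⟫ + ⟪G - Ĝ, g⟫ := by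
    rw [real_inner_comm, ← sub_add_cancel G Ĝ, hdecomp]
    simp only [inner_add_left, add_sub_cancel_right]
    ring
  have hg := norm_nonneg g
  have e₁ := (abs_le.mp (h₁.trans (mul_le_mul_of_nonneg_left hS (by positivity)))).1
  have e₂ := (abs_le.mp (h₂.trans (mul_le_mul_of_nonneg_left hD (by positivity)))).1
  have e₄ := (abs_le.mp ((abs_real_inner_le_norm _ _).trans
    (mul_le_mul_of_nonneg_right hclose hg))).1
  rw [hsplit]
  nlinarith

theorem stmt10_general (m n : ℕ)
    (T : ℕ) (hT : 1 ≤ T)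
    (μ₁ μ₂ Cg ε η fstar : ℝ)
    (hμ₁ : 0 < μ₁) (hμ₂ : 0 < μ₂) (hCg : 0 < Cg) (hε : 0 < ε) (hη : 0 < η)
    (hηle : η ≤ 1 / (128 * μ₂ * (Cg ^ 2 + T * Cg)))
    (f : EuclideanSpace ℝ (Fin m × Fin n) → ℝ)
    (j : ℕ)
    (K Gbar Ghat : ℕ → EuclideanSpace ℝ (Fin m × Fin n)) (d : ℕ → ℕ)
    (hupd : ∀ v < j, K (v + 1) = K v - η • Gbar v)
    (hd : ∀ v < j, d v ≤ min v T)
    (hsmooth : ∀ u ≤ j, ∀ v ≤ j,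
      ‖gradient f (K u) - gradient f (K v)‖ ≤ μ₂ * ‖K u - K v‖)
    (hgd : ∀ v ≤ j, f (K v) - fstar ≤ ‖gradient f (K v)‖ ^ 2 / (2 * μ₁))
    (hgap : ∀ v ≤ j, ε < f (K v) - fstar)
    (hGhat : ∀ v < j, ‖Ghat v‖ ≤
      Cg * ⨆ u : Fin (d v + 1), ‖gradient f (K (v - (u : ℕ)))‖)
    (hclose : ∀ v < j,
      ‖Gbar v - Ghat v‖ ≤ min (1 / 8) Cg * Real.sqrt (2 * μ₁ * ε))
    -- additionally, data at step j:
    (dj : ℕ) (hdj : dj ≤ min j T)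
    (Gbarj Ghatj N₁ N₂ N₃ : EuclideanSpace ℝ (Fin m × Fin n))
    (hdecomp : Ghatj = N₁ + N₂ + N₃)
    (hN₁ : |⟪N₁, gradient f (K j)⟫| ≤
      (1 / 8) * ‖gradient f (K j)‖ *
        ⨆ v : Fin (dj + 1), ‖gradient f (K (j - (v : ℕ)))‖)
    (hN₂ : |⟪N₂, gradient f (K j)⟫| ≤
      2 * ‖gradient f (K j)‖ *
        ⨆ v : Fin (dj + 1), ‖gradient f (K (j - (v : ℕ))) - gradient f (K j)‖)
    (hN₃ : (1 / 2) * ‖gradient f (K j)‖ ^ 2 ≤ ⟪N₃, gradient f (K j)⟫)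
    (hGhatj : ‖Ghatj‖ ≤
      Cg * ⨆ v : Fin (dj + 1), ‖gradient f (K (j - (v : ℕ)))‖)
    (hclosej : ‖Gbarj - Ghatj‖ ≤ min (1 / 8) Cg * Real.sqrt (2 * μ₁ * ε)) :
    ((1 / 16) * ‖gradient f (K j)‖ ^ 2 ≤ ⟪gradient f (K j), Gbarj⟫ ∧
      0 < (1 / 16) * ‖gradient f (K j)‖ ^ 2) ∧
    ‖Gbarj‖ ≤ 4 * Cg * ‖gradient f (K j)‖ := by
  have hlow : ∀ v ≤ j, √(2 * μ₁ * ε) < ‖gradient f (K v)‖ := fun v hv =>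
    sqrt_two_mul_lt_of_lt_of_le_sq_div hμ₁ hε.le (norm_nonneg _) (hgap v hv) (hgd v hv)
  have hclose_le : ∀ {G Ĝ : EuclideanSpace ℝ (Fin m × Fin n)} {v}, v ≤ j →
      ‖G - Ĝ‖ ≤ min (1 / 8) Cg * √(2 * μ₁ * ε) →
        ‖G - Ĝ‖ ≤ min (1 / 8) Cg * ‖gradient f (K v)‖ :=
    fun hv h => h.trans (mul_le_mul_of_nonneg_left (hlow _ hv).le (le_min (by norm_num) hCg.le))
  have hstep : μ₂ * η * Cg * T ≤ 1 / 128 := by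
    rw [le_div_iff₀ (by positivity)] at hηle
    nlinarith
  have hGbar : ∀ w < j,
      (∀ u ≤ min w T, ‖gradient f (K (w - u))‖ ≤ 128 / 125 * ‖gradient f (K w)‖) →
      ‖Gbar w‖ ≤ 3 * Cg * ‖gradient f (K w)‖ := fun w hw hwin =>
    norm_le_three_mul_of_norm_sub_le hCg.le (hGhat w hw)
      (ciSup_le fun u => hwin u (by have := hd w hw; omega))
      ((hclose_le hw.le (hclose w hw)).trans (by gcongr; exact min_le_right _ _))
  have hwin := norm_lag_le_of_descent (F := fun v => gradient f (K v))
    hη.le hμ₂.le hCg.le hT hstep hupd hsmooth hGbar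
  have hsup : (⨆ v : Fin (dj + 1), ‖gradient f (K (j - (v : ℕ)))‖) ≤
      128 / 125 * ‖gradient f (K j)‖ :=
    ciSup_le fun v => hwin j le_rfl v (by omega)
  have hdiff : (⨆ v : Fin (dj + 1), ‖gradient f (K (j - (v : ℕ))) - gradient f (K j)‖) ≤
      3 / 125 * ‖gradient f (K j)‖ :=
    ciSup_le fun v => norm_lag_sub_le_of_descent (F := fun v => gradient f (K v)) hη.le hμ₂.le
      hCg.le hstep hupd hsmooth (fun w hw => hGbar w hw (hwin w hw.le)) (hwin j le_rfl) v
      (by omega)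
  refine ⟨⟨one_div_sixteen_mul_sq_le_inner hdecomp hN₁ hsup hN₂ hdiff hN₃
      ((hclose_le le_rfl hclosej).trans (by gcongr; exact min_le_left _ _)), ?_⟩, ?_⟩
  · have := (Real.sqrt_nonneg _).trans_lt (hlow j le_rfl)
    positivity
  · refine (norm_le_three_mul_of_norm_sub_le hCg.le hGhatj hsup
      ((hclose_le le_rfl hclosej).trans (by gcongr; exact min_le_right _ _))).trans ?_
    gcongr
    norm_num

theorem stmt10 (m n : ℕ) (hm : 0 < m) (hn : 0 < n)
    (T : ℕ) (hT : 1 ≤ T)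
    (μ₁ μ₂ Cg ε η fstar : ℝ)
    (hμ₁ : 0 < μ₁) (hμ₂ : 0 < μ₂) (hCg : 0 < Cg) (hε : 0 < ε) (hη : 0 < η)
    (hηle : η ≤ 1 / (128 * μ₂ * (Cg ^ 2 + T * Cg)))
    (f : EuclideanSpace ℝ (Fin m × Fin n) → ℝ) (hf : Differentiable ℝ f)
    (j : ℕ) (hj : 1 ≤ j)
    (K Gbar Ghat : ℕ → EuclideanSpace ℝ (Fin m × Fin n)) (d : ℕ → ℕ)
    (hupd : ∀ v < j, K (v + 1) = K v - η • Gbar v)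
    (hd : ∀ v < j, d v ≤ min v T)
    (hsmooth : ∀ u ≤ j, ∀ v ≤ j,
      ‖gradient f (K u) - gradient f (K v)‖ ≤ μ₂ * ‖K u - K v‖)
    (hgd : ∀ v ≤ j, f (K v) - fstar ≤ ‖gradient f (K v)‖ ^ 2 / (2 * μ₁))
    (hgap : ∀ v ≤ j, ε < f (K v) - fstar)
    (hGhat : ∀ v < j, ‖Ghat v‖ ≤
      Cg * ⨆ u : Fin (d v + 1), ‖gradient f (K (v - (u : ℕ)))‖)
    (hclose : ∀ v < j,
      ‖Gbar v - Ghat v‖ ≤ min (1 / 8) Cg * Real.sqrt (2 * μ₁ * ε))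
    -- additionally, data at step j:
    (dj : ℕ) (hdj : dj ≤ min j T)
    (Gbarj Ghatj N₁ N₂ N₃ : EuclideanSpace ℝ (Fin m × Fin n))
    (hdecomp : Ghatj = N₁ + N₂ + N₃)
    (hN₁ : |⟪N₁, gradient f (K j)⟫| ≤
      (1 / 8) * ‖gradient f (K j)‖ *
        ⨆ v : Fin (dj + 1), ‖gradient f (K (j - (v : ℕ)))‖)
    (hN₂ : |⟪N₂, gradient f (K j)⟫| ≤
      2 * ‖gradient f (K j)‖ *
        ⨆ v : Fin (dj + 1), ‖gradient f (K (j - (v : ℕ))) - gradient f (K j)‖)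
    (hN₃ : (1 / 2) * ‖gradient f (K j)‖ ^ 2 ≤ ⟪N₃, gradient f (K j)⟫)
    (hGhatj : ‖Ghatj‖ ≤
      Cg * ⨆ v : Fin (dj + 1), ‖gradient f (K (j - (v : ℕ)))‖)
    (hclosej : ‖Gbarj - Ghatj‖ ≤ min (1 / 8) Cg * Real.sqrt (2 * μ₁ * ε)) :
    ((1 / 16) * ‖gradient f (K j)‖ ^ 2 ≤ ⟪gradient f (K j), Gbarj⟫ ∧
      0 < (1 / 16) * ‖gradient f (K j)‖ ^ 2) ∧
    ‖Gbarj‖ ≤ 4 * Cg * ‖gradient f (K j)‖ :=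
  stmt10_general m n T hT μ₁ μ₂ Cg ε η fstar hμ₁ hμ₂ hCg hε hη hηle f j K Gbar Ghat d hupd hd
    hsmooth hgd hgap hGhat hclose dj hdj Gbarj Ghatj N₁ N₂ N₃ hdecomp hN₁ hN₂ hN₃ hGhatj hclosej
end
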